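/- arXiv:2407.05034 — 10 statements merged into one kernel-verified Lean document; each statement's English description precedes it below -/
import Mathlib

section
/- Let A ∈ {0,1}^{n×n} be a symmetric adjacency matrix with zero diagonal, let k_i = Σ_j A_{ij}, let 0 < p ≤ 1/2, and define Ã by: Ã_{ij} = 0 if i ≠ j and A_{ij} = 0; Ã_{ij} = min(1/(k_i+1), p) if i ≠ j and A_{ij} = 1; and Ã_{ii} = 1 − Σ_{u ≠ i} Ã_{iu}. Then for every integer m ≥ 1 and every column index i, the sum of the i-th column of Ã^m is at most max((k_i+1)p, 1). -/
open Matrix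

/-- For the clipped row-normalized adjacency matrix `Ã` of a symmetric 0/1
adjacency matrix with zero diagonal, for every `m ≥ 1` the sum of the `i`-th
column of `Ã^m` is at most `max ((kᵢ+1)p) 1`, where `kᵢ` is the degree of
node `i`. -/
theorem clippedNormalizedAdj_pow_colSum_le {n : ℕ}
    (A : Matrix (Fin n) (Fin n) ℝ)
    (h01 : ∀ i j, A i j = 0 ∨ A i j = 1)
    (hsymm : A.IsSymm)
    (hdiag : ∀ i, A i i = 0)
    (p : ℝ) (hp : 0 < p) (hp2 : p ≤ 1 / 2)
    (k : Fin n → ℝ) (hk : ∀ i, k i = ∑ j, A i j)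
    (Atil : Matrix (Fin n) (Fin n) ℝ)
    (hoff0 : ∀ i j, i ≠ j → A i j = 0 → Atil i j = 0)
    (hoff1 : ∀ i j, i ≠ j → A i j = 1 → Atil i j = min (1 / (k i + 1)) p)
    (hAtil_diag : ∀ i, Atil i i = 1 - ∑ u ∈ Finset.univ.erase i, Atil i u)
    (m : ℕ) (hm : 1 ≤ m) :
    ∀ i, ∑ j, (Atil ^ m) j i ≤ max ((k i + 1) * p) 1 := by
  have hA0 : ∀ i j, 0 ≤ A i j := by
    intro i j; rcases h01 i j with h | h <;> rw [h] <;> norm_num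
  have hk0 : ∀ i, 0 ≤ k i := by
    intro i; rw [hk]; exact Finset.sum_nonneg fun j _ => hA0 i j
  have hk1 : ∀ i, (0 : ℝ) < k i + 1 := fun i => by linarith [hk0 i]
  set μ : Fin n → ℝ := fun i => min (1 / (k i + 1)) p with hμ
  have hμpos : ∀ i, 0 < μ i := fun i => lt_min (one_div_pos.mpr (hk1 i)) hp
  have hμle : ∀ i, μ i ≤ 1 / (k i + 1) := fun i => min_le_left _ _
  -- off-diagonal entries
  have hoff : ∀ i u, i ≠ u → Atil i u = A i u * μ i := by
    intro i u h
    rcases h01 i u with h0 | h1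
    · rw [hoff0 i u h h0, h0, zero_mul]
    · rw [hoff1 i u h h1, h1, one_mul]
  -- degree as sum over erase
  have hkerase : ∀ i, ∑ u ∈ Finset.univ.erase i, A i u = k i := by
    intro i
    rw [hk]
    exact Finset.sum_erase _ (hdiag i)
  -- off-diagonal row sum
  have hsum : ∀ i, ∑ u ∈ Finset.univ.erase i, Atil i u = k i * μ i := by
    intro i
    rw [Finset.sum_congr rfl fun u hu =>
      hoff i u (Ne.symm (Finset.ne_of_mem_erase hu)), ← Finset.sum_mul, hkerase]
  have hdiagval : ∀ i, Atil i i = 1 - k i * μ i := by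
    intro i; rw [hAtil_diag, hsum]
  -- nonnegativity of Atil
  have hAtil0 : ∀ i j, 0 ≤ Atil i j := by
    intro i j
    by_cases h : i = j
    · subst h
      rw [hdiagval]
      have h1 : k i * μ i ≤ k i * (1 / (k i + 1)) :=
        mul_le_mul_of_nonneg_left (hμle i) (hk0 i)
      have h2 : k i * (1 / (k i + 1)) ≤ 1 := by
        rw [mul_one_div, div_le_one (hk1 i)]; linarith
      linarith
    · rw [hoff i j h]
      exact mul_nonneg (hA0 i j) (le_of_lt (hμpos i))
  set M : Fin n → ℝ := fun i => max ((k i + 1) * p) 1 with hM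
  have hM1 : ∀ i, (1 : ℝ) ≤ M i := fun i => le_max_right _ _
  have hMμ : ∀ i, M i * μ i = p := by
    intro i
    by_cases h : 1 / (k i + 1) ≤ p
    · have hμi : μ i = 1 / (k i + 1) := min_eq_left h
      have hM' : M i = (k i + 1) * p := by
        apply max_eq_left
        rw [div_le_iff₀ (hk1 i)] at h
        linarith
      rw [hμi, hM', mul_one_div, mul_comm (k i + 1) p,
        mul_div_assoc, div_self (ne_of_gt (hk1 i)), mul_one]
    · push_neg at h
      have hμi : μ i = p := min_eq_right (le_of_lt h)
      have hM' : M i = 1 := by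
        apply max_eq_right
        rw [lt_div_iff₀ (hk1 i)] at h
        linarith
      rw [hμi, hM', one_mul]
  -- eigenvector identity: ∑ l, M l * Atil l i = M i
  have hEig : ∀ i, ∑ l, M l * Atil l i = M i := by
    intro i
    rw [← Finset.add_sum_erase _ _ (Finset.mem_univ i)]
    have h1 : ∑ l ∈ Finset.univ.erase i, M l * Atil l i
        = ∑ l ∈ Finset.univ.erase i, A i l * p := by
      apply Finset.sum_congr rfl
      intro l hl
      have hne : l ≠ i := Finset.ne_of_mem_erase hl
      rw [hoff l i hne]
      have hAsym : A l i = A i l := by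
        conv_lhs => rw [← hsymm]
        rfl
      rw [hAsym, mul_left_comm, hMμ l]
    rw [h1, ← Finset.sum_mul, hkerase, hdiagval, mul_sub, mul_one, ← mul_assoc,
      mul_comm (M i) (k i), mul_assoc, hMμ i]
    ring
  -- main induction
  have main : ∀ m, ∀ i, ∑ j, (Atil ^ m) j i ≤ M i := by
    intro m
    induction m with
    | zero =>
      intro i
      simp only [pow_zero]
      have : ∑ j, (1 : Matrix (Fin n) (Fin n) ℝ) j i = 1 := by
        simp [Matrix.one_apply]
      rw [this]
      exact hM1 i
    | succ m ih =>
      intro i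
      rw [pow_succ]
      have hexp : ∑ j, (Atil ^ m * Atil) j i
          = ∑ l, (∑ j, (Atil ^ m) j l) * Atil l i := by
        simp only [Matrix.mul_apply, Finset.sum_mul]
        rw [Finset.sum_comm]
      rw [hexp]
      calc ∑ l, (∑ j, (Atil ^ m) j l) * Atil l i
          ≤ ∑ l, M l * Atil l i := by
            apply Finset.sum_le_sum
            intro l _
            exact mul_le_mul_of_nonneg_right (ih l) (hAtil0 l i)
        _ = M i := hEig i
  exact main m
end

section
/- Let A ∈ {0,1}^{n×n} be a symmetric adjacency matrix with zero diagonal, let k_i = Σ_j A_{ij}, let 0 < p ≤ 1/2, and define Ã by: Ã_{ij} = 0 if i ≠ j and A_{ij} = 0; Ã_{ij} = min(1/(k_i+1), p) if i ≠ j and A_{ij} = 1; and Ã_{ii} = 1 − Σ_{u ≠ i} Ã_{iu}. Let α ∈ (0,1) and, for an integer m ≥ 1, let R_m = α·Σ_{i=0}^{m−1} (1−α)^i Ã^i + (1−α)^m Ã^m, and let R_∞ = α(I − (1−α)Ã)⁻¹. Then for every column index i, the sum of the i-th column of R_m is at most max((k_i+1)p, 1), and the sum of the i-th column of R_∞ is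 at most max((k_i+1)p, 1). -/
open Matrix

/-- For the clipped row-normalized adjacency matrix `Ã` of a symmetric 0/1
adjacency matrix with zero diagonal, the APPR matrix
`R_m = α ∑_{i<m} (1-α)^i Ã^i + (1-α)^m Ã^m` (m ≥ 1) and the PPR matrix
`R_∞ = α (I - (1-α) Ã)⁻¹` both have `i`-th column sums at most
`max ((kᵢ+1)p) 1`. -/
theorem appr_ppr_colSum_le {n : ℕ}
    (A : Matrix (Fin n) (Fin n) ℝ)
    (h01 : ∀ i j, A i j = 0 ∨ A i j = 1)
    (hsymm : A.IsSymm)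
    (hdiag : ∀ i, A i i = 0)
    (p : ℝ) (hp : 0 < p) (hp2 : p ≤ 1 / 2)
    (k : Fin n → ℝ) (hk : ∀ i, k i = ∑ j, A i j)
    (Atil : Matrix (Fin n) (Fin n) ℝ)
    (hoff0 : ∀ i j, i ≠ j → A i j = 0 → Atil i j = 0)
    (hoff1 : ∀ i j, i ≠ j → A i j = 1 → Atil i j = min (1 / (k i + 1)) p)
    (hAtil_diag : ∀ i, Atil i i = 1 - ∑ u ∈ Finset.univ.erase i, Atil i u)
    (α : ℝ) (hα : α ∈ Set.Ioo (0 : ℝ) 1)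
    (m : ℕ) (hm : 1 ≤ m) :
    let Rm : Matrix (Fin n) (Fin n) ℝ :=
      α • (∑ i ∈ Finset.range m, (1 - α) ^ i • Atil ^ i) + (1 - α) ^ m • Atil ^ m
    let Rinf : Matrix (Fin n) (Fin n) ℝ :=
      α • ((1 : Matrix (Fin n) (Fin n) ℝ) - (1 - α) • Atil)⁻¹
    (∀ i, ∑ j, Rm j i ≤ max ((k i + 1) * p) 1) ∧
    (∀ i, ∑ j, Rinf j i ≤ max ((k i + 1) * p) 1) := by
  obtain ⟨hα0, hα1⟩ := hα
  intro Rm Rinf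
  set c : Fin n → ℝ := fun i => max ((k i + 1) * p) 1 with hc
  -- basic facts
  have hk0 : ∀ i, 0 ≤ k i := by
    intro i
    rw [hk i]
    refine Finset.sum_nonneg fun j _ => ?_
    rcases h01 i j with h | h <;> rw [h] <;> norm_num
  have hk1 : ∀ i, 0 < k i + 1 := fun i => by linarith [hk0 i]
  have hmin_pos : ∀ i, 0 < min (1 / (k i + 1)) p := fun i =>
    lt_min (div_pos one_pos (hk1 i)) hp
  have hc1 : ∀ i, (1 : ℝ) ≤ c i := fun i => le_max_right _ _
  have hc0 : ∀ i, (0 : ℝ) ≤ c i := fun i => le_trans zero_le_one (hc1 i)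
  -- the key identity c i * min(1/(k i + 1)) p = p
  have hkey : ∀ i, c i * min (1 / (k i + 1)) p = p := by
    intro i
    rcases le_total p (1 / (k i + 1)) with h | h
    · have h' : (k i + 1) * p ≤ 1 := by
        rw [le_div_iff₀ (hk1 i)] at h
        linarith [mul_comm p (k i + 1)]
      have hci : c i = 1 := max_eq_right h'
      rw [min_eq_right h, hci, one_mul]
    · have h' : (1 : ℝ) ≤ (k i + 1) * p := by
        rw [div_le_iff₀ (hk1 i)] at h
        linarith [mul_comm p (k i + 1)]
      have hci : c i = (k i + 1) * p := max_eq_left h'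
      rw [min_eq_left h, hci, mul_one_div, mul_comm (k i + 1) p, mul_div_assoc,
        div_self (hk1 i).ne', mul_one]
  -- off-diagonal entries of Atil written via A
  have hoff : ∀ i j, i ≠ j → Atil i j = A i j * min (1 / (k i + 1)) p := by
    intro i j hij
    rcases h01 i j with h | h
    · rw [hoff0 i j hij h, h, zero_mul]
    · rw [hoff1 i j hij h, h, one_mul]
  -- row sums off diagonal
  have hsum_erase : ∀ i, ∑ u ∈ Finset.univ.erase i, Atil i u
      = k i * min (1 / (k i + 1)) p := by
    intro i
    have : ∀ u ∈ Finset.univ.erase i, Atil i u = A i u * min (1 / (k i + 1)) p := by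
      intro u hu
      exact hoff i u (Ne.symm (Finset.ne_of_mem_erase hu))
    rw [Finset.sum_congr rfl this, ← Finset.sum_mul]
    congr 1
    rw [Finset.sum_erase_eq_sub (Finset.mem_univ i), hdiag, sub_zero, ← hk]
  have hdval : ∀ i, Atil i i = 1 - k i * min (1 / (k i + 1)) p := by
    intro i; rw [hAtil_diag i, hsum_erase i]
  have hd0 : ∀ i, 0 ≤ Atil i i := by
    intro i
    rw [hdval i]
    have h1 : k i * min (1 / (k i + 1)) p ≤ k i * (1 / (k i + 1)) :=
      mul_le_mul_of_nonneg_left (min_le_left _ _) (hk0 i)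
    have h2 : k i * (1 / (k i + 1)) ≤ 1 := by
      rw [mul_one_div, div_le_one (hk1 i)]; linarith
    linarith
  have hnn : ∀ i j, 0 ≤ Atil i j := by
    intro i j
    rcases eq_or_ne i j with rfl | hij
    · exact hd0 i
    · rw [hoff i j hij]
      rcases h01 i j with h | h <;> rw [h]
      · rw [zero_mul]
      · rw [one_mul]; exact (hmin_pos i).le
  have hrow : ∀ i, ∑ u, Atil i u = 1 := by
    intro i
    rw [← Finset.sum_erase_add Finset.univ _ (Finset.mem_univ i), hAtil_diag i]
    ring
  -- c is a left fixed vector of Atil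
  have hcA : ∀ i, ∑ j, c j * Atil j i = c i := by
    intro i
    rw [← Finset.sum_erase_add Finset.univ _ (Finset.mem_univ i)]
    have h1 : ∀ j ∈ Finset.univ.erase i, c j * Atil j i = p * A j i := by
      intro j hj
      have hji : j ≠ i := Finset.ne_of_mem_erase hj
      rcases h01 j i with h | h
      · rw [hoff0 j i hji h, h, mul_zero, mul_zero]
      · rw [hoff1 j i hji h, h, mul_one, hkey j]
    rw [Finset.sum_congr rfl h1, ← Finset.mul_sum,
      Finset.sum_erase_eq_sub (Finset.mem_univ i), hdiag, hdval i]
    have h2 : ∑ j, A j i = k i := by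
      rw [hk]
      exact Finset.sum_congr rfl fun j _ => congrFun (congrFun hsymm.eq i) j
    have h3 : c i * (1 - k i * min (1 / (k i + 1)) p)
        = c i - k i * (c i * min (1 / (k i + 1)) p) := by ring
    rw [h2, h3, hkey i]
    ring
  -- powers: nonneg and fixed vector
  have hpow : ∀ t : ℕ, (∀ a b, 0 ≤ (Atil ^ t) a b)
      ∧ (∀ i, ∑ j, c j * (Atil ^ t) j i = c i) := by
    intro t
    induction t with
    | zero =>
      constructor
      · intro a b
        rw [pow_zero]
        rcases eq_or_ne a b with rfl | h
        · simp [Matrix.one_apply]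
        · simp [Matrix.one_apply, h]
      · intro i
        rw [pow_zero]
        simp [Matrix.one_apply]
    | succ t ih =>
      have hmul : ∀ a b, (Atil ^ (t + 1)) a b = ∑ l, (Atil ^ t) a l * Atil l b := by
        intro a b
        rw [pow_succ]
        rfl
      constructor
      · intro a b
        rw [hmul]
        exact Finset.sum_nonneg fun l _ => mul_nonneg (ih.1 a l) (hnn l b)
      · intro i
        calc ∑ j, c j * (Atil ^ (t + 1)) j i
            = ∑ j, ∑ l, c j * ((Atil ^ t) j l * Atil l i) := by
              refine Finset.sum_congr rfl fun j _ => ?_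
              rw [hmul, Finset.mul_sum]
          _ = ∑ l, (∑ j, c j * (Atil ^ t) j l) * Atil l i := by
              rw [Finset.sum_comm]
              refine Finset.sum_congr rfl fun l _ => ?_
              rw [Finset.sum_mul]
              exact Finset.sum_congr rfl fun j _ => by ring
          _ = ∑ l, c l * Atil l i :=
              Finset.sum_congr rfl fun l _ => by rw [ih.2 l]
          _ = c i := hcA i
  -- column sums of powers
  have hcol : ∀ (t : ℕ) i, ∑ j, (Atil ^ t) j i ≤ c i := by
    intro t i
    calc ∑ j, (Atil ^ t) j i ≤ ∑ j, c j * (Atil ^ t) j i := by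
          refine Finset.sum_le_sum fun j _ => ?_
          nth_rewrite 1 [← one_mul ((Atil ^ t) j i)]
          exact mul_le_mul_of_nonneg_right (hc1 j) ((hpow t).1 j i)
      _ = c i := (hpow t).2 i
  have h1α : 0 < 1 - α := by linarith
  -- geometric sum
  have hgeom : α * ∑ t ∈ Finset.range m, (1 - α) ^ t = 1 - (1 - α) ^ m := by
    have h := geom_sum_mul (1 - α) m
    linear_combination -h
  constructor
  · -- Rm part
    intro i
    have hRm : ∑ j, Rm j i
        = α * ∑ t ∈ Finset.range m, (1 - α) ^ t * ∑ j, (Atil ^ t) j i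
          + (1 - α) ^ m * ∑ j, (Atil ^ m) j i := by
      simp only [Rm, Matrix.add_apply, Matrix.smul_apply, Matrix.sum_apply,
        smul_eq_mul]
      rw [Finset.sum_add_distrib]
      congr 1
      · rw [← Finset.mul_sum, Finset.sum_comm]
        simp only [Finset.mul_sum]
      · rw [Finset.mul_sum]
    rw [hRm]
    have hb1 : α * ∑ t ∈ Finset.range m, (1 - α) ^ t * ∑ j, (Atil ^ t) j i
        ≤ α * ∑ t ∈ Finset.range m, (1 - α) ^ t * c i := by
      refine mul_le_mul_of_nonneg_left (Finset.sum_le_sum fun t _ => ?_) hα0.le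
      exact mul_le_mul_of_nonneg_left (hcol t i) (pow_nonneg h1α.le t)
    have hb2 : (1 - α) ^ m * ∑ j, (Atil ^ m) j i ≤ (1 - α) ^ m * c i :=
      mul_le_mul_of_nonneg_left (hcol m i) (pow_nonneg h1α.le m)
    have : α * ∑ t ∈ Finset.range m, (1 - α) ^ t * c i
        + (1 - α) ^ m * c i = c i := by
      rw [← Finset.sum_mul, ← mul_assoc, ← add_mul]
      rw [show α * ∑ t ∈ Finset.range m, (1 - α) ^ t = 1 - (1 - α) ^ m from hgeom]
      ring
    calc α * ∑ t ∈ Finset.range m, (1 - α) ^ t * ∑ j, (Atil ^ t) j i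
          + (1 - α) ^ m * ∑ j, (Atil ^ m) j i
        ≤ α * ∑ t ∈ Finset.range m, (1 - α) ^ t * c i + (1 - α) ^ m * c i :=
          add_le_add hb1 hb2
      _ = c i := this
  · -- Rinf part
    intro i
    set B : Matrix (Fin n) (Fin n) ℝ := 1 - (1 - α) • Atil with hB
    have hBapp : ∀ a b, B a b = (1 : Matrix (Fin n) (Fin n) ℝ) a b
        - (1 - α) * Atil a b := by
      intro a b; simp [hB, Matrix.sub_apply, Matrix.smul_apply, smul_eq_mul]
    have hd1 : ∀ r, Atil r r ≤ 1 := by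
      intro r
      have := hrow r
      have h := Finset.single_le_sum (f := fun u => Atil r u)
        (fun u _ => hnn r u) (Finset.mem_univ r)
      linarith
    have hdet : B.det ≠ 0 := by
      refine det_ne_zero_of_sum_row_lt_diag fun r => ?_
      have h1 : ∑ j ∈ Finset.univ.erase r, ‖B r j‖
          = (1 - α) * ∑ j ∈ Finset.univ.erase r, Atil r j := by
        have h : ∀ j ∈ Finset.univ.erase r, ‖B r j‖ = (1 - α) * Atil r j := by
          intro j hj
          have hjr : r ≠ j := (Finset.ne_of_mem_erase hj).symm
          rw [hBapp, Matrix.one_apply_ne hjr, zero_sub, norm_neg,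
            Real.norm_eq_abs, abs_of_nonneg (mul_nonneg h1α.le (hnn r j))]
        rw [Finset.sum_congr rfl h, ← Finset.mul_sum]
      have hS : ∑ u ∈ Finset.univ.erase r, Atil r u = 1 - Atil r r := by
        linarith [hAtil_diag r]
      have h2 : ‖B r r‖ = 1 - (1 - α) * Atil r r := by
        rw [hBapp, Matrix.one_apply_eq, Real.norm_eq_abs, abs_of_nonneg]
        nlinarith [hd0 r, hd1 r]
      rw [h1, h2, hS]
      nlinarith [hd0 r, hd1 r]
    have hU : IsUnit B.det := isUnit_iff_ne_zero.mpr hdet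
    have hBB : B * B⁻¹ = 1 := Matrix.mul_nonsing_inv B hU
    have hBBapp : ∀ a b, ∑ l, B a l * B⁻¹ l b
        = (1 : Matrix (Fin n) (Fin n) ℝ) a b := by
      intro a b
      rw [← hBB]
      rfl
    -- nonnegativity of B⁻¹
    have hinv_nn : ∀ a b, 0 ≤ B⁻¹ a b := by
      intro a b
      obtain ⟨j0, _, hj0⟩ := Finset.exists_min_image Finset.univ
        (fun j => B⁻¹ j b) ⟨b, Finset.mem_univ b⟩
      have hrel : B⁻¹ j0 b = (1 : Matrix (Fin n) (Fin n) ℝ) j0 b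
          + (1 - α) * ∑ l, Atil j0 l * B⁻¹ l b := by
        have h := hBBapp j0 b
        have h2 : ∑ l, B j0 l * B⁻¹ l b
            = B⁻¹ j0 b - (1 - α) * ∑ l, Atil j0 l * B⁻¹ l b := by
          have : ∀ l, B j0 l * B⁻¹ l b
              = (1 : Matrix (Fin n) (Fin n) ℝ) j0 l * B⁻¹ l b
                - (1 - α) * (Atil j0 l * B⁻¹ l b) := by
            intro l; rw [hBapp]; ring
          rw [Finset.sum_congr rfl fun l _ => this l, Finset.sum_sub_distrib,
            ← Finset.mul_sum]
          congr 1
          simp [Matrix.one_apply]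
        rw [h2] at h
        linarith [h]
      have hsum_ge : ∑ l, Atil j0 l * B⁻¹ l b ≥ B⁻¹ j0 b := by
        calc ∑ l, Atil j0 l * B⁻¹ l b
            ≥ ∑ l, Atil j0 l * B⁻¹ j0 b :=
              Finset.sum_le_sum fun l _ =>
                mul_le_mul_of_nonneg_left (hj0 l (Finset.mem_univ l)) (hnn j0 l)
          _ = B⁻¹ j0 b := by rw [← Finset.sum_mul, hrow j0, one_mul]
      have hone : (0:ℝ) ≤ (1 : Matrix (Fin n) (Fin n) ℝ) j0 b := by
        rcases eq_or_ne j0 b with rfl | h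
        · simp
        · simp [Matrix.one_apply, h]
      have hj0nn : 0 ≤ B⁻¹ j0 b := by nlinarith [hrel, hsum_ge]
      exact le_trans hj0nn (hj0 a (Finset.mem_univ a))
    -- c^T B⁻¹ = c / α
    have hcB : ∀ j, ∑ l, c l * B l j = α * c j := by
      intro j
      have : ∀ l, c l * B l j = c l * (1 : Matrix (Fin n) (Fin n) ℝ) l j
          - (1 - α) * (c l * Atil l j) := by
        intro l; rw [hBapp]; ring
      rw [Finset.sum_congr rfl fun l _ => this l, Finset.sum_sub_distrib,
        ← Finset.mul_sum, hcA j]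
      have : ∑ l, c l * (1 : Matrix (Fin n) (Fin n) ℝ) l j = c j := by
        simp [Matrix.one_apply]
      rw [this]; ring
    have hcInv : ∑ j, c j * B⁻¹ j i = c i / α := by
      have key : α * ∑ j, c j * B⁻¹ j i = c i := by
        calc α * ∑ j, c j * B⁻¹ j i
            = ∑ j, (α * c j) * B⁻¹ j i := by
              rw [Finset.mul_sum]; exact Finset.sum_congr rfl fun j _ => by ring
          _ = ∑ j, (∑ l, c l * B l j) * B⁻¹ j i :=
              Finset.sum_congr rfl fun j _ => by rw [hcB j]
          _ = ∑ j, ∑ l, c l * B l j * B⁻¹ j i := by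
              simp only [Finset.sum_mul]
          _ = ∑ l, ∑ j, c l * B l j * B⁻¹ j i := Finset.sum_comm
          _ = ∑ l, c l * ∑ j, B l j * B⁻¹ j i := by
              simp only [Finset.mul_sum, mul_assoc]
          _ = ∑ l, c l * (1 : Matrix (Fin n) (Fin n) ℝ) l i :=
              Finset.sum_congr rfl fun l _ => by rw [hBBapp]
          _ = c i := by simp [Matrix.one_apply]
      field_simp at key ⊢
      linarith [key]
    have hRinf : ∑ j, Rinf j i = α * ∑ j, B⁻¹ j i := by
      simp only [Rinf, Matrix.smul_apply, smul_eq_mul, ← hB]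
      rw [Finset.mul_sum]
    rw [hRinf]
    calc α * ∑ j, B⁻¹ j i ≤ α * ∑ j, c j * B⁻¹ j i := by
          refine mul_le_mul_of_nonneg_left (Finset.sum_le_sum fun j _ => ?_) hα0.le
          nth_rewrite 1 [← one_mul (B⁻¹ j i)]
          exact mul_le_mul_of_nonneg_right (hc1 j) (hinv_nn j i)
      _ = c i := by rw [hcInv]; field_simp
end

section
/- Let n ≥ 2 and let A, A' ∈ {0,1}^{n×n} be symmetric adjacency matrices with zero diagonal that agree in all entries except that A_{12} = A_{21} = 1 while A'_{12} = A'_{21} = 0 (i.e., A' is obtained from A by removing one edge). Let Ã = D⁻¹(A+I) and Ã' = D'⁻¹(A'+I) be the row-normalized adjacency matrices with self-loops, where D, D' are the respective diagonal degree matrices of A+I and A'+I. Let X ∈ ℝ^{n×d} be a matrix whose every row has Euclidean norm at most 1. Then for every integer m ≥ 1, the sum over i = 1,…,n of the Euclidean norms of the i-th rows of Ã'^m X − Ã^m X is at most 2m. -/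
open Matrix

namespace SensAuxHelpers
open Finset

namespace SensAux

variable {n : ℕ}

lemma pow_nonneg_entries (P : Matrix (Fin n) (Fin n) ℝ)
    (hP : ∀ i j, 0 ≤ P i j) (m : ℕ) : ∀ i j, 0 ≤ (P ^ m) i j := by
  induction m with
  | zero =>
    intro i j
    rw [pow_zero]
    by_cases h : i = j <;> simp [Matrix.one_apply, h]
  | succ m ih =>
    intro i j
    rw [pow_succ, Matrix.mul_apply]
    exact Finset.sum_nonneg fun k _ => mul_nonneg (ih i k) (hP k j)

lemma pow_row_sum (P : Matrix (Fin n) (Fin n) ℝ)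
    (hP : ∀ i, ∑ j, P i j = 1) (m : ℕ) : ∀ i, ∑ j, (P ^ m) i j = 1 := by
  induction m with
  | zero => intro i; simp [Matrix.one_apply]
  | succ m ih =>
    intro i
    simp only [pow_succ, Matrix.mul_apply]
    rw [Finset.sum_comm]
    calc ∑ k, ∑ j, (P ^ m) i k * P k j
        = ∑ k, (P ^ m) i k * ∑ j, P k j := by
          simp [Finset.mul_sum]
      _ = 1 := by simp only [hP, mul_one]; exact ih i

lemma pow_reversible (P : Matrix (Fin n) (Fin n) ℝ) (w : Fin n → ℝ)
    (hrev : ∀ i j, w i * P i j = w j * P j i) (m : ℕ) :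
    ∀ i j, w i * (P ^ m) i j = w j * (P ^ m) j i := by
  induction m with
  | zero =>
    intro i j
    by_cases h : i = j
    · subst h; simp
    · rw [pow_zero, Matrix.one_apply_ne h, Matrix.one_apply_ne fun hh => h hh.symm]
      simp
  | succ m ih =>
    intro i j
    conv_lhs => rw [pow_succ]
    conv_rhs => rw [pow_succ']
    rw [Matrix.mul_apply, Matrix.mul_apply, Finset.mul_sum, Finset.mul_sum]
    refine Finset.sum_congr rfl fun l _ => ?_
    linear_combination P l j * ih i l + (P ^ m) l i * hrev l j

lemma pow_h_bound (P : Matrix (Fin n) (Fin n) ℝ) (h : Fin n → ℝ)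
    (hP0 : ∀ i j, 0 ≤ P i j) (hP1 : ∀ i, ∑ j, P i j = 1)
    (hnb : ∀ v u, u ≠ v → P v u ≠ 0 → h u ≤ 1/2) (m : ℕ) :
    ∀ v, ∑ i, (P ^ m) v i * h i ≤ max (h v) (1/2) := by
  induction m with
  | zero =>
    intro v
    simp only [pow_zero, Matrix.one_apply]
    rw [Finset.sum_congr rfl (fun i _ => by rw [ite_mul, one_mul, zero_mul])]
    rw [Finset.sum_ite_eq (Finset.univ : Finset (Fin n)) v h]
    simp [le_max_left]
  | succ m ih =>
    intro v
    have key : ∀ u, P v u * (∑ i, (P ^ m) u i * h i) ≤ P v u * max (h v) (1/2) := by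
      intro u
      by_cases hz : P v u = 0
      · simp [hz]
      · refine mul_le_mul_of_nonneg_left ?_ (hP0 v u)
        by_cases huv : u = v
        · subst huv; exact ih u
        · refine (ih u).trans (max_le ?_ (le_max_right _ _))
          exact le_trans (hnb v u huv hz) (le_max_right _ _)
    calc ∑ i, (P ^ (m + 1)) v i * h i
        = ∑ u, P v u * (∑ i, (P ^ m) u i * h i) := by
          rw [pow_succ']
          simp only [Matrix.mul_apply, Finset.sum_mul, Finset.mul_sum]
          rw [Finset.sum_comm]
          simp [mul_assoc]
      _ ≤ ∑ u, P v u * max (h v) (1/2) := Finset.sum_le_sum fun u _ => key u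
      _ = max (h v) (1/2) := by rw [← Finset.sum_mul, hP1 v, one_mul]

lemma entrywise_pow_diff (P Q : Matrix (Fin n) (Fin n) ℝ)
    (hP0 : ∀ i j, 0 ≤ P i j) (hP1 : ∀ i, ∑ j, P i j = 1)
    (hstep : ∀ m : ℕ, ∑ i, ∑ j, |(Q ^ m * (Q - P)) i j| ≤ 2) (m : ℕ) :
    ∑ i, ∑ j, |(Q ^ m - P ^ m) i j| ≤ 2 * m := by
  induction m with
  | zero => simp
  | succ m ih =>
    have decomp : Q ^ (m + 1) - P ^ (m + 1)
        = Q ^ m * (Q - P) + (Q ^ m - P ^ m) * P := by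
      rw [pow_succ, pow_succ, mul_sub, sub_mul]
      abel
    have hmulP : ∑ i, ∑ j, |((Q ^ m - P ^ m) * P) i j| ≤ ∑ i, ∑ l, |(Q ^ m - P ^ m) i l| := by
      refine Finset.sum_le_sum fun i _ => ?_
      calc ∑ j, |((Q ^ m - P ^ m) * P) i j|
          ≤ ∑ j, ∑ l, |(Q ^ m - P ^ m) i l| * P l j := by
            refine Finset.sum_le_sum fun j _ => ?_
            rw [Matrix.mul_apply]
            refine (Finset.abs_sum_le_sum_abs _ _).trans ?_
            refine Finset.sum_le_sum fun l _ => ?_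
            rw [abs_mul, abs_of_nonneg (hP0 l j)]
        _ = ∑ l, |(Q ^ m - P ^ m) i l| * ∑ j, P l j := by
            rw [Finset.sum_comm]; simp [Finset.mul_sum]
        _ = ∑ l, |(Q ^ m - P ^ m) i l| := by simp [hP1]
    calc ∑ i, ∑ j, |(Q ^ (m + 1) - P ^ (m + 1)) i j|
        ≤ (∑ i, ∑ j, |(Q ^ m * (Q - P)) i j|) + ∑ i, ∑ j, |((Q ^ m - P ^ m) * P) i j| := by
          rw [← Finset.sum_add_distrib]
          refine Finset.sum_le_sum fun i _ => ?_
          rw [← Finset.sum_add_distrib]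
          refine Finset.sum_le_sum fun j _ => ?_
          rw [decomp]
          exact abs_add_le _ _
      _ ≤ 2 + 2 * m := add_le_add (hstep m) (hmulP.trans ih)
      _ = 2 * (m + 1 : ℕ) := by push_cast; ring







lemma step_support (Q E : Matrix (Fin n) (Fin n) ℝ) (a b : Fin n) (hab : a ≠ b)
    (hQ0 : ∀ i j, 0 ≤ Q i j)
    (hE : ∀ l, l ≠ a → l ≠ b → ∀ j, E l j = 0) (m : ℕ) :
    ∑ i, ∑ j, |(Q ^ m * E) i j|
      ≤ (∑ i, (Q ^ m) i a) * (∑ j, |E a j|) + (∑ i, (Q ^ m) i b) * (∑ j, |E b j|) := by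
  have hQm : ∀ i j, 0 ≤ (Q ^ m) i j := by
    induction m with
    | zero =>
      intro i j; rw [pow_zero]
      by_cases h : i = j <;> simp [Matrix.one_apply, h]
    | succ m ih =>
      intro i j
      rw [pow_succ, Matrix.mul_apply]
      exact Finset.sum_nonneg fun k _ => mul_nonneg (ih i k) (hQ0 k j)
  have key : ∑ i, ∑ j, |(Q ^ m * E) i j| ≤ ∑ l, (∑ i, (Q ^ m) i l) * (∑ j, |E l j|) := by
    calc ∑ i, ∑ j, |(Q ^ m * E) i j|
        ≤ ∑ i, ∑ j, ∑ l, (Q ^ m) i l * |E l j| := by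
          refine Finset.sum_le_sum fun i _ => Finset.sum_le_sum fun j _ => ?_
          rw [Matrix.mul_apply]
          refine (Finset.abs_sum_le_sum_abs _ _).trans (Finset.sum_le_sum fun l _ => ?_)
          rw [abs_mul, abs_of_nonneg (hQm i l)]
      _ = ∑ i, ∑ l, (Q ^ m) i l * ∑ j, |E l j| := by
          refine Finset.sum_congr rfl fun i _ => ?_
          rw [Finset.sum_comm]
          simp [Finset.mul_sum]
      _ = ∑ l, (∑ i, (Q ^ m) i l) * (∑ j, |E l j|) := by
          rw [Finset.sum_comm]
          simp [Finset.sum_mul]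
  refine key.trans (le_of_eq ?_)
  have hvanish : ∀ l ∈ (Finset.univ : Finset (Fin n)), l ∉ ({a, b} : Finset (Fin n)) →
      (∑ i, (Q ^ m) i l) * (∑ j, |E l j|) = 0 := by
    intro l _ hl
    simp only [Finset.mem_insert, Finset.mem_singleton] at hl
    push_neg at hl
    have : ∑ j, |E l j| = 0 := by
      refine Finset.sum_eq_zero fun j _ => ?_
      rw [hE l hl.1 hl.2 j, abs_zero]
    rw [this, mul_zero]
  rw [← Finset.sum_subset (Finset.subset_univ ({a, b} : Finset (Fin n))) hvanish,
    Finset.sum_pair hab]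

lemma row_norm_le {d : ℕ} (c : Fin n → ℝ) (X : Matrix (Fin n) (Fin d) ℝ) :
    Real.sqrt (∑ t, (∑ l, c l * X l t) ^ 2) ≤ ∑ l, |c l| * Real.sqrt (∑ t, (X l t) ^ 2) := by
  set L := WithLp.linearEquiv 2 ℝ (Fin d → ℝ) with hL
  have key : ‖∑ l, c l • L.symm (X l)‖ ≤ ∑ l, |c l| * ‖L.symm (X l)‖ := by
    calc ‖∑ l, c l • L.symm (X l)‖ ≤ ∑ l, ‖c l • L.symm (X l)‖ := norm_sum_le _ _
      _ = ∑ l, |c l| * ‖L.symm (X l)‖ := by simp [norm_smul]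
  have hmap : (∑ l, c l • L.symm (X l)) = L.symm (∑ l, c l • X l) := by
    rw [map_sum]
    exact Finset.sum_congr rfl fun l _ => (map_smul L.symm (c l) (X l)).symm
  have happ : ∀ (y : Fin d → ℝ) (t : Fin d), (L.symm y) t = y t := fun y t => rfl
  have hnorm : ∀ y : Fin d → ℝ, ‖L.symm y‖ = Real.sqrt (∑ t, (y t) ^ 2) := by
    intro y
    rw [EuclideanSpace.norm_eq]
    congr 1
    refine Finset.sum_congr rfl fun t _ => ?_
    rw [happ, Real.norm_eq_abs, sq_abs]
  rw [hmap, hnorm] at key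
  have hy : ∀ t, (∑ l, c l • X l) t = ∑ l, c l * X l t := by
    intro t; simp [Finset.sum_apply]
  calc Real.sqrt (∑ t, (∑ l, c l * X l t) ^ 2)
      = Real.sqrt (∑ t, ((∑ l, c l • X l) t) ^ 2) := by
        congr 1; exact Finset.sum_congr rfl fun t _ => by rw [hy]
    _ ≤ ∑ l, |c l| * ‖L.symm (X l)‖ := key
    _ = ∑ l, |c l| * Real.sqrt (∑ t, (X l t) ^ 2) := by
        exact Finset.sum_congr rfl fun l _ => by rw [hnorm]

end SensAux


end SensAuxHelpers

/-- Edge-removal sensitivity of `Ã^m X`: if the symmetric 0/1 adjacency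
matrices `A` and `A'` (zero diagonal) differ exactly by removing the single
edge `{a, b}`, and each row of `X` has Euclidean norm at most 1, then the sum
over rows of the Euclidean norms of the rows of `Ã'^m X − Ã^m X` is at most
`2 m`, where `Ã = D⁻¹ (A + I)` and `Ã' = D'⁻¹ (A' + I)` are the
row-normalized adjacency matrices with self-loops. -/
theorem pow_normalizedAdj_sensitivity {n d : ℕ}
    (A A' : Matrix (Fin n) (Fin n) ℝ)
    (h01 : ∀ i j, A i j = 0 ∨ A i j = 1)
    (h01' : ∀ i j, A' i j = 0 ∨ A' i j = 1)
    (hsymm : A.IsSymm) (hsymm' : A'.IsSymm)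
    (hdiag : ∀ i, A i i = 0) (hdiag' : ∀ i, A' i i = 0)
    (a b : Fin n) (hab : a ≠ b)
    (hEdge : A a b = 1) (hEdge2 : A b a = 1)
    (hEdge' : A' a b = 0) (hEdge2' : A' b a = 0)
    (hagree : ∀ i j, ¬((i = a ∧ j = b) ∨ (i = b ∧ j = a)) → A' i j = A i j)
    (X : Matrix (Fin n) (Fin d) ℝ)
    (hX : ∀ i, Real.sqrt (∑ j, (X i j) ^ 2) ≤ 1)
    (m : ℕ) (hm : 1 ≤ m) :
    let Atil : Matrix (Fin n) (Fin n) ℝ :=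
      (Matrix.diagonal (fun i => ∑ k, (A + 1) i k))⁻¹ * (A + 1)
    let Atil' : Matrix (Fin n) (Fin n) ℝ :=
      (Matrix.diagonal (fun i => ∑ k, (A' + 1) i k))⁻¹ * (A' + 1)
    ∑ i, Real.sqrt (∑ j, ((Atil' ^ m * X - Atil ^ m * X) i j) ^ 2) ≤ 2 * m := by
  intro P Q
  -- basic entry facts
  have hA1 : ∀ i j, (A + 1) i j = A i j + if i = j then 1 else 0 := by
    intro i j; rw [Matrix.add_apply, Matrix.one_apply]
  have hA1' : ∀ i j, (A' + 1) i j = A' i j + if i = j then 1 else 0 := by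
    intro i j; rw [Matrix.add_apply, Matrix.one_apply]
  have hA0 : ∀ i j, 0 ≤ A i j := by
    intro i j; rcases h01 i j with h | h <;> rw [h] <;> norm_num
  have hA0' : ∀ i j, 0 ≤ A' i j := by
    intro i j; rcases h01' i j with h | h <;> rw [h] <;> norm_num
  have hE0 : ∀ i j, 0 ≤ (A + 1) i j := by
    intro i j; rw [hA1]; have := hA0 i j; split <;> linarith
  have hE0' : ∀ i j, 0 ≤ (A' + 1) i j := by
    intro i j; rw [hA1']; have := hA0' i j; split <;> linarith
  set dA : Fin n → ℝ := fun i => ∑ k, (A + 1) i k with hdA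
  set dA' : Fin n → ℝ := fun i => ∑ k, (A' + 1) i k with hdA'
  have hd1 : ∀ i, 1 ≤ dA i := by
    intro i
    have h1 : (A + 1) i i = 1 := by rw [hA1]; simp [hdiag i]
    have := Finset.single_le_sum (f := fun k => (A + 1) i k)
      (fun k _ => hE0 i k) (Finset.mem_univ i)
    exact le_trans (le_of_eq h1.symm) this
  have hd1' : ∀ i, 1 ≤ dA' i := by
    intro i
    have h1 : (A' + 1) i i = 1 := by rw [hA1']; simp [hdiag' i]
    have := Finset.single_le_sum (f := fun k => (A' + 1) i k)
      (fun k _ => hE0' i k) (Finset.mem_univ i)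
    exact le_trans (le_of_eq h1.symm) this
  have hdne : ∀ i, dA i ≠ 0 := fun i => by have := hd1 i; linarith
  have hdne' : ∀ i, dA' i ≠ 0 := fun i => by have := hd1' i; linarith
  -- inverse of diagonal
  have hPdef : P = Matrix.diagonal (fun i => (dA i)⁻¹) * (A + 1) := by
    show (Matrix.diagonal dA)⁻¹ * (A + 1) = _
    congr 1
    refine Matrix.inv_eq_right_inv ?_
    rw [Matrix.diagonal_mul_diagonal]
    have : (fun i => dA i * (dA i)⁻¹) = fun _ => (1 : ℝ) :=
      funext fun i => mul_inv_cancel₀ (hdne i)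
    rw [this, Matrix.diagonal_one]
  have hQdef : Q = Matrix.diagonal (fun i => (dA' i)⁻¹) * (A' + 1) := by
    show (Matrix.diagonal dA')⁻¹ * (A' + 1) = _
    congr 1
    refine Matrix.inv_eq_right_inv ?_
    rw [Matrix.diagonal_mul_diagonal]
    have : (fun i => dA' i * (dA' i)⁻¹) = fun _ => (1 : ℝ) :=
      funext fun i => mul_inv_cancel₀ (hdne' i)
    rw [this, Matrix.diagonal_one]
  have hPe : ∀ i j, P i j = (dA i)⁻¹ * (A + 1) i j := by
    intro i j; rw [hPdef, Matrix.diagonal_mul]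
  have hQe : ∀ i j, Q i j = (dA' i)⁻¹ * (A' + 1) i j := by
    intro i j; rw [hQdef, Matrix.diagonal_mul]
  have hP0 : ∀ i j, 0 ≤ P i j := by
    intro i j; rw [hPe]
    exact mul_nonneg (inv_nonneg.2 (by linarith [hd1 i])) (hE0 i j)
  have hQ0 : ∀ i j, 0 ≤ Q i j := by
    intro i j; rw [hQe]
    exact mul_nonneg (inv_nonneg.2 (by linarith [hd1' i])) (hE0' i j)
  have hP1 : ∀ i, ∑ j, P i j = 1 := by
    intro i
    rw [Finset.sum_congr rfl fun j _ => hPe i j, ← Finset.mul_sum]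
    exact inv_mul_cancel₀ (hdne i)
  have hQ1 : ∀ i, ∑ j, Q i j = 1 := by
    intro i
    rw [Finset.sum_congr rfl fun j _ => hQe i j, ← Finset.mul_sum]
    exact inv_mul_cancel₀ (hdne' i)
  -- degree relation at a and b
  have key_deg : ∀ x y : Fin n, x ≠ y → A x y = 1 → A' x y = 0 →
      (∀ k, k ≠ y → A' x k = A x k) → dA x = dA' x + 1 := by
    intro x y hxy hxy1 hxy0 hagr
    have hsum : dA x - dA' x = 1 := by
      rw [hdA, hdA']
      rw [← Finset.sum_sub_distrib]
      rw [Finset.sum_eq_single y]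
      · rw [hA1, hA1', hxy1, hxy0, if_neg hxy]; ring
      · intro k _ hk; rw [hA1, hA1', hagr k hk]; ring
      · intro h; exact absurd (Finset.mem_univ y) h
    linarith
  have hagr_ab : ∀ k, k ≠ b → A' a k = A a k := by
    intro k hk
    refine hagree a k ?_
    rintro (⟨-, h⟩ | ⟨h, -⟩); exacts [hk h, hab h]
  have hagr_ba : ∀ k, k ≠ a → A' b k = A b k := by
    intro k hk
    refine hagree b k ?_
    rintro (⟨h, -⟩ | ⟨-, h⟩); exacts [hab h.symm, hk h]
  have hda : dA a = dA' a + 1 := key_deg a b hab hEdge hEdge' hagr_ab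
  have hdb : dA b = dA' b + 1 := key_deg b a hab.symm hEdge2 hEdge2' hagr_ba
  -- rows off a,b agree
  have hrows_eq : ∀ l, l ≠ a → l ≠ b → ∀ j, (Q - P) l j = 0 := by
    intro l hla hlb j
    have hAeq : ∀ k, A' l k = A l k := by
      intro k
      refine hagree l k ?_
      rintro (⟨h, -⟩ | ⟨h, -⟩); exacts [hla h, hlb h]
    have hdeq : dA' l = dA l := by
      rw [hdA, hdA']
      exact Finset.sum_congr rfl fun k _ => by rw [hA1, hA1', hAeq k]
    rw [Matrix.sub_apply, hQe, hPe, hdeq, hA1, hA1', hAeq j, sub_self]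
  -- reversibility of Q with weight dA'
  have hrev : ∀ i j, dA' i * Q i j = dA' j * Q j i := by
    intro i j
    rw [hQe, hQe, mul_inv_cancel_left₀ (hdne' i), mul_inv_cancel_left₀ (hdne' j)]
    rw [hA1', hA1', hsymm'.apply j i]
    by_cases h : i = j
    · subst h; rfl
    · rw [if_neg h, if_neg fun hh => h hh.symm]
  -- neighbor degree bound
  have hnb : ∀ v u, u ≠ v → Q v u ≠ 0 → (dA' u)⁻¹ ≤ 1 / 2 := by
    intro v u huv hQvu
    have hA'vu : A' v u ≠ 0 := by
      intro h
      apply hQvu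
      rw [hQe, hA1', h, if_neg fun hh => huv hh.symm]
      ring
    have hA'vu1 : A' v u = 1 := (h01' v u).resolve_left hA'vu
    have hA'uv1 : A' u v = 1 := by rw [hsymm'.apply v u]; exact hA'vu1
    have h2 : 2 ≤ dA' u := by
      have hpair : ∑ k ∈ ({u, v} : Finset (Fin n)), (A' + 1) u k ≤ dA' u := by
        refine Finset.sum_le_sum_of_subset_of_nonneg (Finset.subset_univ _) ?_
        intro k _ _; exact hE0' u k
      rw [Finset.sum_pair huv] at hpair
      have h1 : (A' + 1) u u = 1 := by rw [hA1']; simp [hdiag' u]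
      have h2 : (A' + 1) u v = 1 := by rw [hA1', hA'uv1, if_neg huv]; ring
      rw [h1, h2] at hpair; linarith
    rw [div_eq_inv_mul, mul_one]
    exact inv_anti₀ (by norm_num) h2
  -- column sum bound
  have hrevQm := SensAuxHelpers.SensAux.pow_reversible Q dA' hrev
  have hhb := SensAuxHelpers.SensAux.pow_h_bound Q (fun i => (dA' i)⁻¹) hQ0 hQ1
    (fun v u h1 h2 => by simpa using hnb v u h1 h2)
  have hcol : ∀ (x : Fin n), dA x = dA' x + 1 → ∀ mm : ℕ, ∑ i, (Q ^ mm) i x ≤ dA x / 2 := by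
    intro x hx mm
    have hswap : ∑ i, (Q ^ mm) i x = dA' x * ∑ i, (Q ^ mm) x i * (dA' i)⁻¹ := by
      rw [Finset.mul_sum]
      refine Finset.sum_congr rfl fun i _ => ?_
      have h := hrevQm mm i x
      have hne := hdne' i
      field_simp
      linear_combination h
    rw [hswap]
    have hmax := hhb mm x
    have h1 : dA' x * ∑ i, (Q ^ mm) x i * (dA' i)⁻¹
        ≤ dA' x * max ((dA' x)⁻¹) (1 / 2) :=
      mul_le_mul_of_nonneg_left hmax (by linarith [hd1' x])
    refine h1.trans ?_
    rcases max_cases ((dA' x)⁻¹) ((1 : ℝ) / 2) with ⟨hm1, -⟩ | ⟨hm1, -⟩ <;> rw [hm1]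
    · rw [mul_inv_cancel₀ (hdne' x)]; linarith [hd1' x]
    · rw [hx]; linarith [hd1' x]
  -- row l1 difference bound
  have hErow : ∀ x y : Fin n, x ≠ y → A x y = 1 → A' x y = 0 →
      (∀ k, k ≠ y → A' x k = A x k) → dA x = dA' x + 1 →
      ∑ j, |(Q - P) x j| ≤ 2 * (dA x)⁻¹ := by
    intro x y hxy hxy1 hxy0 hagr hx
    have hinvle : (dA x)⁻¹ ≤ (dA' x)⁻¹ := by
      apply inv_anti₀ (by linarith [hd1' x]) (by linarith [hd1' x])
    have hnonneg : ∀ j, j ≠ y → 0 ≤ (Q - P) x j := by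
      intro j hj
      rw [Matrix.sub_apply, hQe, hPe, hA1, hA1', hagr j hj]
      have := hE0 x j
      rw [hA1] at this
      nlinarith [this, hinvle]
    have hPxy : P x y = (dA x)⁻¹ := by
      rw [hPe, hA1, hxy1, if_neg hxy]; ring
    have hQxy : Q x y = 0 := by
      rw [hQe, hA1', hxy0, if_neg hxy]; ring
    have hsplit : ∑ j, |(Q - P) x j|
        = ∑ j ∈ Finset.univ.erase y, |(Q - P) x j| + |(Q - P) x y| :=
      (Finset.sum_erase_add _ _ (Finset.mem_univ y)).symm
    have habs : ∑ j ∈ Finset.univ.erase y, |(Q - P) x j|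
        = ∑ j ∈ Finset.univ.erase y, (Q - P) x j := by
      refine Finset.sum_congr rfl fun j hj => ?_
      exact abs_of_nonneg (hnonneg j (Finset.ne_of_mem_erase hj))
    have hsum_erase : ∑ j ∈ Finset.univ.erase y, (Q - P) x j = (dA x)⁻¹ := by
      have h1 : ∑ j ∈ Finset.univ.erase y, (Q - P) x j + (Q - P) x y
          = ∑ j, (Q - P) x j := Finset.sum_erase_add _ _ (Finset.mem_univ y)
      have h2 : ∑ j, (Q - P) x j = 0 := by
        rw [Finset.sum_congr rfl fun j _ => Matrix.sub_apply Q P x j,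
          Finset.sum_sub_distrib, hP1, hQ1, sub_self]
      have h3 : (Q - P) x y = -(dA x)⁻¹ := by
        rw [Matrix.sub_apply, hQxy, hPxy]; ring
      rw [h3] at h1; linarith [h1, h2]
    have hEy : |(Q - P) x y| = (dA x)⁻¹ := by
      rw [Matrix.sub_apply, hQxy, hPxy, zero_sub, abs_neg,
        abs_of_nonneg (inv_nonneg.2 (by linarith [hd1 x]))]
    rw [hsplit, habs, hsum_erase, hEy]
    linarith
  -- per-step bound
  have hstep : ∀ mm : ℕ, ∑ i, ∑ j, |(Q ^ mm * (Q - P)) i j| ≤ 2 := by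
    intro mm
    refine (SensAuxHelpers.SensAux.step_support Q (Q - P) a b hab hQ0 hrows_eq mm).trans ?_
    have hca := hcol a hda mm
    have hcb := hcol b hdb mm
    have hea := hErow a b hab hEdge hEdge' hagr_ab hda
    have heb := hErow b a hab.symm hEdge2 hEdge2' hagr_ba hdb
    have hcnn : ∀ x : Fin n, 0 ≤ ∑ i, (Q ^ mm) i x := fun x =>
      Finset.sum_nonneg fun i _ => SensAuxHelpers.SensAux.pow_nonneg_entries Q hQ0 mm i x
    have hennA : 0 ≤ ∑ j, |(Q - P) a j| := Finset.sum_nonneg fun j _ => abs_nonneg _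
    have hennB : 0 ≤ ∑ j, |(Q - P) b j| := Finset.sum_nonneg fun j _ => abs_nonneg _
    have h1 : (∑ i, (Q ^ mm) i a) * (∑ j, |(Q - P) a j|) ≤ (dA a / 2) * (2 * (dA a)⁻¹) :=
      mul_le_mul hca hea hennA (by linarith [hd1 a])
    have h2 : (∑ i, (Q ^ mm) i b) * (∑ j, |(Q - P) b j|) ≤ (dA b / 2) * (2 * (dA b)⁻¹) :=
      mul_le_mul hcb heb hennB (by linarith [hd1 b])
    have e1 : (dA a / 2) * (2 * (dA a)⁻¹) = 1 := by
      field_simp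
      exact div_self (hdne a)
    have e2 : (dA b / 2) * (2 * (dA b)⁻¹) = 1 := by
      field_simp
      exact div_self (hdne b)
    rw [e1] at h1; rw [e2] at h2
    linarith
  -- entrywise total bound
  have htot := SensAuxHelpers.SensAux.entrywise_pow_diff P Q hP0 hP1 hstep m
  -- final assembly
  have hXsub : Q ^ m * X - P ^ m * X = (Q ^ m - P ^ m) * X := (Matrix.sub_mul _ _ _).symm
  calc ∑ i, Real.sqrt (∑ j, ((Q ^ m * X - P ^ m * X) i j) ^ 2)
      ≤ ∑ i, ∑ l, |(Q ^ m - P ^ m) i l| * Real.sqrt (∑ t, (X l t) ^ 2) := by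
        refine Finset.sum_le_sum fun i _ => ?_
        have hrw : ∀ j, (Q ^ m * X - P ^ m * X) i j
            = ∑ l, (Q ^ m - P ^ m) i l * X l j := by
          intro j; rw [hXsub, Matrix.mul_apply]
        rw [Finset.sum_congr rfl fun j _ => by rw [hrw j]]
        exact SensAuxHelpers.SensAux.row_norm_le (fun l => (Q ^ m - P ^ m) i l) X
    _ ≤ ∑ i, ∑ l, |(Q ^ m - P ^ m) i l| := by
        refine Finset.sum_le_sum fun i _ => Finset.sum_le_sum fun l _ => ?_
        calc |(Q ^ m - P ^ m) i l| * Real.sqrt (∑ t, (X l t) ^ 2)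
            ≤ |(Q ^ m - P ^ m) i l| * 1 :=
              mul_le_mul_of_nonneg_left (hX l) (abs_nonneg _)
          _ = |(Q ^ m - P ^ m) i l| := mul_one _
    _ ≤ 2 * m := htot
end

section
/- Let n ≥ 2 and let A, A' ∈ {0,1}^{n×n} be symmetric adjacency matrices with zero diagonal that agree in all entries except that A_{12} = A_{21} = 1 while A'_{12} = A'_{21} = 0. Let Ã = D⁻¹(A+I) and Ã' = D'⁻¹(A'+I) be the row-normalized adjacency matrices with self-loops. Let α ∈ (0,1), let m ≥ 0 be an integer, and set R_m = α·Σ_{i=0}^{m−1} (1−α)^i Ã^i + (1−α)^m Ã^m for m ≥ 1 and R_0 = I (similarly R_m' from Ã'). Let X ∈ ℝ^{n×d} have every row of Euclidean norm at most 1, and set Z_m = R_m X and Z_m' = R_m' X. Then the sum over i = 1,…,n of the Euclidean norms of the i-th rows of Z_m' − Z_m is at most (2(1−α)/α)·(1 − (1−α)^m). -/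
open Matrix Finset

namespace ApprSens

variable {n : ℕ}

/-- Entrywise L1 norm of a square matrix. -/
noncomputable def L (M : Matrix (Fin n) (Fin n) ℝ) : ℝ := ∑ i, ∑ j, |M i j|

lemma L_nonneg (M : Matrix (Fin n) (Fin n) ℝ) : 0 ≤ L M :=
  Finset.sum_nonneg fun _ _ => Finset.sum_nonneg fun _ _ => abs_nonneg _

lemma L_sub_le (M N : Matrix (Fin n) (Fin n) ℝ) : L (M - N) ≤ L M + L N := by
  unfold L
  rw [← Finset.sum_add_distrib]
  refine Finset.sum_le_sum fun i _ => ?_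
  rw [← Finset.sum_add_distrib]
  refine Finset.sum_le_sum fun j _ => ?_
  simpa [Matrix.sub_apply] using abs_sub (M i j) (N i j)

/-- Right multiplication by a (sub)stochastic nonnegative matrix does not
increase the entrywise L1 norm. -/
lemma L_mul_le (M S : Matrix (Fin n) (Fin n) ℝ)
    (hS0 : ∀ i j, 0 ≤ S i j) (hS1 : ∀ i, ∑ j, S i j = 1) :
    L (M * S) ≤ L M := by
  unfold L
  have h1 : ∀ i, ∑ j, |(M * S) i j| ≤ ∑ l, |M i l| := by
    intro i
    calc ∑ j, |(M * S) i j| ≤ ∑ j, ∑ l, |M i l| * S l j := by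
          refine Finset.sum_le_sum fun j _ => ?_
          rw [Matrix.mul_apply]
          refine (Finset.abs_sum_le_sum_abs _ _).trans ?_
          refine Finset.sum_le_sum fun l _ => ?_
          rw [abs_mul, abs_of_nonneg (hS0 l j)]
      _ = ∑ l, |M i l| * ∑ j, S l j := by
          rw [Finset.sum_comm]; simp [Finset.mul_sum]
      _ = ∑ l, |M i l| := by simp [hS1]
  exact Finset.sum_le_sum fun i _ => h1 i

lemma pow_nonneg_apply (P : Matrix (Fin n) (Fin n) ℝ) (hP0 : ∀ i j, 0 ≤ P i j) :
    ∀ (k : ℕ) i j, 0 ≤ (P ^ k) i j := by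
  intro k
  induction k with
  | zero => intro i j; simp [Matrix.one_apply]; positivity
  | succ k ih =>
      intro i j
      rw [pow_succ, Matrix.mul_apply]
      exact Finset.sum_nonneg fun l _ => mul_nonneg (ih i l) (hP0 l j)

lemma pow_rowsum (P : Matrix (Fin n) (Fin n) ℝ) (hP1 : ∀ i, ∑ j, P i j = 1) :
    ∀ (k : ℕ) i, ∑ j, (P ^ k) i j = 1 := by
  intro k
  induction k with
  | zero => intro i; simp [Matrix.one_apply]
  | succ k ih =>
      intro i
      simp only [pow_succ, Matrix.mul_apply]
      rw [Finset.sum_comm]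
      calc ∑ l, ∑ j, (P ^ k) i l * P l j = ∑ l, (P ^ k) i l * ∑ j, P l j := by
            simp [Finset.mul_sum]
        _ = 1 := by simp [hP1, ih]

/-- Reversibility of powers with respect to weights `w`. -/
lemma pow_rev (P : Matrix (Fin n) (Fin n) ℝ) (w : Fin n → ℝ)
    (hw : ∀ i, w i ≠ 0)
    (hrev : ∀ i j, w i * P i j = w j * P j i) :
    ∀ (k : ℕ) i j, w i * (P ^ k) i j = w j * (P ^ k) j i := by
  intro k
  induction k with
  | zero =>
      intro i j
      by_cases h : i = j
      · subst h; rfl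
      · simp [Matrix.one_apply, h, Ne.symm h]
  | succ k ih =>
      intro i j
      conv_lhs => rw [pow_succ]
      conv_rhs => rw [pow_succ']
      rw [Matrix.mul_apply, Matrix.mul_apply, Finset.mul_sum, Finset.mul_sum]
      refine Finset.sum_congr rfl fun l _ => ?_
      have h1 := ih i l
      have h2 := hrev j l
      linear_combination P l j * h1 - (P ^ k) l i * h2

/-- If an entry of `P ^ k` off the diagonal is nonzero, the target vertex has
weight at least 2. -/
lemma pow_support (P : Matrix (Fin n) (Fin n) ℝ) (w : Fin n → ℝ)
    (hnb : ∀ i j, i ≠ j → P i j ≠ 0 → 2 ≤ w j) :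
    ∀ (k : ℕ) i j, i ≠ j → (P ^ k) i j ≠ 0 → 2 ≤ w j := by
  intro k
  induction k with
  | zero => intro i j hij h; simp [Matrix.one_apply, hij] at h
  | succ k ih =>
      intro i j hij h
      rw [pow_succ, Matrix.mul_apply] at h
      obtain ⟨l, _, hl⟩ := Finset.exists_ne_zero_of_sum_ne_zero h
      have hl1 : (P ^ k) i l ≠ 0 := fun h0 => hl (by simp [h0])
      have hl2 : P l j ≠ 0 := fun h0 => hl (by simp [h0])
      by_cases hlj : l = j
      · subst hlj; exact ih i l hij hl1
      · exact hnb l j hlj hl2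

/-- Key column-sum bound: `2 * colsum_c (P^k) ≤ w c + 1`. -/
lemma colsum_bound (P : Matrix (Fin n) (Fin n) ℝ) (w : Fin n → ℝ)
    (hw1 : ∀ i, 1 ≤ w i)
    (hrev : ∀ i j, w i * P i j = w j * P j i)
    (hP0 : ∀ i j, 0 ≤ P i j) (hP1 : ∀ i, ∑ j, P i j = 1)
    (hnb : ∀ i j, i ≠ j → P i j ≠ 0 → 2 ≤ w j)
    (c : Fin n) (k : ℕ) :
    2 * (∑ i, (P ^ k) i c) ≤ w c + 1 := by
  have hw0 : ∀ i, w i ≠ 0 := fun i => by linarith [hw1 i]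
  have hrevk := pow_rev P w hw0 hrev k
  by_cases hc : 2 ≤ w c
  · -- c has a neighbour: every vertex reachable from c has weight ≥ 2
    have key : ∀ i, (P ^ k) i c ≤ w c * (P ^ k) c i / 2 := by
      intro i
      have h := hrevk i c
      by_cases hz : (P ^ k) c i = 0
      · have : w i * (P ^ k) i c = 0 := by rw [h, hz, mul_zero]
        have : (P ^ k) i c = 0 := by
          rcases mul_eq_zero.1 this with h' | h'
          · exact absurd h' (hw0 i)
          · exact h'
        rw [this, hz]; simp
      · have hwi : 2 ≤ w i := by
          by_cases hic : i = c
          · subst hic; exact hc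
          · exact pow_support P w hnb k c i (Ne.symm hic) hz
        have hic : (P ^ k) i c = w c * (P ^ k) c i / w i := by
          field_simp
          linarith [h]
        rw [hic]
        apply div_le_div_of_nonneg_left _ (by norm_num) hwi
        · exact mul_nonneg (by linarith [hw1 c]) (pow_nonneg_apply P hP0 k c i)
    calc 2 * (∑ i, (P ^ k) i c) ≤ 2 * ∑ i, w c * (P ^ k) c i / 2 := by
          have := Finset.sum_le_sum (fun i (_ : i ∈ Finset.univ) => key i)
          linarith [this]
      _ = w c * ∑ i, (P ^ k) c i := by
          rw [Finset.mul_sum, Finset.mul_sum]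
          refine Finset.sum_congr rfl fun i _ => by ring
      _ = w c := by rw [pow_rowsum P hP1 k c, mul_one]
      _ ≤ w c + 1 := by linarith
  · -- w c < 2: column c of P is the unit vector `e c`, so colsum stays 1
    have hcol : ∀ j, j ≠ c → P j c = 0 := by
      intro j hjc
      by_contra h
      exact hc (hnb j c hjc h)
    have hPcc : P c c = 1 := by
      have := hP1 c
      have hrow : ∀ j, j ≠ c → P c j = 0 := by
        intro j hjc
        have h := hrev c j
        by_contra h0
        have h1 : w j * P j c ≠ 0 := by rw [← h]; exact mul_ne_zero (hw0 c) h0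
        have h2 : P j c ≠ 0 := fun hh => h1 (by rw [hh, mul_zero])
        exact h2 (hcol j hjc)
      calc P c c = ∑ j, P c j := by
            symm
            apply Finset.sum_eq_single_of_mem c (Finset.mem_univ c)
            intro j _ hjc; exact hrow j hjc
        _ = 1 := hP1 c
    have hcolk : ∑ i, (P ^ k) i c = 1 := by
      induction k with
      | zero => simp [Matrix.one_apply]
      | succ k ihk =>
          have hrevk' := pow_rev P w hw0 hrev k
          simp only [pow_succ, Matrix.mul_apply]
          rw [Finset.sum_comm]
          calc ∑ l, ∑ i, (P ^ k) i l * P l c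
              = ∑ l, (∑ i, (P ^ k) i l) * P l c := by
                simp [Finset.sum_mul]
            _ = (∑ i, (P ^ k) i c) * P c c := by
                apply Finset.sum_eq_single_of_mem c (Finset.mem_univ c)
                intro l _ hlc; rw [hcol l hlc, mul_zero]
            _ = 1 := by rw [ihk hrevk', hPcc, mul_one]
    rw [hcolk]
    linarith [hw1 c]

/-- L1 bound for a product `S * D` when `D` is supported on two rows. -/
lemma L_two_rows (S D : Matrix (Fin n) (Fin n) ℝ) (a b : Fin n) (hab : a ≠ b)
    (hS0 : ∀ i j, 0 ≤ S i j)
    (hD : ∀ i, i ≠ a → i ≠ b → ∀ j, D i j = 0) :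
    L (S * D) ≤ (∑ i, S i a) * (∑ j, |D a j|) + (∑ i, S i b) * (∑ j, |D b j|) := by
  unfold L
  calc ∑ i, ∑ j, |(S * D) i j|
      ≤ ∑ i, ∑ j, (S i a * |D a j| + S i b * |D b j|) := by
        refine Finset.sum_le_sum fun i _ => Finset.sum_le_sum fun j _ => ?_
        rw [Matrix.mul_apply]
        have hsum : ∑ l, S i l * D l j = S i a * D a j + S i b * D b j :=
          Finset.sum_eq_add_of_mem a b (Finset.mem_univ a) (Finset.mem_univ b) hab
            fun c _ hc => by rw [hD c hc.1 hc.2 j, mul_zero]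
        rw [hsum]
        calc |S i a * D a j + S i b * D b j|
            ≤ |S i a * D a j| + |S i b * D b j| := abs_add_le _ _
          _ = S i a * |D a j| + S i b * |D b j| := by
              rw [abs_mul, abs_mul, abs_of_nonneg (hS0 i a), abs_of_nonneg (hS0 i b)]
    _ = (∑ i, S i a) * (∑ j, |D a j|) + (∑ i, S i b) * (∑ j, |D b j|) := by
        rw [Finset.sum_mul, Finset.sum_mul, ← Finset.sum_add_distrib]
        refine Finset.sum_congr rfl fun i _ => ?_
        rw [Finset.sum_add_distrib, ← Finset.mul_sum, ← Finset.mul_sum]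

end ApprSens

namespace ApprSens2
lemma L_add_le {n : ℕ} (M N : Matrix (Fin n) (Fin n) ℝ) :
    (∑ i, ∑ j, |(M + N) i j|) ≤ (∑ i, ∑ j, |M i j|) + ∑ i, ∑ j, |N i j| := by
  rw [← Finset.sum_add_distrib]
  refine Finset.sum_le_sum fun i _ => ?_
  rw [← Finset.sum_add_distrib]
  exact Finset.sum_le_sum fun j _ => by simpa [Matrix.add_apply] using abs_add_le (M i j) (N i j)

lemma geom (α : ℝ) (m : ℕ) :
    α * (∑ k ∈ Finset.range m, (1-α)^k * (2*k)) + (1-α)^m * (2*m)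
      = 2 * ∑ k ∈ Finset.range m, (1-α)^(k+1) := by
  induction m with
  | zero => simp
  | succ m ih =>
      rw [Finset.sum_range_succ, Finset.sum_range_succ]
      push_cast
      ring_nf
      ring_nf at ih
      linear_combination ih

lemma geom2 (α : ℝ) (hα0 : α ≠ 0) (m : ℕ) :
    2 * ∑ k ∈ Finset.range m, (1-α)^(k+1)
      = (2 * (1 - α) / α) * (1 - (1 - α) ^ m) := by
  have h1 : (1 - α : ℝ) ≠ 1 := by intro h; apply hα0; linarith
  have : ∑ k ∈ Finset.range m, (1-α)^(k+1) = (1-α) * ∑ k ∈ Finset.range m, (1-α)^k := by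
    rw [Finset.mul_sum]; exact Finset.sum_congr rfl fun k _ => by ring
  rw [this, geom_sum_eq h1]
  field_simp
  ring_nf

-- row bound via Euclidean space
lemma row_bound {n d : ℕ} (c : Fin n → ℝ) (X : Matrix (Fin n) (Fin d) ℝ)
    (hX : ∀ i, Real.sqrt (∑ j, (X i j) ^ 2) ≤ 1) :
    Real.sqrt (∑ j, (∑ l, c l * X l j) ^ 2) ≤ ∑ l, |c l| := by
  classical
  set x : Fin n → EuclideanSpace ℝ (Fin d) := fun l => WithLp.toLp 2 (fun j => X l j) with hx
  have hnx : ∀ l, ‖x l‖ ≤ 1 := by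
    intro l
    rw [EuclideanSpace.norm_eq]
    simpa [Real.norm_eq_abs, sq_abs] using hX l
  have hy : Real.sqrt (∑ j, (∑ l, c l * X l j) ^ 2) = ‖∑ l, c l • x l‖ := by
    rw [EuclideanSpace.norm_eq]
    congr 1
    refine Finset.sum_congr rfl fun j _ => ?_
    have : (∑ l, c l • x l) j = ∑ l, c l * X l j := by
      clear_value x
      subst hx
      induction (Finset.univ : Finset (Fin n)) using Finset.induction with
      | empty => simp
      | insert _ _ h ih =>
          rw [Finset.sum_insert h, Finset.sum_insert h, ← ih]
          rfl
    rw [this, Real.norm_eq_abs, sq_abs]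
  rw [hy]
  calc ‖∑ l, c l • x l‖ ≤ ∑ l, ‖c l • x l‖ := norm_sum_le _ _
    _ ≤ ∑ l, |c l| := by
        refine Finset.sum_le_sum fun l _ => ?_
        rw [norm_smul, Real.norm_eq_abs]
        calc |c l| * ‖x l‖ ≤ |c l| * 1 := by
              exact mul_le_mul_of_nonneg_left (hnx l) (abs_nonneg _)
          _ = |c l| := mul_one _
end ApprSens2

open ApprSens ApprSens2

/-- Edge-removal sensitivity of the APPR aggregate features
`Z_m = R_m X` with `R_m = α ∑_{i<m} (1-α)^i Ã^i + (1-α)^m Ã^m` (and `R_0 = I`):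
if the symmetric 0/1 adjacency matrices `A` and `A'` (zero diagonal) differ
exactly by removing the single edge `{a, b}`, and each row of `X` has
Euclidean norm at most 1, then `∑ᵢ ‖(Z_m')ᵢ − (Z_m)ᵢ‖₂ ≤ (2(1-α)/α)(1-(1-α)^m)`. -/
theorem appr_aggregate_sensitivity {n d : ℕ}
    (A A' : Matrix (Fin n) (Fin n) ℝ)
    (h01 : ∀ i j, A i j = 0 ∨ A i j = 1)
    (h01' : ∀ i j, A' i j = 0 ∨ A' i j = 1)
    (hsymm : A.IsSymm) (hsymm' : A'.IsSymm)
    (hdiag : ∀ i, A i i = 0) (hdiag' : ∀ i, A' i i = 0)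
    (a b : Fin n) (hab : a ≠ b)
    (hEdge : A a b = 1) (hEdge2 : A b a = 1)
    (hEdge' : A' a b = 0) (hEdge2' : A' b a = 0)
    (hagree : ∀ i j, ¬((i = a ∧ j = b) ∨ (i = b ∧ j = a)) → A' i j = A i j)
    (α : ℝ) (hα : α ∈ Set.Ioo (0 : ℝ) 1)
    (X : Matrix (Fin n) (Fin d) ℝ)
    (hX : ∀ i, Real.sqrt (∑ j, (X i j) ^ 2) ≤ 1)
    (m : ℕ) :
    let Atil : Matrix (Fin n) (Fin n) ℝ :=
      (Matrix.diagonal (fun i => ∑ k, (A + 1) i k))⁻¹ * (A + 1)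
    let Atil' : Matrix (Fin n) (Fin n) ℝ :=
      (Matrix.diagonal (fun i => ∑ k, (A' + 1) i k))⁻¹ * (A' + 1)
    let Rm : Matrix (Fin n) (Fin n) ℝ :=
      α • (∑ i ∈ Finset.range m, (1 - α) ^ i • Atil ^ i) + (1 - α) ^ m • Atil ^ m
    let Rm' : Matrix (Fin n) (Fin n) ℝ :=
      α • (∑ i ∈ Finset.range m, (1 - α) ^ i • Atil' ^ i) + (1 - α) ^ m • Atil' ^ m
    ∑ i, Real.sqrt (∑ j, ((Rm' * X - Rm * X) i j) ^ 2)
      ≤ (2 * (1 - α) / α) * (1 - (1 - α) ^ m) := by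
  intro Atil Atil' Rm Rm'
  obtain ⟨hα0, hα1⟩ := hα
  have hα0' : α ≠ 0 := ne_of_gt hα0
  have hβ0 : (0:ℝ) ≤ 1 - α := by linarith
  -- basic entry facts
  have hsymA' : ∀ i j, A' i j = A' j i := fun i j => (Matrix.IsSymm.apply hsymm' j i)
  have hA0 : ∀ i j, (0:ℝ) ≤ (A + 1) i j := by
    intro i j
    rcases h01 i j with h | h <;>
      simp [Matrix.add_apply, Matrix.one_apply, h] <;> positivity
  have hA0' : ∀ i j, (0:ℝ) ≤ (A' + 1) i j := by
    intro i j
    rcases h01' i j with h | h <;>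
      simp [Matrix.add_apply, Matrix.one_apply, h] <;> positivity
  have hAdd : ∀ i, (A + 1) i i = 1 := by
    intro i; simp [Matrix.add_apply, Matrix.one_apply, hdiag i]
  have hAdd' : ∀ i, (A' + 1) i i = 1 := by
    intro i; simp [Matrix.add_apply, Matrix.one_apply, hdiag' i]
  have hd1 : ∀ i, (1:ℝ) ≤ ∑ k, (A + 1) i k := by
    intro i
    calc (1:ℝ) = (A + 1) i i := (hAdd i).symm
      _ ≤ ∑ k, (A + 1) i k :=
        Finset.single_le_sum (fun k _ => hA0 i k) (Finset.mem_univ i)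
  have hd1' : ∀ i, (1:ℝ) ≤ ∑ k, (A' + 1) i k := by
    intro i
    calc (1:ℝ) = (A' + 1) i i := (hAdd' i).symm
      _ ≤ ∑ k, (A' + 1) i k :=
        Finset.single_le_sum (fun k _ => hA0' i k) (Finset.mem_univ i)
  have hdne : ∀ i, (∑ k, (A + 1) i k) ≠ 0 := fun i => by linarith [hd1 i]
  have hdne' : ∀ i, (∑ k, (A' + 1) i k) ≠ 0 := fun i => by linarith [hd1' i]
  -- entries of the normalized matrices
  have hinv : (Matrix.diagonal (fun i => ∑ k, (A + 1) i k))⁻¹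
      = Matrix.diagonal (fun i => (∑ k, (A + 1) i k)⁻¹) := by
    apply Matrix.inv_eq_right_inv
    rw [Matrix.diagonal_mul_diagonal]
    have : (fun i => (∑ k, (A + 1) i k) * (∑ k, (A + 1) i k)⁻¹) = fun _ => (1:ℝ) := by
      funext i; exact mul_inv_cancel₀ (hdne i)
    rw [this, Matrix.diagonal_one]
  have hinv' : (Matrix.diagonal (fun i => ∑ k, (A' + 1) i k))⁻¹
      = Matrix.diagonal (fun i => (∑ k, (A' + 1) i k)⁻¹) := by
    apply Matrix.inv_eq_right_inv
    rw [Matrix.diagonal_mul_diagonal]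
    have : (fun i => (∑ k, (A' + 1) i k) * (∑ k, (A' + 1) i k)⁻¹) = fun _ => (1:ℝ) := by
      funext i; exact mul_inv_cancel₀ (hdne' i)
    rw [this, Matrix.diagonal_one]
  have hT : ∀ i j, Atil i j = (∑ k, (A + 1) i k)⁻¹ * (A + 1) i j := by
    intro i j
    show ((Matrix.diagonal (fun i => ∑ k, (A + 1) i k))⁻¹ * (A + 1)) i j = _
    rw [hinv, Matrix.diagonal_mul]
  have hT' : ∀ i j, Atil' i j = (∑ k, (A' + 1) i k)⁻¹ * (A' + 1) i j := by
    intro i j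
    show ((Matrix.diagonal (fun i => ∑ k, (A' + 1) i k))⁻¹ * (A' + 1)) i j = _
    rw [hinv', Matrix.diagonal_mul]
  have hT0 : ∀ i j, 0 ≤ Atil i j := by
    intro i j; rw [hT i j]
    exact mul_nonneg (inv_nonneg.2 (by linarith [hd1 i])) (hA0 i j)
  have hT0' : ∀ i j, 0 ≤ Atil' i j := by
    intro i j; rw [hT' i j]
    exact mul_nonneg (inv_nonneg.2 (by linarith [hd1' i])) (hA0' i j)
  have hT1 : ∀ i, ∑ j, Atil i j = 1 := by
    intro i
    calc ∑ j, Atil i j = (∑ k, (A + 1) i k)⁻¹ * ∑ j, (A + 1) i j := by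
          rw [Finset.mul_sum]; exact Finset.sum_congr rfl fun j _ => hT i j
      _ = 1 := inv_mul_cancel₀ (hdne i)
  have hT1' : ∀ i, ∑ j, Atil' i j = 1 := by
    intro i
    calc ∑ j, Atil' i j = (∑ k, (A' + 1) i k)⁻¹ * ∑ j, (A' + 1) i j := by
          rw [Finset.mul_sum]; exact Finset.sum_congr rfl fun j _ => hT' i j
      _ = 1 := inv_mul_cancel₀ (hdne' i)
  -- reversibility for Atil'
  have hrev : ∀ i j, (∑ k, (A' + 1) i k) * Atil' i j
      = (∑ k, (A' + 1) j k) * Atil' j i := by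
    intro i j
    rw [hT' i j, hT' j i, mul_inv_cancel_left₀ (hdne' i), mul_inv_cancel_left₀ (hdne' j)]
    by_cases h : i = j
    · subst h; rfl
    · simp [Matrix.add_apply, Matrix.one_apply, h, Ne.symm h, hsymA' i j]
  -- neighbours of supported vertices have degree ≥ 2
  have hnb : ∀ i j, i ≠ j → Atil' i j ≠ 0 → 2 ≤ ∑ k, (A' + 1) j k := by
    intro i j hij hne
    have hAij : A' i j = 1 := by
      rcases h01' i j with h | h
      · exfalso; apply hne
        rw [hT' i j]
        simp [Matrix.add_apply, Matrix.one_apply, hij, h]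
      · exact h
    have hAji : (A' + 1) j i = 1 := by
      simp [Matrix.add_apply, Matrix.one_apply, Ne.symm hij, hsymA' j i, hAij]
    calc (2:ℝ) = (A' + 1) j j + (A' + 1) j i := by rw [hAdd' j, hAji]; norm_num
      _ = ∑ k ∈ ({j, i} : Finset (Fin n)), (A' + 1) j k := by
          rw [Finset.sum_pair hij.symm]
      _ ≤ ∑ k, (A' + 1) j k := by
          apply Finset.sum_le_sum_of_subset_of_nonneg (Finset.subset_univ _)
          intro k _ _; exact hA0' j k
  -- degree relation at the endpoints of the removed edge
  have hentry_ab : ∀ k, (A + 1) a k = (A' + 1) a k + (if k = b then 1 else 0) := by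
    intro k
    by_cases h : k = b
    · subst h
      simp [Matrix.add_apply, Matrix.one_apply, hab, hEdge, hEdge']
    · have : A' a k = A a k := hagree a k (by
        rintro (⟨h1, h2⟩ | ⟨h1, h2⟩)
        · exact h h2
        · exact hab h1)
      simp [Matrix.add_apply, this, h]
  have hentry_ba : ∀ k, (A + 1) b k = (A' + 1) b k + (if k = a then 1 else 0) := by
    intro k
    by_cases h : k = a
    · subst h
      simp [Matrix.add_apply, Matrix.one_apply, hab.symm, hEdge2, hEdge2']
    · have : A' b k = A b k := hagree b k (by
        rintro (⟨h1, h2⟩ | ⟨h1, h2⟩)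
        · exact hab h1.symm
        · exact h h2)
      simp [Matrix.add_apply, this, h]
  have hda : ∑ k, (A + 1) a k = (∑ k, (A' + 1) a k) + 1 := by
    rw [Finset.sum_congr rfl fun k _ => hentry_ab k, Finset.sum_add_distrib]
    simp
  have hdb : ∑ k, (A + 1) b k = (∑ k, (A' + 1) b k) + 1 := by
    rw [Finset.sum_congr rfl fun k _ => hentry_ba k, Finset.sum_add_distrib]
    simp
  -- difference matrix is supported on rows a and b
  have hD0 : ∀ i, i ≠ a → i ≠ b → ∀ j, (Atil' - Atil) i j = 0 := by
    intro i hia hib j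
    have heq : ∀ k, (A' + 1) i k = (A + 1) i k := by
      intro k
      have : A' i k = A i k := hagree i k (by
        rintro (⟨h1, _⟩ | ⟨h1, _⟩)
        · exact hia h1
        · exact hib h1)
      simp [Matrix.add_apply, this]
    have hsum : (∑ k, (A' + 1) i k) = ∑ k, (A + 1) i k :=
      Finset.sum_congr rfl fun k _ => heq k
    rw [Matrix.sub_apply, hT' i j, hT i j, hsum, heq j, sub_self]
  -- L1 norm of a changed row
  have hrow_gen : ∀ c e : Fin n,
      (A + 1) c e = 1 → (A' + 1) c e = 0 →
      (∀ k, k ≠ e → (A' + 1) c k = (A + 1) c k) →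
      (∑ k, (A + 1) c k = (∑ k, (A' + 1) c k) + 1) →
      ∑ j, |(Atil' - Atil) c j| ≤ 2 * (∑ k, (A + 1) c k)⁻¹ := by
    intro c e h1 h0 hagr hdc
    set dc : ℝ := ∑ k, (A + 1) c k with hdcdef
    set dc' : ℝ := ∑ k, (A' + 1) c k with hdcdef'
    have hdc1 : (1:ℝ) ≤ dc' := hd1' c
    have hdcpos : (0:ℝ) < dc := by rw [hdc]; linarith
    have hdc'pos : (0:ℝ) < dc' := by linarith
    have hmono : (0:ℝ) ≤ (dc')⁻¹ - dc⁻¹ := by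
      have h2 : dc⁻¹ ≤ (dc')⁻¹ := by
        apply inv_anti₀ hdc'pos
        rw [hdc]; linarith
      linarith
    have hterm : ∀ j, j ≠ e → |(Atil' - Atil) c j| = (A + 1) c j * ((dc')⁻¹ - dc⁻¹) := by
      intro j hj
      rw [Matrix.sub_apply, hT' c j, hT c j, ← hdcdef, ← hdcdef', hagr j hj]
      rw [abs_of_nonneg]
      · ring
      · have := hA0 c j
        nlinarith
    have hterme : |(Atil' - Atil) c e| = dc⁻¹ := by
      rw [Matrix.sub_apply, hT' c e, hT c e, ← hdcdef, ← hdcdef', h1, h0, mul_zero, mul_one,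
        zero_sub, abs_neg, abs_of_nonneg (by positivity)]
    have hsplit : ∑ j, |(Atil' - Atil) c j|
        = (∑ j ∈ Finset.univ.erase e, (A + 1) c j) * ((dc')⁻¹ - dc⁻¹) + dc⁻¹ := by
      rw [← Finset.sum_erase_add _ _ (Finset.mem_univ e), hterme, Finset.sum_mul]
      congr 1
      exact Finset.sum_congr rfl fun j hj => hterm j (Finset.ne_of_mem_erase hj)
    have hsum_erase : ∑ j ∈ Finset.univ.erase e, (A + 1) c j = dc' := by
      have h2 := Finset.sum_erase_add Finset.univ (fun j => (A + 1) c j) (Finset.mem_univ e)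
      simp only [h1] at h2
      rw [← hdcdef] at h2
      linarith [h2, hdc]
    rw [hsplit, hsum_erase]
    have hddinv : dc * dc⁻¹ = 1 := mul_inv_cancel₀ (ne_of_gt hdcpos)
    have hdd'inv : dc' * (dc')⁻¹ = 1 := mul_inv_cancel₀ (ne_of_gt hdc'pos)
    have hdd : dc' = dc - 1 := by rw [hdc]; ring
    have : dc' * ((dc')⁻¹ - dc⁻¹) + dc⁻¹ = 2 * dc⁻¹ := by
      rw [mul_sub, hdd'inv, hdd]
      have : (dc - 1) * dc⁻¹ = 1 - dc⁻¹ := by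
        rw [sub_mul, hddinv]; ring
      rw [this]; ring
    linarith [this]
  -- per-step increment bound
  have hstep : ∀ k : ℕ, L (Atil' ^ k * (Atil' - Atil)) ≤ 2 := by
    intro k
    have h2r := L_two_rows (Atil' ^ k) (Atil' - Atil) a b hab
      (pow_nonneg_apply Atil' hT0' k) hD0
    have hcs := colsum_bound Atil' (fun i => ∑ kk, (A' + 1) i kk) hd1' hrev hT0' hT1' hnb
    have hgen : ∀ c e : Fin n,
        (A + 1) c e = 1 → (A' + 1) c e = 0 →
        (∀ kk, kk ≠ e → (A' + 1) c kk = (A + 1) c kk) →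
        (∑ kk, (A + 1) c kk = (∑ kk, (A' + 1) c kk) + 1) →
        (∑ i, (Atil' ^ k) i c) * (∑ j, |(Atil' - Atil) c j|) ≤ 1 := by
      intro c e h1 h0 hagr hdc
      have hrow := hrow_gen c e h1 h0 hagr hdc
      have hcol := hcs c k
      have hcolnn : 0 ≤ ∑ i, (Atil' ^ k) i c :=
        Finset.sum_nonneg fun i _ => pow_nonneg_apply Atil' hT0' k i c
      have hrownn : 0 ≤ ∑ j, |(Atil' - Atil) c j| :=
        Finset.sum_nonneg fun j _ => abs_nonneg _
      have hdpos : (0:ℝ) < ∑ kk, (A + 1) c kk := by linarith [hd1 c]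
      have hinvpos : (0:ℝ) ≤ (∑ kk, (A + 1) c kk)⁻¹ := by positivity
      calc (∑ i, (Atil' ^ k) i c) * (∑ j, |(Atil' - Atil) c j|)
          ≤ (∑ i, (Atil' ^ k) i c) * (2 * (∑ kk, (A + 1) c kk)⁻¹) :=
            mul_le_mul_of_nonneg_left hrow hcolnn
        _ ≤ ((∑ kk, (A + 1) c kk) / 2) * (2 * (∑ kk, (A + 1) c kk)⁻¹) := by
            apply mul_le_mul_of_nonneg_right _ (by positivity)
            rw [hdc]; linarith [hcol]
        _ = (∑ kk, (A + 1) c kk) * (∑ kk, (A + 1) c kk)⁻¹ := by ring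
        _ = 1 := mul_inv_cancel₀ (ne_of_gt hdpos)
    have hga : (∑ i, (Atil' ^ k) i a) * (∑ j, |(Atil' - Atil) a j|) ≤ 1 := by
      refine hgen a b ?_ ?_ (fun kk hkk => ?_) hda
      · simp [Matrix.add_apply, Matrix.one_apply, hab, hEdge]
      · simp [Matrix.add_apply, Matrix.one_apply, hab, hEdge']
      · have h3 := hentry_ab kk
        rw [if_neg hkk] at h3
        linarith
    have hgb : (∑ i, (Atil' ^ k) i b) * (∑ j, |(Atil' - Atil) b j|) ≤ 1 := by
      refine hgen b a ?_ ?_ (fun kk hkk => ?_) hdb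
      · simp [Matrix.add_apply, Matrix.one_apply, hab.symm, hEdge2]
      · simp [Matrix.add_apply, Matrix.one_apply, hab.symm, hEdge2']
      · have h3 := hentry_ba kk
        rw [if_neg hkk] at h3
        linarith
    linarith [h2r]
  -- powers differ by at most 2k in entrywise L1
  have hpowdiff : ∀ k : ℕ, L (Atil' ^ k - Atil ^ k) ≤ 2 * (k : ℝ) := by
    intro k
    induction k with
    | zero => simp [L]
    | succ k ih =>
        have hrw : Atil' ^ (k+1) - Atil ^ (k+1)
            = (Atil' ^ k - Atil ^ k) * Atil + Atil' ^ k * (Atil' - Atil) := by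
          rw [pow_succ, pow_succ]
          noncomm_ring
        rw [hrw]
        calc L ((Atil' ^ k - Atil ^ k) * Atil + Atil' ^ k * (Atil' - Atil))
            ≤ L ((Atil' ^ k - Atil ^ k) * Atil) + L (Atil' ^ k * (Atil' - Atil)) := by
              simpa [L] using ApprSens2.L_add_le ((Atil' ^ k - Atil ^ k) * Atil) (Atil' ^ k * (Atil' - Atil))
          _ ≤ L (Atil' ^ k - Atil ^ k) + 2 := by
              have := L_mul_le (Atil' ^ k - Atil ^ k) Atil hT0 hT1
              linarith [hstep k]
          _ ≤ 2 * ((k:ℝ) + 1) := by push_cast; linarith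
          _ = 2 * ((k+1 : ℕ) : ℝ) := by push_cast; ring
  -- entrywise decomposition of Rm' - Rm
  have hsplitsum : ∀ (M M' : Matrix (Fin n) (Fin n) ℝ) (i j : Fin n),
      ∑ k ∈ Finset.range m, (1-α) ^ k * ((M' ^ k - M ^ k) i j)
        = (∑ k ∈ Finset.range m, (1-α) ^ k * (M' ^ k) i j)
          - ∑ k ∈ Finset.range m, (1-α) ^ k * (M ^ k) i j := by
    intro M M' i j
    rw [← Finset.sum_sub_distrib]
    refine Finset.sum_congr rfl fun k _ => ?_
    rw [Matrix.sub_apply]; ring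
  have hentry : ∀ i j, (Rm' - Rm) i j
      = α * (∑ k ∈ Finset.range m, (1-α) ^ k * ((Atil' ^ k - Atil ^ k) i j))
        + (1-α) ^ m * ((Atil' ^ m - Atil ^ m) i j) := by
    intro i j
    show (α • (∑ k ∈ Finset.range m, (1 - α) ^ k • Atil' ^ k) + (1 - α) ^ m • Atil' ^ m
        - (α • (∑ k ∈ Finset.range m, (1 - α) ^ k • Atil ^ k) + (1 - α) ^ m • Atil ^ m)) i j = _
    rw [hsplitsum Atil Atil' i j]
    simp only [Matrix.sub_apply, Matrix.add_apply, Matrix.smul_apply, Matrix.sum_apply,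
      smul_eq_mul]
    ring
  -- L1 bound on Rm' - Rm
  have hLbound : L (Rm' - Rm)
      ≤ α * (∑ k ∈ Finset.range m, (1-α) ^ k * (2 * (k:ℝ))) + (1-α) ^ m * (2 * (m:ℝ)) := by
    have hswap : ∀ (F : ℕ → Matrix (Fin n) (Fin n) ℝ),
        ∑ i, ∑ j, ∑ k ∈ Finset.range m, (1-α) ^ k * |F k i j|
          = ∑ k ∈ Finset.range m, (1-α) ^ k * ∑ i, ∑ j, |F k i j| := by
      intro F
      calc ∑ i, ∑ j, ∑ k ∈ Finset.range m, (1-α) ^ k * |F k i j|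
          = ∑ i, ∑ k ∈ Finset.range m, ∑ j, (1-α) ^ k * |F k i j| :=
            Finset.sum_congr rfl fun i _ => Finset.sum_comm
        _ = ∑ k ∈ Finset.range m, ∑ i, ∑ j, (1-α) ^ k * |F k i j| := Finset.sum_comm
        _ = ∑ k ∈ Finset.range m, (1-α) ^ k * ∑ i, ∑ j, |F k i j| := by
            refine Finset.sum_congr rfl fun k _ => ?_
            simp [Finset.mul_sum]
    have h1 : L (Rm' - Rm)
        ≤ α * (∑ k ∈ Finset.range m, (1-α) ^ k * L (Atil' ^ k - Atil ^ k))
          + (1-α) ^ m * L (Atil' ^ m - Atil ^ m) := by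
      unfold L
      calc ∑ i, ∑ j, |(Rm' - Rm) i j|
          ≤ ∑ i, ∑ j, (α * (∑ k ∈ Finset.range m, (1-α) ^ k * |(Atil' ^ k - Atil ^ k) i j|)
              + (1-α) ^ m * |(Atil' ^ m - Atil ^ m) i j|) := by
            refine Finset.sum_le_sum fun i _ => Finset.sum_le_sum fun j _ => ?_
            rw [hentry i j]
            refine (abs_add_le _ _).trans ?_
            have ht1 : |α * (∑ k ∈ Finset.range m, (1-α) ^ k * ((Atil' ^ k - Atil ^ k) i j))|
                ≤ α * (∑ k ∈ Finset.range m, (1-α) ^ k * |(Atil' ^ k - Atil ^ k) i j|) := by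
              rw [abs_mul, abs_of_nonneg (le_of_lt hα0)]
              apply mul_le_mul_of_nonneg_left _ (le_of_lt hα0)
              refine (Finset.abs_sum_le_sum_abs _ _).trans ?_
              refine Finset.sum_le_sum fun k _ => ?_
              rw [abs_mul, abs_of_nonneg (pow_nonneg hβ0 k)]
            have ht2 : |(1-α) ^ m * ((Atil' ^ m - Atil ^ m) i j)|
                ≤ (1-α) ^ m * |(Atil' ^ m - Atil ^ m) i j| := by
              rw [abs_mul, abs_of_nonneg (pow_nonneg hβ0 m)]
            linarith
        _ = α * (∑ i, ∑ j, ∑ k ∈ Finset.range m, (1-α) ^ k * |(Atil' ^ k - Atil ^ k) i j|)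
              + (1-α) ^ m * (∑ i, ∑ j, |(Atil' ^ m - Atil ^ m) i j|) := by
            rw [Finset.mul_sum, Finset.mul_sum, ← Finset.sum_add_distrib]
            refine Finset.sum_congr rfl fun i _ => ?_
            rw [Finset.mul_sum, Finset.mul_sum, ← Finset.sum_add_distrib]
        _ = α * (∑ k ∈ Finset.range m, (1-α) ^ k * L (Atil' ^ k - Atil ^ k))
              + (1-α) ^ m * L (Atil' ^ m - Atil ^ m) := by
            rw [hswap (fun k => Atil' ^ k - Atil ^ k)]
            rfl
    have t1 : ∑ k ∈ Finset.range m, (1-α) ^ k * L (Atil' ^ k - Atil ^ k)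
        ≤ ∑ k ∈ Finset.range m, (1-α) ^ k * (2 * (k:ℝ)) :=
      Finset.sum_le_sum fun k _ =>
        mul_le_mul_of_nonneg_left (hpowdiff k) (pow_nonneg hβ0 k)
    have t2 := mul_le_mul_of_nonneg_left t1 (le_of_lt hα0)
    have t3 := mul_le_mul_of_nonneg_left (hpowdiff m) (pow_nonneg hβ0 m)
    linarith
  -- conclusion
  calc ∑ i, Real.sqrt (∑ j, ((Rm' * X - Rm * X) i j) ^ 2)
      = ∑ i, Real.sqrt (∑ j, (∑ l, (Rm' - Rm) i l * X l j) ^ 2) := by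
        refine Finset.sum_congr rfl fun i _ => ?_
        congr 1
        refine Finset.sum_congr rfl fun j _ => ?_
        rw [← Matrix.sub_mul, Matrix.mul_apply]
    _ ≤ ∑ i, ∑ l, |(Rm' - Rm) i l| :=
        Finset.sum_le_sum fun i _ => ApprSens2.row_bound _ X hX
    _ = L (Rm' - Rm) := rfl
    _ ≤ α * (∑ k ∈ Finset.range m, (1-α) ^ k * (2 * (k:ℝ))) + (1-α) ^ m * (2 * (m:ℝ)) :=
        hLbound
    _ = 2 * ∑ k ∈ Finset.range m, (1-α) ^ (k+1) := ApprSens2.geom α m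
    _ = (2 * (1 - α) / α) * (1 - (1 - α) ^ m) := ApprSens2.geom2 α hα0' m
end

section
/- Let n ≥ 2 and let A, A' ∈ {0,1}^{n×n} be symmetric adjacency matrices with zero diagonal that agree in all entries except that A_{12} = A_{21} = 1 while A'_{12} = A'_{21} = 0. Let Ã = D⁻¹(A+I) and Ã' = D'⁻¹(A'+I) be the row-normalized adjacency matrices with self-loops, let α ∈ (0,1), and set R_∞ = α(I − (1−α)Ã)⁻¹ and R_∞' = α(I − (1−α)Ã')⁻¹. Let X ∈ ℝ^{n×d} have every row of Euclidean norm at most 1. Then the sum over i = 1,…,n of the Euclidean norms of the i-th rows of R_∞' X − R_∞ X is at most 2(1−α)/α. -/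
open Matrix

set_option maxHeartbeats 1000000
set_option synthInstance.maxHeartbeats 400000

attribute [local instance] Matrix.linftyOpNormedRing Matrix.linftyOpNormedAlgebra
  Matrix.linftyOpNormedSpace

private lemma ppr_inv_entry_nonneg {n : ℕ} (P : Matrix (Fin n) (Fin n) ℝ)
    (hP : ∀ i j, 0 ≤ P i j) (hrow : ∀ i, ∑ j, P i j = 1)
    {γ : ℝ} (h0 : 0 ≤ γ) (h1 : γ < 1) :
    IsUnit (1 - γ • P) ∧ ∀ i j, 0 ≤ ((1 - γ • P)⁻¹) i j := by
  haveI : CompleteSpace (Matrix (Fin n) (Fin n) ℝ) := FiniteDimensional.complete ℝ _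
  set B : Matrix (Fin n) (Fin n) ℝ := γ • P with hB
  have hBnn : ∀ i j, 0 ≤ B i j := fun i j => by
    simpa [hB] using mul_nonneg h0 (hP i j)
  have hpow : ∀ k i j, 0 ≤ (B ^ k) i j := by
    intro k
    induction k with
    | zero => intro i j; simp [Matrix.one_apply]; positivity
    | succ k ih =>
      intro i j
      rw [pow_succ, Matrix.mul_apply]
      exact Finset.sum_nonneg fun l _ => mul_nonneg (ih i l) (hBnn l j)
  have hnorm : ‖B‖ < 1 := by
    rw [Matrix.linfty_opNorm_def]
    have hlt : (Finset.univ.sup fun i => ∑ j, ‖B i j‖₊) < 1 := by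
      rcases Nat.eq_zero_or_pos n with hn | hn
      · subst hn; simp
      · rw [Finset.sup_lt_iff (by simp)]
        intro i _
        have h2 : ((∑ j, ‖B i j‖₊ : NNReal) : ℝ) < 1 := by
          push_cast
          have h3 : ∑ j, |B i j| = γ := by
            calc ∑ j, |B i j| = ∑ j, γ * P i j := by
                  refine Finset.sum_congr rfl fun j _ => ?_
                  rw [abs_of_nonneg (hBnn i j)]
                  simp [hB]
              _ = γ * ∑ j, P i j := by rw [Finset.mul_sum]
              _ = γ := by rw [hrow i, mul_one]
          simpa [h3] using h1
        exact_mod_cast h2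
    exact_mod_cast hlt
  have hsum : Summable (fun k => B ^ k) := summable_geometric_of_norm_lt_one hnorm
  have hmul : (1 - B) * (∑' k, B ^ k) = 1 := mul_neg_geom_series B hnorm
  have hmul2 : (∑' k, B ^ k) * (1 - B) = 1 := geom_series_mul_neg B hnorm
  have hu : IsUnit (1 - B) := ⟨⟨1 - B, ∑' k, B ^ k, hmul, hmul2⟩, rfl⟩
  refine ⟨hu, ?_⟩
  have hinv : (1 - B)⁻¹ = ∑' k, B ^ k := Matrix.inv_eq_right_inv hmul
  intro i j
  rw [hinv]
  have hentry : (∑' k, B ^ k) i j = ∑' k, (B ^ k) i j := by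
    let φ : Matrix (Fin n) (Fin n) ℝ →ₗ[ℝ] ℝ :=
      { toFun := fun M => M i j
        map_add' := fun M N => rfl
        map_smul' := fun c M => rfl }
    have := (LinearMap.toContinuousLinearMap φ).map_tsum hsum
    exact this
  rw [hentry]
  exact tsum_nonneg fun k => hpow k i j

private lemma ppr_row_norm_le {n d : ℕ} (c : Fin n → ℝ) (X : Matrix (Fin n) (Fin d) ℝ)
    (hX : ∀ q, Real.sqrt (∑ j, (X q j) ^ 2) ≤ 1) :
    Real.sqrt (∑ j, (∑ q, c q * X q j) ^ 2) ≤ ∑ q, |c q| := by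
  have hnorm : ∀ (v : EuclideanSpace ℝ (Fin d)), ‖v‖ = Real.sqrt (∑ j, (v j) ^ 2) := by
    intro v
    rw [EuclideanSpace.norm_eq]
    congr 1
    exact Finset.sum_congr rfl fun j _ => by rw [Real.norm_eq_abs, sq_abs]
  set F : Fin n → EuclideanSpace ℝ (Fin d) := fun q => WithLp.toLp 2 (X q) with hF
  have hrow : (fun j => ∑ q, c q * X q j) = ∑ q, c q • F q := by
    funext j
    rw [WithLp.ofLp_sum, Finset.sum_apply]
    exact Finset.sum_congr rfl fun q _ => rfl
  calc Real.sqrt (∑ j, (∑ q, c q * X q j) ^ 2)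
      = ‖(∑ q, c q • F q : EuclideanSpace ℝ (Fin d))‖ := by
        rw [hnorm]
        congr 1
        refine Finset.sum_congr rfl fun j _ => ?_
        congr 1
        exact congrFun hrow j
    _ ≤ ∑ q, ‖c q • F q‖ := norm_sum_le _ _
    _ ≤ ∑ q, |c q| := by
        refine Finset.sum_le_sum fun q _ => ?_
        rw [norm_smul, Real.norm_eq_abs]
        have h1 : ‖F q‖ ≤ 1 := by rw [hnorm]; exact hX q
        calc |c q| * ‖F q‖ ≤ |c q| * 1 := by
              exact mul_le_mul_of_nonneg_left h1 (abs_nonneg _)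
          _ = |c q| := mul_one _

/-- Edge-removal sensitivity of the PPR aggregate features `R_∞ X` with
`R_∞ = α (I − (1−α) Ã)⁻¹`: if the symmetric 0/1 adjacency matrices `A` and
`A'` (zero diagonal) differ exactly by removing the single edge `{a, b}`, and
each row of `X` has Euclidean norm at most 1, then
`∑ᵢ ‖(R_∞' X)ᵢ − (R_∞ X)ᵢ‖₂ ≤ 2(1−α)/α`. -/
theorem ppr_aggregate_sensitivity {n d : ℕ}
    (A A' : Matrix (Fin n) (Fin n) ℝ)
    (h01 : ∀ i j, A i j = 0 ∨ A i j = 1)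
    (h01' : ∀ i j, A' i j = 0 ∨ A' i j = 1)
    (hsymm : A.IsSymm) (hsymm' : A'.IsSymm)
    (hdiag : ∀ i, A i i = 0) (hdiag' : ∀ i, A' i i = 0)
    (a b : Fin n) (hab : a ≠ b)
    (hEdge : A a b = 1) (hEdge2 : A b a = 1)
    (hEdge' : A' a b = 0) (hEdge2' : A' b a = 0)
    (hagree : ∀ i j, ¬((i = a ∧ j = b) ∨ (i = b ∧ j = a)) → A' i j = A i j)
    (α : ℝ) (hα : α ∈ Set.Ioo (0 : ℝ) 1)
    (X : Matrix (Fin n) (Fin d) ℝ)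
    (hX : ∀ i, Real.sqrt (∑ j, (X i j) ^ 2) ≤ 1) :
    let Atil : Matrix (Fin n) (Fin n) ℝ :=
      (Matrix.diagonal (fun i => ∑ k, (A + 1) i k))⁻¹ * (A + 1)
    let Atil' : Matrix (Fin n) (Fin n) ℝ :=
      (Matrix.diagonal (fun i => ∑ k, (A' + 1) i k))⁻¹ * (A' + 1)
    let Rinf : Matrix (Fin n) (Fin n) ℝ :=
      α • ((1 : Matrix (Fin n) (Fin n) ℝ) - (1 - α) • Atil)⁻¹
    let Rinf' : Matrix (Fin n) (Fin n) ℝ :=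
      α • ((1 : Matrix (Fin n) (Fin n) ℝ) - (1 - α) • Atil')⁻¹
    ∑ i, Real.sqrt (∑ j, ((Rinf' * X - Rinf * X) i j) ^ 2)
      ≤ 2 * (1 - α) / α := by
  intro Atil Atil' Rinf Rinf'
  obtain ⟨hα0, hα1⟩ := hα
  have hαne : α ≠ 0 := ne_of_gt hα0
  set γ : ℝ := 1 - α with hγdef
  have hγ0 : 0 ≤ γ := by simp [hγdef]; linarith
  have hγ1 : γ < 1 := by simp [hγdef]; linarith
  -- basic notation
  set S : Matrix (Fin n) (Fin n) ℝ := A + 1 with hSdef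
  set S' : Matrix (Fin n) (Fin n) ℝ := A' + 1 with hS'def
  set dv : Fin n → ℝ := fun i => ∑ k, S i k with hdvdef
  set dv' : Fin n → ℝ := fun i => ∑ k, S' i k with hdv'def
  have hAnn : ∀ i j, (0:ℝ) ≤ A i j := fun i j => by rcases h01 i j with h | h <;> rw [h] <;> norm_num
  have hA'nn : ∀ i j, (0:ℝ) ≤ A' i j := fun i j => by rcases h01' i j with h | h <;> rw [h] <;> norm_num
  have hSentry : ∀ i j, S i j = A i j + (if i = j then (1:ℝ) else 0) := fun i j => by
    rw [hSdef, Matrix.add_apply, Matrix.one_apply]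
  have hS'entry : ∀ i j, S' i j = A' i j + (if i = j then (1:ℝ) else 0) := fun i j => by
    rw [hS'def, Matrix.add_apply, Matrix.one_apply]
  have hSnn : ∀ i j, (0:ℝ) ≤ S i j := fun i j => by
    rw [hSentry]; have := hAnn i j; split <;> linarith
  have hS'nn : ∀ i j, (0:ℝ) ≤ S' i j := fun i j => by
    rw [hS'entry]; have := hA'nn i j; split <;> linarith
  have hSdiag : ∀ i, S i i = 1 := fun i => by rw [hSentry, hdiag]; simp
  have hS'diag : ∀ i, S' i i = 1 := fun i => by rw [hS'entry, hdiag']; simp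
  have hdv1 : ∀ i, (1:ℝ) ≤ dv i := fun i => by
    rw [hdvdef]
    calc (1:ℝ) = S i i := (hSdiag i).symm
      _ ≤ ∑ k, S i k := Finset.single_le_sum (fun k _ => hSnn i k) (Finset.mem_univ i)
  have hdv'1 : ∀ i, (1:ℝ) ≤ dv' i := fun i => by
    rw [hdv'def]
    calc (1:ℝ) = S' i i := (hS'diag i).symm
      _ ≤ ∑ k, S' i k := Finset.single_le_sum (fun k _ => hS'nn i k) (Finset.mem_univ i)
  have hdvpos : ∀ i, (0:ℝ) < dv i := fun i => lt_of_lt_of_le one_pos (hdv1 i)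
  have hdv'pos : ∀ i, (0:ℝ) < dv' i := fun i => lt_of_lt_of_le one_pos (hdv'1 i)
  have hdvne : ∀ i, dv i ≠ 0 := fun i => ne_of_gt (hdvpos i)
  have hdv'ne : ∀ i, dv' i ≠ 0 := fun i => ne_of_gt (hdv'pos i)
  -- diagonal inverses
  have hDinv : (Matrix.diagonal dv)⁻¹ = Matrix.diagonal (fun i => (dv i)⁻¹) := by
    apply Matrix.inv_eq_right_inv
    rw [Matrix.diagonal_mul_diagonal]
    rw [show (fun i => dv i * (dv i)⁻¹) = fun _ => (1:ℝ) from funext fun i => mul_inv_cancel₀ (hdvne i)]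
    exact Matrix.diagonal_one
  have hDinv' : (Matrix.diagonal dv')⁻¹ = Matrix.diagonal (fun i => (dv' i)⁻¹) := by
    apply Matrix.inv_eq_right_inv
    rw [Matrix.diagonal_mul_diagonal]
    rw [show (fun i => dv' i * (dv' i)⁻¹) = fun _ => (1:ℝ) from funext fun i => mul_inv_cancel₀ (hdv'ne i)]
    exact Matrix.diagonal_one
  -- entries of Atil
  have hAtilE : ∀ i j, Atil i j = (dv i)⁻¹ * S i j := by
    intro i j
    show ((Matrix.diagonal (fun i => ∑ k, (A + 1) i k))⁻¹ * (A + 1)) i j = (dv i)⁻¹ * S i j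
    rw [show (fun i => ∑ k, (A + 1) i k) = dv from rfl, hDinv, Matrix.diagonal_mul]
  have hAtilE' : ∀ i j, Atil' i j = (dv' i)⁻¹ * S' i j := by
    intro i j
    show ((Matrix.diagonal (fun i => ∑ k, (A' + 1) i k))⁻¹ * (A' + 1)) i j = (dv' i)⁻¹ * S' i j
    rw [show (fun i => ∑ k, (A' + 1) i k) = dv' from rfl, hDinv', Matrix.diagonal_mul]
  have hAtil_nn : ∀ i j, 0 ≤ Atil i j := fun i j => by
    rw [hAtilE]; exact mul_nonneg (inv_nonneg.mpr (le_of_lt (hdvpos i))) (hSnn i j)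
  have hAtil'_nn : ∀ i j, 0 ≤ Atil' i j := fun i j => by
    rw [hAtilE']; exact mul_nonneg (inv_nonneg.mpr (le_of_lt (hdv'pos i))) (hS'nn i j)
  have hAtil_row : ∀ i, ∑ j, Atil i j = 1 := fun i => by
    rw [Finset.sum_congr rfl fun j _ => hAtilE i j, ← Finset.mul_sum]
    exact inv_mul_cancel₀ (hdvne i)
  have hAtil'_row : ∀ i, ∑ j, Atil' i j = 1 := fun i => by
    rw [Finset.sum_congr rfl fun j _ => hAtilE' i j, ← Finset.mul_sum]
    exact inv_mul_cancel₀ (hdv'ne i)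
  -- invertibility and nonnegativity of resolvents
  obtain ⟨hNu, hNinv_nn⟩ := ppr_inv_entry_nonneg Atil hAtil_nn hAtil_row hγ0 hγ1
  obtain ⟨hN'u, hN'inv_nn⟩ := ppr_inv_entry_nonneg Atil' hAtil'_nn hAtil'_row hγ0 hγ1
  set N : Matrix (Fin n) (Fin n) ℝ := 1 - γ • Atil with hNdef
  set N' : Matrix (Fin n) (Fin n) ℝ := 1 - γ • Atil' with hN'def
  have hNdet : IsUnit N.det := (Matrix.isUnit_iff_isUnit_det N).mp hNu
  have hN'det : IsUnit N'.det := (Matrix.isUnit_iff_isUnit_det N').mp hN'u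
  have hRdef : Rinf = α • N⁻¹ := rfl
  have hR'def : Rinf' = α • N'⁻¹ := rfl
  have hRE : ∀ i j, Rinf i j = α * N⁻¹ i j := fun i j => by
    rw [hRdef, Matrix.smul_apply, smul_eq_mul]
  have hR'E : ∀ i j, Rinf' i j = α * N'⁻¹ i j := fun i j => by
    rw [hR'def, Matrix.smul_apply, smul_eq_mul]
  have hR_nn : ∀ i j, 0 ≤ Rinf i j := fun i j => by
    rw [hRE]; exact mul_nonneg (le_of_lt hα0) (hNinv_nn i j)
  have hR'_nn : ∀ i j, 0 ≤ Rinf' i j := fun i j => by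
    rw [hR'E]; exact mul_nonneg (le_of_lt hα0) (hN'inv_nn i j)
  -- row sums of Rinf, Rinf'
  have hrowsum : ∀ (M : Matrix (Fin n) (Fin n) ℝ), (∀ i, ∑ j, M i j = 1) →
      ∀ (hMdet : IsUnit (1 - γ • M).det) (i : Fin n),
        ∑ q, (α • (1 - γ • M)⁻¹) i q = 1 := by
    intro M hMrow hMdet i
    have hone : (1 - γ • M) *ᵥ (fun _ => (1:ℝ)) = fun _ => α := by
      funext i'
      simp only [Matrix.mulVec, dotProduct, mul_one]
      rw [Finset.sum_congr rfl fun j _ => by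
        rw [Matrix.sub_apply, Matrix.smul_apply, smul_eq_mul]]
      rw [Finset.sum_sub_distrib, ← Finset.mul_sum, hMrow i']
      simp [Matrix.one_apply, hγdef]
    have h2 : (1 - γ • M)⁻¹ *ᵥ (fun _ => α) = fun _ => (1:ℝ) := by
      rw [← hone, Matrix.mulVec_mulVec, Matrix.nonsing_inv_mul _ hMdet, Matrix.one_mulVec]
    have h3 : (α • (1 - γ • M)⁻¹) *ᵥ (fun _ => (1:ℝ)) = fun _ => (1:ℝ) := by
      rw [Matrix.smul_mulVec]
      have h4 : (fun (_ : Fin n) => α) = α • (fun (_ : Fin n) => (1:ℝ)) := by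
        funext t; simp
      rw [h4] at h2
      rw [Matrix.mulVec_smul] at h2
      exact h2
    have h5 := congrFun h3 i
    simpa [Matrix.mulVec, dotProduct] using h5
  have hRrow : ∀ i, ∑ q, Rinf i q = 1 := fun i => by
    rw [hRdef]; exact hrowsum Atil hAtil_row hNdet i
  have hR'row : ∀ i, ∑ q, Rinf' i q = 1 := fun i => by
    rw [hR'def]; exact hrowsum Atil' hAtil'_row hN'det i
  -- resolvent identity
  have hNR : N * Rinf = α • (1 : Matrix (Fin n) (Fin n) ℝ) := by
    rw [hRdef, Matrix.mul_smul, Matrix.mul_nonsing_inv _ hNdet]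
  have hR'N' : Rinf' * N' = α • (1 : Matrix (Fin n) (Fin n) ℝ) := by
    rw [hR'def, Matrix.smul_mul, Matrix.nonsing_inv_mul _ hN'det]
  have hkey : Rinf' - Rinf = (γ / α) • (Rinf' * ((Atil' - Atil) * Rinf)) := by
    have e1 : Rinf' * ((N - N') * Rinf) = α • Rinf' - α • Rinf := by
      rw [Matrix.sub_mul, Matrix.mul_sub, hNR, ← Matrix.mul_assoc, hR'N']
      rw [Matrix.mul_smul, Matrix.mul_one, Matrix.smul_mul, Matrix.one_mul]
    have e2 : γ • (Atil' - Atil) = N - N' := by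
      rw [hNdef, hN'def, smul_sub]; abel
    have e3 : γ • (Rinf' * ((Atil' - Atil) * Rinf)) = α • (Rinf' - Rinf) := by
      rw [← Matrix.mul_smul, ← Matrix.smul_mul, e2, e1, smul_sub]
    calc Rinf' - Rinf = α⁻¹ • (α • (Rinf' - Rinf)) := by
          rw [smul_smul, inv_mul_cancel₀ hαne, one_smul]
      _ = α⁻¹ • (γ • (Rinf' * ((Atil' - Atil) * Rinf))) := by rw [e3]
      _ = (γ / α) • (Rinf' * ((Atil' - Atil) * Rinf)) := by
          rw [smul_smul, div_eq_mul_inv, mul_comm]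
    -- reversibility: dv' i * Rinf' i j = dv' j * Rinf' j i
  have hS'T : S'ᵀ = S' := by
    rw [hS'def, Matrix.transpose_add, Matrix.transpose_one, hsymm'.eq]
  set D' : Matrix (Fin n) (Fin n) ℝ := Matrix.diagonal dv' with hD'def
  have hD'Atil : D' * Atil' = S' := by
    ext i j
    rw [hD'def, Matrix.diagonal_mul, hAtilE', ← mul_assoc, mul_inv_cancel₀ (hdv'ne i), one_mul]
  have hN'T_D : N'ᵀ * D' = D' * N' := by
    have hr : D' * N' = D' - γ • S' := by
      rw [hN'def, Matrix.mul_sub, Matrix.mul_one, Matrix.mul_smul, hD'Atil]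
    have hD'T : D'ᵀ = D' := by rw [hD'def, Matrix.diagonal_transpose]
    have hAtD : Atil'ᵀ * D' = S' := by
      calc Atil'ᵀ * D' = Atil'ᵀ * D'ᵀ := by rw [hD'T]
        _ = (D' * Atil')ᵀ := (Matrix.transpose_mul _ _).symm
        _ = S'ᵀ := by rw [hD'Atil]
        _ = S' := hS'T
    have hl : N'ᵀ * D' = D' - γ • S' := by
      rw [hN'def, Matrix.transpose_sub, Matrix.transpose_one, Matrix.transpose_smul,
        Matrix.sub_mul, Matrix.one_mul, Matrix.smul_mul, hAtD]
    rw [hl, hr]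
  have hN'Tdet : IsUnit N'ᵀ.det := by rw [Matrix.det_transpose]; exact hN'det
  have hKsym : (D' * N'⁻¹)ᵀ = D' * N'⁻¹ := by
    have hstep : N'ᵀ * (D' * N'⁻¹) = D' := by
      rw [← Matrix.mul_assoc, hN'T_D, Matrix.mul_assoc, Matrix.mul_nonsing_inv _ hN'det,
        Matrix.mul_one]
    have h2 : D' * N'⁻¹ = N'ᵀ⁻¹ * D' := by
      calc D' * N'⁻¹ = N'ᵀ⁻¹ * (N'ᵀ * (D' * N'⁻¹)) := by
            rw [← Matrix.mul_assoc, Matrix.nonsing_inv_mul _ hN'Tdet, Matrix.one_mul]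
        _ = N'ᵀ⁻¹ * D' := by rw [hstep]
    calc (D' * N'⁻¹)ᵀ = (N'ᵀ⁻¹ * D')ᵀ := by rw [h2]
      _ = D'ᵀ * (N'ᵀ⁻¹)ᵀ := Matrix.transpose_mul _ _
      _ = D' * N'⁻¹ := by
          rw [← Matrix.transpose_nonsing_inv, Matrix.transpose_transpose, hD'def,
            Matrix.diagonal_transpose]
  have hrev : ∀ i j, dv' i * Rinf' i j = dv' j * Rinf' j i := by
    intro i j
    have h1 : (D' * N'⁻¹) j i = (D' * N'⁻¹) i j := by
      conv_lhs => rw [← hKsym]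
      rfl
    rw [hD'def, Matrix.diagonal_mul, Matrix.diagonal_mul] at h1
    rw [hR'E, hR'E]
    calc dv' i * (α * N'⁻¹ i j) = α * (dv' i * N'⁻¹ i j) := by ring
      _ = α * (dv' j * N'⁻¹ j i) := by rw [← h1]
      _ = dv' j * (α * N'⁻¹ j i) := by ring
  -- structure of degrees
  have hdv'alt : ∀ i, dv' i = 1 ∨ 2 ≤ dv' i := by
    intro i
    by_cases h : ∀ k, k ≠ i → S' i k = 0
    · left
      have h0 : dv' i = ∑ k, S' i k := rfl
      rw [h0, Finset.sum_eq_single i (fun k _ hk => h k hk) (by simp), hS'diag]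
    · right
      push_neg at h
      obtain ⟨k, hki, hk0⟩ := h
      have hk1 : S' i k = 1 := by
        rw [hS'entry, if_neg (fun hh => hki hh.symm), add_zero] at hk0 ⊢
        rcases h01' i k with h | h
        · exact absurd h hk0
        · exact h
      have hle : S' i i + S' i k ≤ ∑ r, S' i r := by
        rw [← Finset.sum_pair (fun hh => hki hh.symm : i ≠ k)]
        exact Finset.sum_le_sum_of_subset_of_nonneg (Finset.subset_univ _)
          (fun r _ _ => hS'nn i r)
      rw [hS'diag, hk1] at hle
      calc (2:ℝ) = 1 + 1 := by norm_num
        _ ≤ ∑ r, S' i r := hle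
        _ = dv' i := rfl
  -- isolated vertices: Rinf' p j = 0 if dv' j = 1 and p ≠ j
  have hiso : ∀ j, dv' j = 1 → ∀ p, p ≠ j → Rinf' p j = 0 := by
    intro j hj p hpj
    have hrow0 : ∀ k, k ≠ j → S' j k = 0 := by
      intro k hk
      have hsum : ∑ k ∈ Finset.univ.erase j, S' j k = 0 := by
        have h0 : dv' j = S' j j + ∑ k ∈ Finset.univ.erase j, S' j k := by
          rw [hdv'def]
          exact (Finset.add_sum_erase _ _ (Finset.mem_univ j)).symm
        rw [hj, hS'diag] at h0
        linarith
      exact (Finset.sum_eq_zero_iff_of_nonneg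
        (fun k _ => hS'nn j k)).mp hsum k (Finset.mem_erase.mpr ⟨hk, Finset.mem_univ k⟩)
    have hcol0 : ∀ k, k ≠ j → S' k j = 0 := by
      intro k hk
      have h0 : S' k j = S'ᵀ j k := rfl
      rw [h0, hS'T]
      exact hrow0 k hk
    have hmvs : ∀ (M : Matrix (Fin n) (Fin n) ℝ) (i : Fin n),
        (M *ᵥ Pi.single j 1) i = M i j := fun M i => by
      simp [Matrix.mulVec_single]
    have hAv : Atil' *ᵥ Pi.single j 1 = Pi.single j 1 := by
      funext i
      rw [hmvs]
      by_cases hij : i = j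
      · subst hij
        rw [hAtilE', hS'diag, Pi.single_eq_same, hj]
        norm_num
      · rw [hAtilE', hcol0 i hij, mul_zero, Pi.single_eq_of_ne hij]
    have hNv : N' *ᵥ Pi.single j 1 = α • (Pi.single j 1 : Fin n → ℝ) := by
      rw [hN'def, Matrix.sub_mulVec, Matrix.one_mulVec, Matrix.smul_mulVec, hAv]
      funext t
      simp only [Pi.sub_apply, Pi.smul_apply, smul_eq_mul]
      rw [hγdef]; ring
    have hNinvv : Rinf' *ᵥ Pi.single j 1 = Pi.single j 1 := by
      have h1 : N'⁻¹ *ᵥ (N' *ᵥ Pi.single j 1) = Pi.single j 1 := by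
        rw [Matrix.mulVec_mulVec, Matrix.nonsing_inv_mul _ hN'det, Matrix.one_mulVec]
      rw [hNv, Matrix.mulVec_smul] at h1
      rw [hR'def, Matrix.smul_mulVec, h1]
    have h2 := congrFun hNinvv p
    rw [hmvs] at h2
    rw [h2, Pi.single_eq_of_ne hpj]
  -- column sum bound
  have hcolsum : ∀ p, dv' p = dv p - 1 → 2 ≤ dv p → ∑ i, Rinf' i p ≤ dv p / 2 := by
    intro p hp hp2
    have step1 : ∑ i, Rinf' i p = dv' p * ∑ i, Rinf' p i * (dv' i)⁻¹ := by
      rw [Finset.mul_sum]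
      refine Finset.sum_congr rfl fun i _ => ?_
      have h1 : Rinf' i p = (dv' i)⁻¹ * (dv' i * Rinf' i p) := by
        rw [← mul_assoc, inv_mul_cancel₀ (hdv'ne i), one_mul]
      rw [h1, hrev i p]
      ring
    rcases hdv'alt p with hone | htwo
    · have hdp : dv p = 2 := by rw [hp] at hone; linarith
      rw [step1, hone, one_mul]
      have h3 : ∑ i, Rinf' p i * (dv' i)⁻¹ ≤ ∑ i, Rinf' p i := by
        refine Finset.sum_le_sum fun i _ => ?_
        calc Rinf' p i * (dv' i)⁻¹ ≤ Rinf' p i * 1 := by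
              refine mul_le_mul_of_nonneg_left ?_ (hR'_nn p i)
              exact inv_le_one_of_one_le₀ (hdv'1 i)
          _ = Rinf' p i := mul_one _
      rw [hR'row p] at h3
      rw [hdp]; linarith
    · have hb : ∑ i, Rinf' p i * (dv' i)⁻¹ ≤ 1 / 2 := by
        have h4 : ∑ i, Rinf' p i * (dv' i)⁻¹ ≤ ∑ i, Rinf' p i * (1/2) := by
          refine Finset.sum_le_sum fun i _ => ?_
          rcases hdv'alt i with h1 | h2
          · have hpi : p ≠ i := by
              intro hh; subst hh; rw [h1] at htwo; linarith
            rw [hiso i h1 p hpi, zero_mul, zero_mul]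
          · refine mul_le_mul_of_nonneg_left ?_ (hR'_nn p i)
            have h5 : ((2:ℝ))⁻¹ = 1/2 := by norm_num
            rw [← h5]
            exact inv_anti₀ (by norm_num) h2
        rw [← Finset.sum_mul, hR'row p, one_mul] at h4
        exact h4
      calc ∑ i, Rinf' i p = dv' p * ∑ i, Rinf' p i * (dv' i)⁻¹ := step1
        _ ≤ dv' p * (1/2) := mul_le_mul_of_nonneg_left hb (by linarith [hdv'pos p])
        _ ≤ dv p / 2 := by rw [hp]; linarith
    -- edge facts for a and b
  have hSab : S a b = 1 := by rw [hSentry, if_neg hab, add_zero, hEdge]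
  have hSba : S b a = 1 := by rw [hSentry, if_neg (Ne.symm hab), add_zero, hEdge2]
  have hS'ab : S' a b = 0 := by rw [hS'entry, if_neg hab, add_zero, hEdge']
  have hS'ba : S' b a = 0 := by rw [hS'entry, if_neg (Ne.symm hab), add_zero, hEdge2']
  have hSagree_a : ∀ r, r ≠ b → S' a r = S a r := by
    intro r hr
    rw [hSentry, hS'entry, hagree a r (by rintro (⟨-, h2⟩ | ⟨h1, -⟩); exact hr h2; exact hab h1)]
  have hSagree_b : ∀ r, r ≠ a → S' b r = S b r := by
    intro r hr
    rw [hSentry, hS'entry,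
      hagree b r (by rintro (⟨h1, -⟩ | ⟨-, h2⟩); exact hab h1.symm; exact hr h2)]
  -- generic row-difference computation
  have hErow : ∀ p q : Fin n, p ≠ q → S p q = 1 → S' p q = 0 →
      (∀ r, r ≠ q → S' p r = S p r) →
      dv' p = dv p - 1 ∧ 2 ≤ dv p ∧ (∑ r, |Atil' p r - Atil p r|) = 2 / dv p := by
    intro p q hpq hSpq hS'pq hSpr
    have hd' : dv' p = dv p - 1 := by
      have h1 : ∀ r, S' p r = S p r - (if r = q then (1:ℝ) else 0) := by
        intro r
        by_cases hr : r = q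
        · subst hr; rw [if_pos rfl, hS'pq, hSpq]; norm_num
        · rw [if_neg hr, hSpr r hr, sub_zero]
      calc dv' p = ∑ r, S' p r := rfl
        _ = ∑ r, (S p r - (if r = q then (1:ℝ) else 0)) := Finset.sum_congr rfl fun r _ => h1 r
        _ = (∑ r, S p r) - ∑ r, (if r = q then (1:ℝ) else 0) := Finset.sum_sub_distrib _ _
        _ = dv p - 1 := by
            rw [Finset.sum_ite_eq' Finset.univ q (fun _ => (1:ℝ)), if_pos (Finset.mem_univ q)]
    have h2dv : 2 ≤ dv p := by
      have := hdv'1 p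
      rw [hd'] at this
      linarith
    refine ⟨hd', h2dv, ?_⟩
    have hdv'ppos : (0:ℝ) < dv' p := hdv'pos p
    have hdvppos : (0:ℝ) < dv p := hdvpos p
    set c : ℝ := (dv' p * dv p)⁻¹ with hc
    have hcpos : 0 ≤ c := by positivity
    have hfrac : (dv' p)⁻¹ - (dv p)⁻¹ = c := by
      rw [hc, mul_inv]
      field_simp
      linarith [hd']
    have h1 : ∀ r, |Atil' p r - Atil p r| =
        (if r = q then (dv p)⁻¹ - c else 0) + S p r * c := by
      intro r
      by_cases hr : r = q
      · subst hr
        rw [hAtilE', hAtilE, hS'pq, hSpq, mul_zero, mul_one, zero_sub, abs_neg,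
          abs_of_nonneg (inv_nonneg.mpr (le_of_lt hdvppos)), if_pos rfl, one_mul]
        ring
      · rw [hAtilE', hAtilE, hSpr r hr, if_neg hr, zero_add]
        have h2 : (dv' p)⁻¹ * S p r - (dv p)⁻¹ * S p r = S p r * ((dv' p)⁻¹ - (dv p)⁻¹) := by
          ring
        rw [h2, hfrac, abs_of_nonneg (mul_nonneg (hSnn p r) hcpos)]
    calc ∑ r, |Atil' p r - Atil p r|
        = ∑ r, ((if r = q then (dv p)⁻¹ - c else 0) + S p r * c) :=
          Finset.sum_congr rfl fun r _ => h1 r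
      _ = (∑ r, (if r = q then (dv p)⁻¹ - c else 0)) + ∑ r, S p r * c :=
          Finset.sum_add_distrib
      _ = ((dv p)⁻¹ - c) + dv p * c := by
          rw [Finset.sum_ite_eq' Finset.univ q, if_pos (Finset.mem_univ q), ← Finset.sum_mul]
      _ = 2 / dv p := by
          rw [hc]
          field_simp
          nlinarith [hd']
  obtain ⟨hdva', hdva2, hEa⟩ := hErow a b hab hSab hS'ab hSagree_a
  obtain ⟨hdvb', hdvb2, hEb⟩ := hErow b a (Ne.symm hab) hSba hS'ba hSagree_b
    -- Step A: row-wise reduction to entries of Rinf' - Rinf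
  have hstepA : ∀ i, Real.sqrt (∑ j, ((Rinf' * X - Rinf * X) i j) ^ 2)
      ≤ ∑ q, |(Rinf' - Rinf) i q| := by
    intro i
    have h1 : ∀ j, (Rinf' * X - Rinf * X) i j = ∑ q, (Rinf' - Rinf) i q * X q j := by
      intro j
      rw [Matrix.sub_apply, Matrix.mul_apply, Matrix.mul_apply, ← Finset.sum_sub_distrib]
      exact Finset.sum_congr rfl fun q _ => by rw [Matrix.sub_apply, sub_mul]
    rw [show (∑ j, ((Rinf' * X - Rinf * X) i j) ^ 2)
        = ∑ j, (∑ q, (Rinf' - Rinf) i q * X q j) ^ 2 from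
      Finset.sum_congr rfl fun j _ => by rw [h1]]
    exact ppr_row_norm_le _ X hX
  have hγα : (0:ℝ) ≤ γ / α := div_nonneg hγ0 (le_of_lt hα0)
  have hEntry : ∀ i q, |(Rinf' - Rinf) i q|
      = (γ / α) * |(Rinf' * ((Atil' - Atil) * Rinf)) i q| := by
    intro i q
    rw [hkey, Matrix.smul_apply, smul_eq_mul, abs_mul, abs_of_nonneg hγα]
  have hℓ : ∀ p, ∑ q, |((Atil' - Atil) * Rinf) p q| ≤ ∑ r, |Atil' p r - Atil p r| := by
    intro p
    calc ∑ q, |((Atil' - Atil) * Rinf) p q|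
        ≤ ∑ q, ∑ r, |Atil' p r - Atil p r| * Rinf r q := by
          refine Finset.sum_le_sum fun q _ => ?_
          rw [Matrix.mul_apply]
          refine (Finset.abs_sum_le_sum_abs _ _).trans ?_
          refine Finset.sum_le_sum fun r _ => ?_
          rw [Matrix.sub_apply, abs_mul, abs_of_nonneg (hR_nn r q)]
      _ = ∑ r, |Atil' p r - Atil p r| * ∑ q, Rinf r q := by
          rw [Finset.sum_comm]
          exact Finset.sum_congr rfl fun r _ => (Finset.mul_sum _ _ _).symm
      _ = ∑ r, |Atil' p r - Atil p r| :=
          Finset.sum_congr rfl fun r _ => by rw [hRrow r, mul_one]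
  have hterm : ∀ p, (∑ i, Rinf' i p) * (∑ q, |((Atil' - Atil) * Rinf) p q|)
      ≤ (if p = a then (1:ℝ) else 0) + (if p = b then (1:ℝ) else 0) := by
    intro p
    have hcolnn : 0 ≤ ∑ i, Rinf' i p := Finset.sum_nonneg fun i _ => hR'_nn i p
    have hℓnn : 0 ≤ ∑ q, |((Atil' - Atil) * Rinf) p q| :=
      Finset.sum_nonneg fun q _ => abs_nonneg _
    by_cases hpa : p = a
    · subst hpa
      rw [if_pos rfl, if_neg hab, add_zero]
      have h1 := hcolsum p hdva' hdva2
      have h2 := (hℓ p).trans (le_of_eq hEa)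
      calc (∑ i, Rinf' i p) * (∑ q, |((Atil' - Atil) * Rinf) p q|)
          ≤ (dv p / 2) * (2 / dv p) := mul_le_mul h1 h2 hℓnn (by positivity)
        _ = 1 := by
            rw [div_mul_div_comm, mul_comm]
            exact div_self (by positivity)
    · by_cases hpb : p = b
      · subst hpb
        rw [if_neg (Ne.symm hab), if_pos rfl, zero_add]
        have h1 := hcolsum p hdvb' hdvb2
        have h2 := (hℓ p).trans (le_of_eq hEb)
        calc (∑ i, Rinf' i p) * (∑ q, |((Atil' - Atil) * Rinf) p q|)
            ≤ (dv p / 2) * (2 / dv p) := mul_le_mul h1 h2 hℓnn (by positivity)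
          _ = 1 := by
              rw [div_mul_div_comm, mul_comm]
              exact div_self (by positivity)
      · rw [if_neg hpa, if_neg hpb, add_zero]
        have hSrow : ∀ r, S' p r = S p r := fun r => by
          rw [hS'entry, hSentry, hagree p r
            (by rintro (⟨h1, -⟩ | ⟨h1, -⟩); exact hpa h1; exact hpb h1)]
        have hdvp : dv' p = dv p := by
          calc dv' p = ∑ k, S' p k := rfl
            _ = ∑ k, S p k := Finset.sum_congr rfl fun k _ => hSrow k
            _ = dv p := rfl
        have hE0 : ∀ r, |Atil' p r - Atil p r| = 0 := by
          intro r
          rw [hAtilE', hAtilE, hdvp, hSrow, sub_self, abs_zero]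
        have h0 : ∑ q, |((Atil' - Atil) * Rinf) p q| = 0 := by
          refine le_antisymm ((hℓ p).trans (le_of_eq ?_)) hℓnn
          exact Finset.sum_eq_zero fun r _ => hE0 r
        rw [h0, mul_zero]
  -- final computation
  calc ∑ i, Real.sqrt (∑ j, ((Rinf' * X - Rinf * X) i j) ^ 2)
      ≤ ∑ i, ∑ q, |(Rinf' - Rinf) i q| := Finset.sum_le_sum fun i _ => hstepA i
    _ = (γ / α) * ∑ i, ∑ q, |(Rinf' * ((Atil' - Atil) * Rinf)) i q| := by
        rw [Finset.mul_sum]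
        refine Finset.sum_congr rfl fun i _ => ?_
        rw [Finset.mul_sum]
        exact Finset.sum_congr rfl fun q _ => hEntry i q
    _ ≤ (γ / α) * ∑ p, (∑ i, Rinf' i p) * (∑ q, |((Atil' - Atil) * Rinf) p q|) := by
        refine mul_le_mul_of_nonneg_left ?_ hγα
        calc ∑ i, ∑ q, |(Rinf' * ((Atil' - Atil) * Rinf)) i q|
            ≤ ∑ i, ∑ q, ∑ p, Rinf' i p * |((Atil' - Atil) * Rinf) p q| := by
              refine Finset.sum_le_sum fun i _ => Finset.sum_le_sum fun q _ => ?_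
              rw [Matrix.mul_apply]
              refine (Finset.abs_sum_le_sum_abs _ _).trans ?_
              refine Finset.sum_le_sum fun p _ => ?_
              rw [abs_mul, abs_of_nonneg (hR'_nn i p)]
          _ = ∑ i, ∑ p, ∑ q, Rinf' i p * |((Atil' - Atil) * Rinf) p q| :=
              Finset.sum_congr rfl fun i _ => Finset.sum_comm
          _ = ∑ p, ∑ i, ∑ q, Rinf' i p * |((Atil' - Atil) * Rinf) p q| :=
              Finset.sum_comm
          _ = ∑ p, (∑ i, Rinf' i p) * (∑ q, |((Atil' - Atil) * Rinf) p q|) := by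
              refine Finset.sum_congr rfl fun p _ => ?_
              rw [Finset.sum_mul]
              exact Finset.sum_congr rfl fun i _ => (Finset.mul_sum _ _ _).symm
    _ ≤ (γ / α) * 2 := by
        refine mul_le_mul_of_nonneg_left ?_ hγα
        calc ∑ p, (∑ i, Rinf' i p) * (∑ q, |((Atil' - Atil) * Rinf) p q|)
            ≤ ∑ p, ((if p = a then (1:ℝ) else 0) + (if p = b then (1:ℝ) else 0)) :=
              Finset.sum_le_sum fun p _ => hterm p
          _ = 2 := by
              rw [Finset.sum_add_distrib, Finset.sum_ite_eq' Finset.univ a (fun _ => (1:ℝ)),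
                Finset.sum_ite_eq' Finset.univ b (fun _ => (1:ℝ)),
                if_pos (Finset.mem_univ a), if_pos (Finset.mem_univ b)]
              norm_num
    _ = 2 * (1 - α) / α := by rw [hγdef]; ring
end

section
/- Let f: ℝ^p → ℝ be convex and differentiable, and let λ > 0. Then for every b ∈ ℝ^p, the function θ ↦ f(θ) + ⟨b, θ⟩ + (λ/2)‖θ‖₂² has a unique global minimizer θ*(b) ∈ ℝ^p, and the map b ↦ θ*(b) is a bijection from ℝ^p to ℝ^p whose inverse is θ ↦ −∇f(θ) − λθ. -/
open RealInnerProductSpace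

section Aux

variable {E : Type*} [NormedAddCommGroup E] [InnerProductSpace ℝ E] [CompleteSpace E]

/-- Gradient inequality for convex differentiable functions. -/
lemma grad_ineq_aux {f : E → ℝ} {g : E} {x : E}
    (hconv : ConvexOn ℝ Set.univ f) (hg : HasGradientAt f g x) (y : E) :
    f x + ⟪g, y - x⟫ ≤ f y := by
  have hc : HasDerivAt (fun t : ℝ => x + t • (y - x)) (y - x) 0 := by
    simpa using ((hasDerivAt_id (0:ℝ)).smul_const (y - x)).const_add x
  have hx0 : x + (0:ℝ) • (y - x) = x := by simp
  have hφ : HasDerivAt (fun t : ℝ => f (x + t • (y - x))) ⟪g, y - x⟫ 0 := by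
    have := (hx0 ▸ hasGradientAt_iff_hasFDerivAt.1 hg).comp_hasDerivAt (0:ℝ) hc
    simpa [InnerProductSpace.toDual_apply_apply, Function.comp_def] using this
  have hφc : ConvexOn ℝ Set.univ (fun t : ℝ => f (x + t • (y - x))) := by
    have h := hconv.comp_affineMap (AffineMap.lineMap x y)
    simp only [Set.preimage_univ] at h
    have he : (fun t : ℝ => f (x + t • (y - x))) = f ∘ (AffineMap.lineMap x y) := by
      funext t
      simp [AffineMap.lineMap_apply, add_comm]
    rw [he]
    exact h
  have := ConvexOn.le_slope_of_hasDerivAt hφc (Set.mem_univ (0:ℝ)) (Set.mem_univ (1:ℝ))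
    one_pos hφ
  simp [slope_def_field, div_one] at this
  simp at this ⊢
  linarith [this]

/-- The perturbed objective has the expected gradient. -/
lemma pert_grad_aux {f : E → ℝ} {f' : E → E} (hgrad : ∀ θ, HasGradientAt f (f' θ) θ)
    (lam : ℝ) (b θ : E) :
    HasGradientAt (fun t => f t + ⟪b, t⟫ + (lam / 2) * ‖t‖ ^ 2)
      (f' θ + b + lam • θ) θ := by
  rw [hasGradientAt_iff_hasFDerivAt]
  have h1 : HasFDerivAt f (InnerProductSpace.toDual ℝ E (f' θ)) θ :=
    hasGradientAt_iff_hasFDerivAt.1 (hgrad θ)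
  have h2 : HasFDerivAt (fun t : E => ⟪b, t⟫) (innerSL ℝ b) θ := (innerSL ℝ b).hasFDerivAt
  have h3 : HasFDerivAt (fun t : E => ‖t‖ ^ 2) (2 • innerSL ℝ θ) θ := by
    simpa using (hasFDerivAt_id θ).norm_sq
  have h4 := (h1.add h2).add (h3.const_mul (lam / 2))
  convert h4 using 1
  · rfl
  · rfl
  · rfl
  apply ContinuousLinearMap.ext
  intro y
  simp [inner_add_left, real_inner_smul_left]
  ring

/-- Minimizer characterization. -/
lemma pert_min_iff_aux {f : E → ℝ} {f' : E → E}
    (hconv : ConvexOn ℝ Set.univ f) (hgrad : ∀ θ, HasGradientAt f (f' θ) θ)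
    {lam : ℝ} (hlam : 0 < lam) (b θ : E) :
    IsMinOn (fun t => f t + ⟪b, t⟫ + (lam / 2) * ‖t‖ ^ 2) Set.univ θ ↔
      -f' θ - lam • θ = b := by
  constructor
  · intro hmin
    have hloc : IsLocalMin (fun t => f t + ⟪b, t⟫ + (lam / 2) * ‖t‖ ^ 2) θ :=
      hmin.isLocalMin Filter.univ_mem
    have hz := hloc.hasFDerivAt_eq_zero
      (hasGradientAt_iff_hasFDerivAt.1 (pert_grad_aux hgrad lam b θ))
    have hz' : f' θ + b + lam • θ = 0 :=
      (InnerProductSpace.toDual ℝ E).map_eq_zero_iff.1 hz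
    rw [← sub_eq_zero]
    calc -f' θ - lam • θ - b = -(f' θ + b + lam • θ) := by abel
    _ = 0 := by rw [hz', neg_zero]
  · intro hb
    have hz : f' θ + b + lam • θ = 0 := by
      rw [← hb]; abel
    rw [isMinOn_univ_iff]
    intro y
    have h1 : f θ + ⟪f' θ, y - θ⟫ ≤ f y := grad_ineq_aux hconv (hgrad θ) y
    have h2 : ⟪b, y⟫ = ⟪b, θ⟫ + ⟪b, y - θ⟫ := by
      rw [← inner_add_right, add_sub_cancel]
    have h3 : ‖y‖ ^ 2 = ‖θ‖ ^ 2 + 2 * ⟪θ, y - θ⟫ + ‖y - θ‖ ^ 2 := by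
      have := norm_add_sq_real θ (y - θ)
      rwa [add_sub_cancel] at this
    have h4 : ⟪f' θ, y - θ⟫ + ⟪b, y - θ⟫ + lam * ⟪θ, y - θ⟫ = 0 := by
      have : ⟪f' θ + b + lam • θ, y - θ⟫ = (0:ℝ) := by rw [hz, inner_zero_left]
      rw [inner_add_left, inner_add_left, real_inner_smul_left] at this
      linarith
    have h5 : (0:ℝ) ≤ ‖y - θ‖ ^ 2 := sq_nonneg _
    have h6 : 0 ≤ lam * ‖y - θ‖ ^ 2 := mul_nonneg hlam.le h5
    have h3' : (lam / 2) * ‖y‖ ^ 2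
        = (lam / 2) * ‖θ‖ ^ 2 + lam * ⟪θ, y - θ⟫ + (lam / 2) * ‖y - θ‖ ^ 2 := by
      rw [h3]; ring
    show f θ + ⟪b, θ⟫ + (lam / 2) * ‖θ‖ ^ 2 ≤ f y + ⟪b, y⟫ + (lam / 2) * ‖y‖ ^ 2
    linarith

/-- Existence of a minimizer. -/
lemma pert_exists_aux [ProperSpace E] {f : E → ℝ} {f' : E → E}
    (hconv : ConvexOn ℝ Set.univ f) (hgrad : ∀ θ, HasGradientAt f (f' θ) θ)
    {lam : ℝ} (hlam : 0 < lam) (b : E) :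
    ∃ θ, IsMinOn (fun t => f t + ⟪b, t⟫ + (lam / 2) * ‖t‖ ^ 2) Set.univ θ := by
  set g : E → ℝ := fun t => f t + ⟪b, t⟫ + (lam / 2) * ‖t‖ ^ 2 with hg
  have hfd : Differentiable ℝ f := fun x => (hgrad x).differentiableAt
  have hcont : Continuous g :=
    (hfd.continuous.add (continuous_const.inner continuous_id)).add
      (continuous_const.mul (continuous_norm.pow 2))
  set C : ℝ := ‖f' 0‖ + ‖b‖ with hC
  have hlb : ∀ y : E, f 0 - C * ‖y‖ + (lam / 2) * ‖y‖ ^ 2 ≤ g y := by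
    intro y
    have h1 : f 0 + ⟪f' 0, y - 0⟫ ≤ f y := grad_ineq_aux hconv (hgrad 0) y
    rw [sub_zero] at h1
    have h2 : -(‖f' 0‖ * ‖y‖) ≤ ⟪f' 0, y⟫ := neg_le_of_abs_le (abs_real_inner_le_norm _ _)
    have h3 : -(‖b‖ * ‖y‖) ≤ ⟪b, y⟫ := neg_le_of_abs_le (abs_real_inner_le_norm _ _)
    simp only [hg, hC]
    ring_nf
    nlinarith [h1, h2, h3]
  have hh : Filter.Tendsto (fun r : ℝ => f 0 - C * r + (lam / 2) * r ^ 2)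
      Filter.atTop Filter.atTop := by
    have h1 : Filter.Tendsto (fun r : ℝ => (lam / 2) * r - C) Filter.atTop Filter.atTop := by
      have hm : Filter.Tendsto (fun r : ℝ => (lam / 2) * r) Filter.atTop Filter.atTop :=
        Filter.Tendsto.const_mul_atTop (by positivity) Filter.tendsto_id
      simpa [sub_eq_add_neg] using Filter.tendsto_atTop_add_const_right _ (-C) hm
    have h2 : Filter.Tendsto (fun r : ℝ => r * ((lam / 2) * r - C)) Filter.atTop
        Filter.atTop := Filter.Tendsto.atTop_mul_atTop₀ Filter.tendsto_id h1
    have h3 := Filter.tendsto_atTop_add_const_right _ (f 0) h2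
    exact h3.congr (fun r => by ring)
  have hco : Filter.Tendsto g (Filter.cocompact E) Filter.atTop := by
    refine Filter.tendsto_atTop_mono (fun y => ?_)
      (hh.comp tendsto_norm_cocompact_atTop)
    exact hlb y
  obtain ⟨x, hx⟩ := hcont.exists_forall_le hco
  exact ⟨x, isMinOn_univ_iff.2 hx⟩

/-- Injectivity of the map. -/
lemma pert_inj_aux {f : E → ℝ} {f' : E → E}
    (hconv : ConvexOn ℝ Set.univ f) (hgrad : ∀ θ, HasGradientAt f (f' θ) θ)
    {lam : ℝ} (hlam : 0 < lam) :
    Function.Injective (fun θ : E => -f' θ - lam • θ) := by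
  intro a c h
  simp only at h
  have hd : f' a - f' c = lam • (c - a) := by
    rw [smul_sub, ← sub_eq_zero]
    have h0 : (-f' a - lam • a) - (-f' c - lam • c) = 0 := by rw [h, sub_self]
    calc f' a - f' c - (lam • c - lam • a) = -((-f' a - lam • a) - (-f' c - lam • c)) := by abel
    _ = 0 := by rw [h0, neg_zero]
  have h1 : f a + ⟪f' a, c - a⟫ ≤ f c := grad_ineq_aux hconv (hgrad a) c
  have h2 : f c + ⟪f' c, a - c⟫ ≤ f a := grad_ineq_aux hconv (hgrad c) a
  have h3 : ⟪f' a - f' c, c - a⟫ ≤ 0 := by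
    rw [inner_sub_left]
    have : ⟪f' c, a - c⟫ = -⟪f' c, c - a⟫ := by
      rw [← inner_neg_right, neg_sub]
    linarith [h1, h2, this ▸ h2]
  rw [hd, real_inner_smul_left, real_inner_self_eq_norm_sq] at h3
  have h7 : ‖c - a‖ ^ 2 ≤ 0 := nonpos_of_mul_nonpos_right h3 hlam
  have h8 : ‖c - a‖ ^ 2 = 0 := le_antisymm h7 (sq_nonneg _)
  have h9 : c - a = 0 := by
    have := pow_eq_zero_iff (n := 2) (by norm_num) |>.1 h8
    exact norm_eq_zero.1 this
  have := sub_eq_zero.1 h9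
  exact this.symm

end Aux

/-- For a convex differentiable `f : ℝ^p → ℝ` and `λ > 0`, each perturbed
objective `θ ↦ f θ + ⟨b, θ⟩ + (λ/2)‖θ‖²` has a unique global minimizer
`θ*(b)`, and `b ↦ θ*(b)` is a bijection of `ℝ^p` whose inverse is
`θ ↦ −∇f(θ) − λθ`: the map `T θ = −∇f(θ) − λθ` is bijective and `θ` minimizes
the objective for `b` exactly when `T θ = b`. -/
theorem perturbed_objective_unique_minimizer_bijective {p : ℕ}
    (f : EuclideanSpace ℝ (Fin p) → ℝ)
    (f' : EuclideanSpace ℝ (Fin p) → EuclideanSpace ℝ (Fin p))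
    (hconv : ConvexOn ℝ Set.univ f)
    (hgrad : ∀ θ, HasGradientAt f (f' θ) θ)
    (lam : ℝ) (hlam : 0 < lam) :
    (∀ b : EuclideanSpace ℝ (Fin p),
      ∃! θ : EuclideanSpace ℝ (Fin p),
        IsMinOn (fun t => f t + ⟪b, t⟫ + (lam / 2) * ‖t‖ ^ 2) Set.univ θ) ∧
    Function.Bijective (fun θ : EuclideanSpace ℝ (Fin p) => -f' θ - lam • θ) ∧
    (∀ (b θ : EuclideanSpace ℝ (Fin p)),
      IsMinOn (fun t => f t + ⟪b, t⟫ + (lam / 2) * ‖t‖ ^ 2) Set.univ θ ↔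
        -f' θ - lam • θ = b) := by
  have hinj := pert_inj_aux hconv hgrad hlam
  refine ⟨?_, ⟨hinj, ?_⟩, fun b θ => pert_min_iff_aux hconv hgrad hlam b θ⟩
  · intro b
    obtain ⟨θ, hθ⟩ := pert_exists_aux hconv hgrad hlam b
    refine ⟨θ, hθ, fun y hy => hinj ?_⟩
    show -f' y - lam • y = -f' θ - lam • θ
    rw [(pert_min_iff_aux hconv hgrad hlam b y).1 hy,
      (pert_min_iff_aux hconv hgrad hlam b θ).1 hθ]
  · intro b
    obtain ⟨θ, hθ⟩ := pert_exists_aux hconv hgrad hlam b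
    exact ⟨θ, (pert_min_iff_aux hconv hgrad hlam b θ).1 hθ⟩
end

section
/- Let c₁, c₂, c_θ ≥ 0, and for each i = 1,…,n let s_i: ℝ → ℝ satisfy |s_i(x)| ≤ c₁ for all x and |s_i(x) − s_i(x')| ≤ c₂|x − x'| for all x, x' (i.e., s_i is c₂-Lipschitz). Let z_1,…,z_n, z_1',…,z_n' ∈ ℝ^d with ‖z_i'‖₂ ≤ 1 for all i, and let θ ∈ ℝ^d with ‖θ‖₂ ≤ c_θ. Then ‖Σ_{i=1}^n ( z_i'·s_i(z_i'ᵀθ) − z_i·s_i(z_iᵀθ) )‖₂ ≤ (c₁ + c₂c_θ) · Σ_{i=1}^n ‖z_i' − z_i‖₂. -/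
open RealInnerProductSpace

/-- Gradient-difference bound: if each `sᵢ` is bounded by `c₁` and
`c₂`-Lipschitz, `‖zᵢ'‖ ≤ 1` and `‖θ‖ ≤ c_θ`, then
`‖∑ᵢ (zᵢ' sᵢ(zᵢ'ᵀθ) − zᵢ sᵢ(zᵢᵀθ))‖ ≤ (c₁ + c₂ c_θ) ∑ᵢ ‖zᵢ' − zᵢ‖`. -/
theorem gradient_difference_bound {n d : ℕ}
    (c1 c2 cθ : ℝ) (hc1 : 0 ≤ c1) (hc2 : 0 ≤ c2) (hcθ : 0 ≤ cθ)
    (s : Fin n → ℝ → ℝ)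
    (hbound : ∀ i x, |s i x| ≤ c1)
    (hlip : ∀ i x x', |s i x - s i x'| ≤ c2 * |x - x'|)
    (z z' : Fin n → EuclideanSpace ℝ (Fin d))
    (hz' : ∀ i, ‖z' i‖ ≤ 1)
    (θ : EuclideanSpace ℝ (Fin d)) (hθ : ‖θ‖ ≤ cθ) :
    ‖∑ i, (s i ⟪z' i, θ⟫ • z' i - s i ⟪z i, θ⟫ • z i)‖
      ≤ (c1 + c2 * cθ) * ∑ i, ‖z' i - z i‖ := by
  rw [Finset.mul_sum]
  refine le_trans (norm_sum_le _ _) (Finset.sum_le_sum fun i _ => ?_)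
  have key : s i ⟪z' i, θ⟫ • z' i - s i ⟪z i, θ⟫ • z i
      = (s i ⟪z' i, θ⟫ - s i ⟪z i, θ⟫) • z' i + s i ⟪z i, θ⟫ • (z' i - z i) := by
    module
  rw [key]
  refine le_trans (norm_add_le _ _) ?_
  rw [norm_smul, norm_smul, add_mul]
  have h1 : ‖s i ⟪z' i, θ⟫ - s i ⟪z i, θ⟫‖ * ‖z' i‖ ≤ c2 * cθ * ‖z' i - z i‖ := by
    have hL : ‖s i ⟪z' i, θ⟫ - s i ⟪z i, θ⟫‖ ≤ c2 * cθ * ‖z' i - z i‖ := by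
      refine le_trans (hlip i _ _) ?_
      rw [show ⟪z' i, θ⟫ - ⟪z i, θ⟫ = ⟪z' i - z i, θ⟫ by rw [inner_sub_left]]
      have : |⟪z' i - z i, θ⟫| ≤ ‖z' i - z i‖ * cθ :=
        le_trans (abs_real_inner_le_norm _ _)
          (mul_le_mul_of_nonneg_left hθ (norm_nonneg _))
      nlinarith [norm_nonneg (z' i - z i)]
    calc ‖s i ⟪z' i, θ⟫ - s i ⟪z i, θ⟫‖ * ‖z' i‖
        ≤ (c2 * cθ * ‖z' i - z i‖) * 1 :=
          mul_le_mul hL (hz' i) (norm_nonneg _) (by positivity)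
      _ = c2 * cθ * ‖z' i - z i‖ := by ring
  have h2 : ‖s i ⟪z i, θ⟫‖ * ‖z' i - z i‖ ≤ c1 * ‖z' i - z i‖ :=
    mul_le_mul_of_nonneg_right (hbound i _) (norm_nonneg _)
  linarith
end

section
/- Let μ > 0, let s_1, …, s_n ≥ 0, let z_1, …, z_n ∈ ℝ^d, and set B = Σ_{i=1}^n s_i·z_i z_iᵀ + μ·I_d. Let E ∈ ℝ^{d×d} be symmetric with eigenvalues λ_1(E), …, λ_d(E). Then B is symmetric positive definite with every eigenvalue at least μ, and |det(B + E) / det(B)| ≤ (1 + (1/(dμ))·Σ_{j=1}^d |λ_j(E)|)^d. -/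
open Matrix Finset
set_option maxHeartbeats 1000000

variable {d : ℕ}

lemma dot_self_nonneg (x : Fin d → ℝ) : 0 ≤ x ⬝ᵥ x :=
  Finset.sum_nonneg fun i _ => mul_self_nonneg _

lemma dot_self_pos {x : Fin d → ℝ} (hx : x ≠ 0) : 0 < x ⬝ᵥ x := by
  obtain ⟨i, hi⟩ := Function.ne_iff.mp hx
  exact Finset.sum_pos' (fun j _ => mul_self_nonneg _)
    ⟨i, Finset.mem_univ i, mul_self_pos.mpr (by simpa using hi)⟩

lemma amgm (hd : 0 < d) (a : Fin d → ℝ) (ha : ∀ k, 0 ≤ a k) :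
    ∏ k, a k ≤ ((∑ k, a k) / d) ^ d := by
  have hdR : (0:ℝ) < d := by exact_mod_cast hd
  have h := Real.geom_mean_le_arith_mean_weighted Finset.univ (fun _ => (d:ℝ)⁻¹) a
    (fun _ _ => by positivity) (by simp [Finset.card_univ]; field_simp)
    (fun i _ => ha i)
  have h2 : (∏ k, a k ^ ((d:ℝ)⁻¹)) ^ d ≤ ((∑ k, a k) / d) ^ d := by
    apply pow_le_pow_left₀ (Finset.prod_nonneg fun i _ => Real.rpow_nonneg (ha i) _)
    calc (∏ k, a k ^ ((d:ℝ)⁻¹)) ≤ ∑ k : Fin d, (d:ℝ)⁻¹ * a k := h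
      _ = (∑ k, a k) / d := by rw [← Finset.mul_sum]; ring
  calc ∏ k, a k = (∏ k, a k ^ ((d:ℝ)⁻¹)) ^ d := by
        rw [← Finset.prod_pow]
        refine Finset.prod_congr rfl fun k _ => ?_
        rw [← Real.rpow_natCast (a k ^ ((d:ℝ)⁻¹)) d, ← Real.rpow_mul (ha k),
          inv_mul_cancel₀ (ne_of_gt hdR), Real.rpow_one]
    _ ≤ _ := h2

lemma inv_quad {B : Matrix (Fin d) (Fin d) ℝ} (hB : B.PosDef) {μ : ℝ} (hμ : 0 < μ)
    (h : ∀ x : Fin d → ℝ, μ * (x ⬝ᵥ x) ≤ x ⬝ᵥ (B *ᵥ x)) (v : Fin d → ℝ) :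
    v ⬝ᵥ (B⁻¹ *ᵥ v) ≤ μ⁻¹ * (v ⬝ᵥ v) := by
  set y := B⁻¹ *ᵥ v with hy
  have hv : B *ᵥ y = v := by
    rw [hy, mulVec_mulVec, Matrix.mul_nonsing_inv _ (isUnit_iff_ne_zero.mpr hB.det_pos.ne'),
      one_mulVec]
  have hvy : v ⬝ᵥ y = y ⬝ᵥ (B *ᵥ y) := by rw [← hv, dotProduct_comm]
  by_cases hy0 : y = 0
  · rw [hvy, hy0]
    simp
    exact mul_nonneg (inv_nonneg.mpr hμ.le) (dot_self_nonneg v)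
  · have hb : 0 < y ⬝ᵥ (B *ᵥ y) := lt_of_lt_of_le (mul_pos hμ (dot_self_pos hy0)) (h y)
    have hcs : (y ⬝ᵥ (B *ᵥ y))^2 ≤ (y ⬝ᵥ y) * (v ⬝ᵥ v) := by
      have := Finset.sum_mul_sq_le_sq_mul_sq Finset.univ y (B *ᵥ y)
      calc (y ⬝ᵥ (B *ᵥ y))^2 = (∑ i, y i * (B *ᵥ y) i)^2 := rfl
        _ ≤ (∑ i, y i ^2) * (∑ i, (B *ᵥ y) i ^2) := this
        _ = (y ⬝ᵥ y) * (v ⬝ᵥ v) := by rw [← hv]; simp [dotProduct, sq]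
    have hμa := h y
    have ha : 0 ≤ y ⬝ᵥ y := dot_self_nonneg y
    have hc : 0 ≤ v ⬝ᵥ v := dot_self_nonneg v
    have key : μ * (y ⬝ᵥ (B *ᵥ y)) ≤ v ⬝ᵥ v := by
      nlinarith [hb, hcs, hμa, ha, hμ, hc]
    rw [hvy]
    calc y ⬝ᵥ (B *ᵥ y) = μ⁻¹ * (μ * (y ⬝ᵥ (B *ᵥ y))) := by field_simp
      _ ≤ μ⁻¹ * (v ⬝ᵥ v) := by
          exact mul_le_mul_of_nonneg_left key (inv_nonneg.mpr hμ.le)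


lemma sum_mulVec' {d m : ℕ} (M : Fin m → Matrix (Fin d) (Fin d) ℝ) (x : Fin d → ℝ) :
    (∑ i, M i) *ᵥ x = ∑ i, M i *ᵥ x := by
  ext j
  simp [mulVec, dotProduct, Matrix.sum_apply, Finset.sum_mul]
  rw [Finset.sum_comm]

lemma dot_sum {d m : ℕ} (x : Fin d → ℝ) (f : Fin m → Fin d → ℝ) :
    x ⬝ᵥ (∑ i, f i) = ∑ i, x ⬝ᵥ f i := by
  simp [dotProduct, Finset.mul_sum]
  rw [Finset.sum_comm]

lemma quadform {d n : ℕ} (μ : ℝ) (s : Fin n → ℝ) (z : Fin n → Fin d → ℝ) (x : Fin d → ℝ) :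
    x ⬝ᵥ (((∑ i, s i • Matrix.vecMulVec (z i) (z i)) + μ • (1 : Matrix (Fin d) (Fin d) ℝ)) *ᵥ x)
      = (∑ i, s i * (z i ⬝ᵥ x)^2) + μ * (x ⬝ᵥ x) := by
  rw [add_mulVec, dotProduct_add]
  congr 1
  · rw [sum_mulVec', dot_sum]
    refine Finset.sum_congr rfl fun i _ => ?_
    rw [smul_mulVec, dotProduct_smul, smul_eq_mul]
    congr 1
    simp [dotProduct, vecMulVec, mulVec, Finset.mul_sum, Finset.sum_mul, sq]
    rw [Finset.sum_comm]
    refine Finset.sum_congr rfl fun a _ => Finset.sum_congr rfl fun b _ => by ring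
  · rw [smul_mulVec, one_mulVec, dotProduct_smul, smul_eq_mul]

lemma herm {d n : ℕ} (μ : ℝ) (s : Fin n → ℝ) (z : Fin n → Fin d → ℝ) :
    (((∑ i, s i • Matrix.vecMulVec (z i) (z i)) + μ • (1 : Matrix (Fin d) (Fin d) ℝ))).IsHermitian := by
  unfold Matrix.IsHermitian
  ext i j
  simp [conjTranspose_apply, Matrix.sum_apply, Matrix.one_apply, vecMulVec_apply, eq_comm]
  exact Finset.sum_congr rfl fun a _ => by ring


lemma det_bound {d : ℕ} (hd : 0 < d) {μ : ℝ} (hμ : 0 < μ)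
    {B E : Matrix (Fin d) (Fin d) ℝ} (hB : B.PosDef)
    (h : ∀ x : Fin d → ℝ, μ * (x ⬝ᵥ x) ≤ x ⬝ᵥ (B *ᵥ x)) (hE : E.IsHermitian) :
    |(B + E).det / B.det| ≤ (1 + (1 / (d * μ)) * ∑ j, |hE.eigenvalues j|) ^ d := by
  classical
  have hdR : (0:ℝ) < d := by exact_mod_cast hd
  obtain ⟨R, hRps, hRR⟩ : ∃ R : Matrix (Fin d) (Fin d) ℝ, R.PosSemidef ∧ R * R = B :=
    by
      open scoped MatrixOrder in
      exact ⟨CFC.sqrt B, nonneg_iff_posSemidef.mp (CFC.sqrt_nonneg B),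
        CFC.sqrt_mul_sqrt_self B (nonneg_iff_posSemidef.mpr hB.posSemidef)⟩
  have hdetR : R.det * R.det = B.det := by rw [← det_mul, hRR]
  have hRdetne : R.det ≠ 0 := by
    intro h0
    rw [h0, mul_zero] at hdetR
    exact hB.det_pos.ne' hdetR.symm
  have hRu : IsUnit R.det := isUnit_iff_ne_zero.mpr hRdetne
  have hRinv1 : R * R⁻¹ = 1 := Matrix.mul_nonsing_inv _ hRu
  have hRinv2 : R⁻¹ * R = 1 := Matrix.nonsing_inv_mul _ hRu
  have hRst : star R = R := hRps.1
  have hRinvst : star R⁻¹ = R⁻¹ := by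
    rw [Matrix.star_eq_conjTranspose, Matrix.conjTranspose_nonsing_inv,
      ← Matrix.star_eq_conjTranspose, hRst]
  set N := R⁻¹ * E * R⁻¹ with hNdef
  have hNherm : N.IsHermitian := by
    unfold Matrix.IsHermitian
    rw [← Matrix.star_eq_conjTranspose]
    calc star (R⁻¹ * E * R⁻¹) = star R⁻¹ * (star E * star R⁻¹) := by
          rw [StarMul.star_mul, StarMul.star_mul]
      _ = R⁻¹ * E * R⁻¹ := by
          rw [hRinvst, Matrix.star_eq_conjTranspose, hE.eq, ← mul_assoc]
  -- B + E = R * (1 + N) * R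
  have hfact : R * (1 + N) * R = B + E := by
    rw [mul_add, mul_one, add_mul, hRR]
    congr 1
    calc R * (R⁻¹ * E * R⁻¹) * R = (R * R⁻¹) * E * (R⁻¹ * R) := by
          simp only [mul_assoc]
      _ = E := by rw [hRinv1, hRinv2, one_mul, mul_one]
  have hdet2 : (B + E).det = B.det * (1 + N).det := by
    rw [← hfact, det_mul, det_mul, ← hdetR]; ring
  have hratio : (B + E).det / B.det = (1 + N).det := by
    rw [hdet2, mul_div_assoc, mul_comm]
    field_simp [hB.det_pos.ne']
  -- spectral theorem for N
  set W : Matrix (Fin d) (Fin d) ℝ := (hNherm.eigenvectorUnitary : Matrix (Fin d) (Fin d) ℝ)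
    with hWdef
  set ν := hNherm.eigenvalues with hνdef
  have hWunit : W * star W = 1 := (Matrix.mem_unitaryGroup_iff).mp hNherm.eigenvectorUnitary.2
  have hWunit' : star W * W = 1 := (Matrix.mem_unitaryGroup_iff').mp hNherm.eigenvectorUnitary.2
  have hNspec : N = W * diagonal ν * star W := by simpa using hNherm.spectral_theorem
  have hWdet : W.det * (star W).det = 1 := by rw [← det_mul, hWunit, det_one]
  have hdet1N : (1 + N).det = ∏ k, (1 + ν k) := by
    have h1 : (1 : Matrix (Fin d) (Fin d) ℝ) + N = W * diagonal (fun k => 1 + ν k) * star W := by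
      have : diagonal (fun k => 1 + ν k) = 1 + diagonal ν := by
        rw [← diagonal_one, ← diagonal_add]
      rw [this, mul_add, add_mul, mul_one, hWunit, ← hNspec]
    rw [h1, det_mul, det_mul, det_diagonal]
    calc W.det * (∏ k, (1 + ν k)) * (star W).det
        = (W.det * (star W).det) * ∏ k, (1 + ν k) := by ring
      _ = ∏ k, (1 + ν k) := by rw [hWdet, one_mul]
  -- eigen decomposition of E
  set V : Matrix (Fin d) (Fin d) ℝ := (hE.eigenvectorUnitary : Matrix (Fin d) (Fin d) ℝ)
    with hVdef
  set lam := hE.eigenvalues with hlamdef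
  have hVunit : V * star V = 1 := (Matrix.mem_unitaryGroup_iff).mp hE.eigenvectorUnitary.2
  have hVunit' : star V * V = 1 := (Matrix.mem_unitaryGroup_iff').mp hE.eigenvectorUnitary.2
  have hEspec : E = V * diagonal lam * star V := by simpa using hE.spectral_theorem
  set C := star V * R⁻¹ * W with hCdef
  have hCstar : star C = star W * (R⁻¹ * V) := by
    rw [hCdef, StarMul.star_mul, StarMul.star_mul, hRinvst, star_star]
  have hdiagN : diagonal ν = star C * diagonal lam * C := by
    have h0 : star W * N * W = diagonal ν := by
      simpa using hNherm.conjStarAlgAut_star_eigenvectorUnitary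
    rw [← h0, hNdef, hEspec, hCstar, hCdef]
    simp only [Matrix.mul_assoc]
  have hνk : ∀ k, ν k = ∑ j, lam j * (C j k)^2 := by
    intro k
    calc ν k = (diagonal ν) k k := by simp
      _ = (star C * diagonal lam * C) k k := by rw [hdiagN]
      _ = ∑ j, (star C * diagonal lam) k j * C j k := Matrix.mul_apply
      _ = ∑ j, lam j * (C j k)^2 := by
          refine Finset.sum_congr rfl fun j _ => ?_
          rw [Matrix.mul_diagonal, Matrix.star_apply, star_trivial, sq]
          ring
  have hCC : C * star C = star V * B⁻¹ * V := by
    have hBinv : B⁻¹ = R⁻¹ * R⁻¹ := by rw [← hRR, Matrix.mul_inv_rev]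
    rw [hCdef, hCstar, hBinv]
    calc star V * R⁻¹ * W * (star W * (R⁻¹ * V))
        = star V * R⁻¹ * (W * star W) * (R⁻¹ * V) := by simp only [Matrix.mul_assoc]
      _ = star V * (R⁻¹ * R⁻¹) * V := by
          rw [hWunit, mul_one]
          simp only [Matrix.mul_assoc]
  have hCsq : ∀ j, ∑ k, (C j k)^2 ≤ μ⁻¹ := by
    intro j
    set v : Fin d → ℝ := fun a => V a j with hvdef
    have h1 : ∑ k, (C j k)^2 = (C * star C) j j := by
      rw [Matrix.mul_apply]
      exact Finset.sum_congr rfl fun k _ => by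
        rw [Matrix.star_apply, star_trivial, sq]
    have h2 : (star V * B⁻¹ * V) j j = v ⬝ᵥ (B⁻¹ *ᵥ v) := by
      simp only [Matrix.mul_apply, Matrix.star_apply, star_trivial, dotProduct, mulVec,
        Finset.sum_mul, Finset.mul_sum, hvdef]
      rw [Finset.sum_comm]
      refine Finset.sum_congr rfl fun a _ => Finset.sum_congr rfl fun b _ => by ring
    have h3 : v ⬝ᵥ v = 1 := by
      have := congrArg (fun M => M j j) hVunit'
      simp only [Matrix.mul_apply, Matrix.star_apply, star_trivial, Matrix.one_apply_eq] at this
      simpa [dotProduct, hvdef] using this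
    calc ∑ k, (C j k)^2 = (star V * B⁻¹ * V) j j := by rw [h1, hCC]
      _ = v ⬝ᵥ (B⁻¹ *ᵥ v) := h2
      _ ≤ μ⁻¹ * (v ⬝ᵥ v) := inv_quad hB hμ h v
      _ = μ⁻¹ := by rw [h3, mul_one]
  set T := ∑ k, |ν k| with hT
  set L := ∑ j, |lam j| with hL
  have hLnn : 0 ≤ L := Finset.sum_nonneg fun j _ => abs_nonneg _
  have hTL : T ≤ μ⁻¹ * L := by
    calc T = ∑ k, |∑ j, lam j * (C j k)^2| :=
          Finset.sum_congr rfl fun k _ => by rw [hνk]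
      _ ≤ ∑ k, ∑ j, |lam j| * (C j k)^2 := Finset.sum_le_sum fun k _ => by
            calc |∑ j, lam j * (C j k)^2| ≤ ∑ j, |lam j * (C j k)^2| :=
                  Finset.abs_sum_le_sum_abs _ _
              _ = ∑ j, |lam j| * (C j k)^2 := Finset.sum_congr rfl fun j _ => by
                    rw [abs_mul, abs_pow, sq_abs]
      _ = ∑ j, |lam j| * ∑ k, (C j k)^2 := by
            rw [Finset.sum_comm]
            exact Finset.sum_congr rfl fun j _ => by rw [Finset.mul_sum]
      _ ≤ ∑ j, |lam j| * μ⁻¹ := Finset.sum_le_sum fun j _ =>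
            mul_le_mul_of_nonneg_left (hCsq j) (abs_nonneg _)
      _ = μ⁻¹ * L := by rw [hL, ← Finset.sum_mul]; ring
  have habs : |(B + E).det / B.det| ≤ ∏ k, (1 + |ν k|) := by
    rw [hratio, hdet1N, Finset.abs_prod]
    refine Finset.prod_le_prod (fun k _ => abs_nonneg _) (fun k _ => ?_)
    calc |1 + ν k| ≤ |(1:ℝ)| + |ν k| := abs_add_le _ _
      _ = 1 + |ν k| := by rw [abs_one]
  have hprod : ∏ k, (1 + |ν k|) ≤ (1 + T/d)^d := by
    calc ∏ k, (1+|ν k|) ≤ ((∑ k, (1+|ν k|))/d)^d :=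
          amgm hd (fun k => 1 + |ν k|) (fun k => by positivity)
      _ = (1 + T/d)^d := by
          congr 1
          rw [Finset.sum_add_distrib, Finset.sum_const, Finset.card_univ, Fintype.card_fin, nsmul_eq_mul, mul_one,
            hT]
          field_simp
  have hfin : (1 + T/d : ℝ) ≤ 1 + (1/(d*μ)) * L := by
    have h1 : T/d ≤ (μ⁻¹*L)/d := by gcongr
    have h2 : (μ⁻¹*L)/d = (1/(d*μ)) * L := by ring
    linarith [h1, h2.le, h2.ge]
  calc |(B+E).det / B.det| ≤ ∏ k, (1+|ν k|) := habs
    _ ≤ (1 + T/d)^d := hprod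
    _ ≤ (1 + (1/(d*μ))*L)^d := by
        apply pow_le_pow_left₀ (by positivity) hfin




/-- For `B = ∑ᵢ sᵢ zᵢzᵢᵀ + μ I` with `sᵢ ≥ 0` and `μ > 0`, the matrix `B` is
symmetric positive definite with every eigenvalue at least `μ`, and for every
symmetric matrix `E` with eigenvalues `λ₁(E), …, λ_d(E)`,
`|det(B + E) / det B| ≤ (1 + (1/(dμ)) ∑ⱼ |λⱼ(E)|)^d`. -/
theorem det_ratio_bound {d n : ℕ} (hd : 0 < d)
    (μ : ℝ) (hμ : 0 < μ)
    (s : Fin n → ℝ) (hs : ∀ i, 0 ≤ s i)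
    (z : Fin n → Fin d → ℝ)
    (E : Matrix (Fin d) (Fin d) ℝ) (hE : E.IsHermitian) :
    let B : Matrix (Fin d) (Fin d) ℝ :=
      (∑ i, s i • Matrix.vecMulVec (z i) (z i)) + μ • (1 : Matrix (Fin d) (Fin d) ℝ)
    B.PosDef ∧
    (∀ (t : ℝ) (x : Fin d → ℝ), x ≠ 0 → B *ᵥ x = t • x → μ ≤ t) ∧
    |(B + E).det / B.det| ≤ (1 + (1 / (d * μ)) * ∑ j, |hE.eigenvalues j|) ^ d := by
  intro B
  have hq : ∀ x : Fin d → ℝ, x ⬝ᵥ (B *ᵥ x) = (∑ i, s i * (z i ⬝ᵥ x)^2) + μ * (x ⬝ᵥ x) :=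
    fun x => quadform μ s z x
  have hμx : ∀ x : Fin d → ℝ, μ * (x ⬝ᵥ x) ≤ x ⬝ᵥ (B *ᵥ x) := fun x => by
    rw [hq x]
    have : 0 ≤ ∑ i, s i * (z i ⬝ᵥ x)^2 :=
      Finset.sum_nonneg fun i _ => mul_nonneg (hs i) (sq_nonneg _)
    linarith
  have hBpos : B.PosDef := by
    refine PosDef.of_dotProduct_mulVec_pos (herm μ s z) fun x hx => ?_
    rw [show star x = x from by simp]
    calc (0:ℝ) < μ * (x ⬝ᵥ x) := mul_pos hμ (dot_self_pos hx)
      _ ≤ x ⬝ᵥ (B *ᵥ x) := hμx x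
  refine ⟨hBpos, ?_, ?_⟩
  · intro t x hx hBx
    have h1 : 0 < x ⬝ᵥ x := dot_self_pos hx
    have h2 : x ⬝ᵥ (B *ᵥ x) = t * (x ⬝ᵥ x) := by rw [hBx, dotProduct_smul, smul_eq_mul]
    have h3 := hμx x
    rw [h2] at h3
    exact le_of_mul_le_mul_right (by linarith) h1
  · exact det_bound hd hμ hBpos hμx hE
end

section
/- Fix y ∈ ℝ, δ > 0, and c > 0, and define the pseudo-Huber loss ℓ(x) = (δ²/c)·(√(1 + (x−y)²/δ²) − 1) for x ∈ ℝ. Then ℓ is infinitely differentiable and: (i) sup_{x∈ℝ} |ℓ'(x)| = δ/c; (ii) sup_{x∈ℝ} |ℓ''(x)| = 1/c; (iii) sup_{x∈ℝ} |ℓ'''(x)| = 48√5/(125·c·δ). -/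
open Filter

noncomputable def phf (y δ : ℝ) (x : ℝ) : ℝ := Real.sqrt (δ^2 + (x - y)^2)

lemma phf_pos (y δ : ℝ) (hδ : 0 < δ) (x : ℝ) : 0 < phf y δ x :=
  Real.sqrt_pos.2 (by positivity)

lemma phf_sq (y δ : ℝ) (x : ℝ) : (phf y δ x)^2 = δ^2 + (x-y)^2 :=
  Real.sq_sqrt (by positivity)

lemma phf_ge (y δ : ℝ) (hδ : 0 < δ) (x : ℝ) : δ ≤ phf y δ x := by
  nlinarith [phf_sq y δ x, phf_pos y δ hδ x, sq_nonneg (x - y)]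

lemma phf_abs_le (y δ : ℝ) (x : ℝ) : |x - y| ≤ phf y δ x := by
  rw [← Real.sqrt_sq_eq_abs]
  exact Real.sqrt_le_sqrt (by nlinarith [sq_nonneg δ])

lemma phf_hasDerivAt (y δ : ℝ) (hδ : 0 < δ) (x : ℝ) :
    HasDerivAt (phf y δ) ((x - y) / phf y δ x) x := by
  have h1 : HasDerivAt (fun x : ℝ => δ^2 + (x - y)^2) (2*(x-y)) x := by
    have := (((hasDerivAt_id x).sub_const y).pow 2).const_add (δ^2)
    simpa [mul_comm] using this
  have h2 := (Real.hasDerivAt_sqrt (x := δ^2+(x-y)^2) (by positivity)).comp x h1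
  have hne : phf y δ x ≠ 0 := (phf_pos y δ hδ x).ne'
  refine (h2 : HasDerivAt (phf y δ) _ x).congr_deriv ?_
  rw [show Real.sqrt (δ^2+(x-y)^2) = phf y δ x from rfl]
  field_simp

lemma phl_sqrt_eq (y δ : ℝ) (hδ : 0 < δ) (x : ℝ) :
    Real.sqrt (1 + (x-y)^2/δ^2) = phf y δ x / δ := by
  have h : 1 + (x-y)^2/δ^2 = (δ^2 + (x-y)^2)/δ^2 := by field_simp
  rw [h, Real.sqrt_div (by positivity), Real.sqrt_sq hδ.le]
  rfl

lemma phl_eq (y δ c : ℝ) (hδ : 0 < δ) (hc : 0 < c) :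
    (fun x => δ ^ 2 / c * (Real.sqrt (1 + (x - y) ^ 2 / δ ^ 2) - 1)) =
      fun x => δ / c * phf y δ x - δ^2 / c := by
  funext x
  rw [phl_sqrt_eq y δ hδ x]
  field_simp [hδ.ne', hc.ne']

lemma phl_d1 (y δ c : ℝ) (hδ : 0 < δ) (x : ℝ) :
    HasDerivAt (fun x => δ / c * phf y δ x - δ^2 / c)
      (δ / c * ((x - y) / phf y δ x)) x :=
  (((phf_hasDerivAt y δ hδ x).const_mul (δ/c)).sub_const _)

lemma phl_d2 (y δ c : ℝ) (hδ : 0 < δ) (x : ℝ) :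
    HasDerivAt (fun x => δ / c * ((x - y) / phf y δ x))
      (δ^3 / c / (phf y δ x)^3) x := by
  have hne : phf y δ x ≠ 0 := (phf_pos y δ hδ x).ne'
  have h := (((hasDerivAt_id x).sub_const y).div (phf_hasDerivAt y δ hδ x) hne).const_mul (δ/c)
  have key : 1 * phf y δ x - (id x - y) * ((x - y) / phf y δ x) = δ^2 / phf y δ x := by
    simp only [id_eq]
    field_simp [hne]
    linear_combination phf_sq y δ x
  rw [key] at h
  refine h.congr_deriv ?_
  ring

lemma phl_d3 (y δ c : ℝ) (hδ : 0 < δ) (hc : 0 < c) (x : ℝ) :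
    HasDerivAt (fun x => δ^3 / c / (phf y δ x)^3)
      (-3 * δ^3 * (x - y) / (c * (phf y δ x)^5)) x := by
  have hne : phf y δ x ≠ 0 := (phf_pos y δ hδ x).ne'
  have hf3 : HasDerivAt (fun x => (phf y δ x)^3)
      (3 * (phf y δ x)^2 * ((x - y) / phf y δ x)) x := by
    simpa [mul_comm, mul_assoc] using (phf_hasDerivAt y δ hδ x).fun_pow 3
  have h := (hasDerivAt_const x (δ^3/c)).div hf3 (pow_ne_zero 3 hne)
  refine h.congr_deriv ?_
  field_simp [hne, hc.ne']
  ring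

lemma phl_iter1 (y δ c : ℝ) (hδ : 0 < δ) (hc : 0 < c) :
    iteratedDeriv 1 (fun x => δ ^ 2 / c * (Real.sqrt (1 + (x - y) ^ 2 / δ ^ 2) - 1)) =
      fun x => δ / c * ((x - y) / phf y δ x) := by
  rw [iteratedDeriv_one, phl_eq y δ c hδ hc]
  funext x
  exact (phl_d1 y δ c hδ x).deriv

lemma phl_iter2 (y δ c : ℝ) (hδ : 0 < δ) (hc : 0 < c) :
    iteratedDeriv 2 (fun x => δ ^ 2 / c * (Real.sqrt (1 + (x - y) ^ 2 / δ ^ 2) - 1)) =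
      fun x => δ^3 / c / (phf y δ x)^3 := by
  rw [show (2:ℕ) = 1 + 1 from rfl, iteratedDeriv_succ, phl_iter1 y δ c hδ hc]
  funext x
  exact (phl_d2 y δ c hδ x).deriv

lemma phl_iter3 (y δ c : ℝ) (hδ : 0 < δ) (hc : 0 < c) :
    iteratedDeriv 3 (fun x => δ ^ 2 / c * (Real.sqrt (1 + (x - y) ^ 2 / δ ^ 2) - 1)) =
      fun x => -3 * δ^3 * (x - y) / (c * (phf y δ x)^5) := by
  rw [show (3:ℕ) = 2 + 1 from rfl, iteratedDeriv_succ, phl_iter2 y δ c hδ hc]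
  funext x
  exact (phl_d3 y δ c hδ hc x).deriv

/-- Derivative bounds for the pseudo-Huber loss
`ℓ(x) = (δ²/c)(√(1 + (x−y)²/δ²) − 1)`: it is infinitely differentiable, and
`sup |ℓ'| = δ/c`, `sup |ℓ''| = 1/c`, `sup |ℓ'''| = 48√5/(125 c δ)`. -/
theorem pseudoHuber_deriv_bounds (y δ c : ℝ) (hδ : 0 < δ) (hc : 0 < c) :
    let ℓ : ℝ → ℝ := fun x => δ ^ 2 / c * (Real.sqrt (1 + (x - y) ^ 2 / δ ^ 2) - 1)
    ContDiff ℝ (⊤ : ℕ∞) ℓ ∧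
    (⨆ x : ℝ, |iteratedDeriv 1 ℓ x|) = δ / c ∧
    (⨆ x : ℝ, |iteratedDeriv 2 ℓ x|) = 1 / c ∧
    (⨆ x : ℝ, |iteratedDeriv 3 ℓ x|) = 48 * Real.sqrt 5 / (125 * c * δ) := by
  intro ℓ
  have hℓ : ℓ = fun x => δ ^ 2 / c * (Real.sqrt (1 + (x - y) ^ 2 / δ ^ 2) - 1) := rfl
  refine ⟨?_, ?_, ?_, ?_⟩
  · -- smoothness
    rw [hℓ, phl_eq y δ c hδ hc]
    have hf : ContDiff ℝ (⊤:ℕ∞) (phf y δ) := by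
      rw [contDiff_iff_contDiffAt]
      intro x
      have hg : ContDiffAt ℝ (⊤:ℕ∞) (fun x : ℝ => δ^2 + (x-y)^2) x := by fun_prop
      exact (Real.contDiffAt_sqrt (by positivity)).comp x hg
    exact (contDiff_const.mul hf).sub contDiff_const
  · -- first derivative sup
    rw [hℓ, phl_iter1 y δ c hδ hc]
    have hbound : ∀ x : ℝ, |δ/c * ((x-y)/phf y δ x)| ≤ δ/c := by
      intro x
      have hfp := phf_pos y δ hδ x
      rw [abs_mul, abs_of_pos (by positivity : (0:ℝ) < δ/c), abs_div, abs_of_pos hfp]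
      calc δ/c * (|x-y|/phf y δ x) ≤ δ/c * 1 := by
            apply mul_le_mul_of_nonneg_left _ (by positivity)
            rw [div_le_one hfp]
            exact phf_abs_le y δ x
        _ = δ/c := mul_one _
    have hbdd : BddAbove (Set.range fun x : ℝ => |δ/c*((x-y)/phf y δ x)|) :=
      ⟨δ/c, by rintro _ ⟨x, rfl⟩; exact hbound x⟩
    refine le_antisymm (Real.iSup_le hbound (by positivity)) ?_
    have htend : Tendsto (fun n : ℕ => δ/c * ((n:ℝ)/Real.sqrt (δ^2+(n:ℝ)^2))) atTop (nhds (δ/c)) := by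
      have hsq : Tendsto (fun n : ℕ => ((n:ℝ))^2) atTop atTop :=
        (tendsto_pow_atTop two_ne_zero).comp tendsto_natCast_atTop_atTop
      have h0 : Tendsto (fun n : ℕ => δ^2 + ((n:ℝ))^2) atTop atTop :=
        tendsto_atTop_add_const_left _ _ hsq
      have hdiv : Tendsto (fun n : ℕ => δ^2 / (δ^2 + ((n:ℝ))^2)) atTop (nhds 0) :=
        Tendsto.div_atTop tendsto_const_nhds h0
      have h1 : Tendsto (fun n : ℕ => Real.sqrt (1 - δ^2 / (δ^2 + ((n:ℝ))^2))) atTop (nhds 1) := by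
        have := (Real.continuous_sqrt.tendsto 1).comp
          (by simpa using tendsto_const_nhds.sub hdiv :
            Tendsto (fun n : ℕ => 1 - δ^2 / (δ^2 + ((n:ℝ))^2)) atTop (nhds 1))
        rwa [Real.sqrt_one] at this
      have hval : ∀ n : ℕ, (n:ℝ)/Real.sqrt (δ^2+(n:ℝ)^2)
          = Real.sqrt (1 - δ^2/(δ^2+(n:ℝ)^2)) := by
        intro n
        have hpos : (0:ℝ) < δ^2 + (n:ℝ)^2 := by positivity
        rw [show 1 - δ^2/(δ^2+(n:ℝ)^2) = (n:ℝ)^2/(δ^2+(n:ℝ)^2) by field_simp; ring,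
          Real.sqrt_div (by positivity), Real.sqrt_sq n.cast_nonneg]
      have := h1.const_mul (δ/c)
      simp only [mul_one] at this
      exact Tendsto.congr (fun n => by rw [hval n]) this
    have heq : ∀ n : ℕ, δ/c * ((n:ℝ)/Real.sqrt (δ^2+(n:ℝ)^2))
        = |δ/c * (((y + (n:ℝ)) - y)/phf y δ (y + (n:ℝ)))| := by
      intro n
      have h1 : (y + (n:ℝ)) - y = (n:ℝ) := by ring
      have hfp := phf_pos y δ hδ (y + (n:ℝ))
      have h2 : (0:ℝ) ≤ δ/c * (((y + (n:ℝ)) - y)/phf y δ (y + (n:ℝ))) := by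
        apply mul_nonneg (by positivity)
        apply div_nonneg _ hfp.le
        rw [h1]; positivity
      rw [abs_of_nonneg h2, phf, h1]
    refine le_of_tendsto htend (Eventually.of_forall fun n => ?_)
    rw [heq n]
    exact le_ciSup hbdd (y + (n:ℝ))
  · -- second derivative sup
    rw [hℓ, phl_iter2 y δ c hδ hc]
    have hbound : ∀ x : ℝ, |δ^3/c/(phf y δ x)^3| ≤ 1/c := by
      intro x
      have hfp := phf_pos y δ hδ x
      have hge := phf_ge y δ hδ x
      rw [abs_of_nonneg (by positivity)]
      rw [div_div, div_le_div_iff₀ (mul_pos hc (pow_pos hfp 3)) hc]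
      nlinarith [pow_le_pow_left₀ hδ.le hge 3]
    have hbdd : BddAbove (Set.range fun x : ℝ => |δ^3/c/(phf y δ x)^3|) :=
      ⟨1/c, by rintro _ ⟨x, rfl⟩; exact hbound x⟩
    refine le_antisymm (Real.iSup_le hbound (by positivity)) ?_
    have hval : |δ^3/c/(phf y δ y)^3| = 1/c := by
      have hy : phf y δ y = δ := by
        rw [phf]
        simp [Real.sqrt_sq hδ.le]
      rw [hy, abs_of_nonneg (by positivity)]
      field_simp
    calc (1:ℝ)/c = |δ^3/c/(phf y δ y)^3| := hval.symm
      _ ≤ _ := le_ciSup hbdd y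
  · -- third derivative sup
    rw [hℓ, phl_iter3 y δ c hδ hc]
    have h5 : Real.sqrt 5 ^ 2 = 5 := Real.sq_sqrt (by norm_num)
    have h5p : (0:ℝ) < Real.sqrt 5 := Real.sqrt_pos.2 (by norm_num)
    have hbound : ∀ x : ℝ, |(-3) * δ^3 * (x-y) / (c * (phf y δ x)^5)| ≤ 48 * Real.sqrt 5 / (125 * c * δ) := by
      intro x
      have hfp := phf_pos y δ hδ x
      have key : 375 * δ^4 * |x - y| ≤ 48 * Real.sqrt 5 * (phf y δ x)^5 := by
        have h1 : (0:ℝ) ≤ 375 * δ^4 * |x - y| := by positivity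
        have h2 : (0:ℝ) ≤ 48 * Real.sqrt 5 * (phf y δ x)^5 := by positivity
        have hsq : (375 * δ^4 * |x - y|)^2 ≤ (48 * Real.sqrt 5 * (phf y δ x)^5)^2 := by
          have hfs : ((phf y δ x)^5)^2 = (δ^2 + (x-y)^2)^5 := by
            rw [← pow_mul, show 5*2 = 2*5 from rfl, pow_mul, phf_sq]
          have habs : |x-y|^2 = (x-y)^2 := sq_abs _
          have hpoly : 140625*δ^8*(x-y)^2 ≤ 11520*(δ^2+(x-y)^2)^5 := by
            nlinarith [mul_nonneg (sq_nonneg (4*(x-y)^2-δ^2)) (pow_nonneg (sq_nonneg (x-y)) 3),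
              mul_nonneg (mul_nonneg (sq_nonneg (4*(x-y)^2-δ^2)) (sq_nonneg δ)) (pow_nonneg (sq_nonneg (x-y)) 2),
              mul_nonneg (mul_nonneg (sq_nonneg (4*(x-y)^2-δ^2)) (pow_nonneg (sq_nonneg δ) 2)) (sq_nonneg (x-y)),
              mul_nonneg (sq_nonneg (4*(x-y)^2-δ^2)) (pow_nonneg (sq_nonneg δ) 3)]
          calc (375 * δ^4 * |x - y|)^2 = 140625*δ^8*(x-y)^2 := by rw [mul_pow, mul_pow, habs]; ring
            _ ≤ 11520*(δ^2+(x-y)^2)^5 := hpoly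
            _ = (48 * Real.sqrt 5 * (phf y δ x)^5)^2 := by
                rw [mul_pow, mul_pow, hfs, h5]; ring
        have := Real.sqrt_le_sqrt hsq
        rwa [Real.sqrt_sq h1, Real.sqrt_sq h2] at this
      have habs : |(-3) * δ^3 * (x-y) / (c * (phf y δ x)^5)|
          = 3 * δ^3 * |x-y| / (c * (phf y δ x)^5) := by
        rw [abs_div, abs_of_pos (by positivity : (0:ℝ) < c * (phf y δ x)^5),
          abs_mul, abs_mul]
        congr 2
        · rw [abs_of_nonpos (by norm_num : (-3:ℝ) ≤ 0), abs_of_nonneg (by positivity : (0:ℝ) ≤ δ^3)]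
          norm_num
      rw [habs, div_le_div_iff₀ (by positivity) (by positivity)]
      nlinarith [mul_le_mul_of_nonneg_left key hc.le]
    have hbdd : BddAbove (Set.range fun x : ℝ => |(-3) * δ^3 * (x-y) / (c * (phf y δ x)^5)|) :=
      ⟨_, by rintro _ ⟨x, rfl⟩; exact hbound x⟩
    refine le_antisymm (Real.iSup_le hbound (by positivity)) ?_
    have hfval : phf y δ (y + δ/2) = δ * Real.sqrt 5 / 2 := by
      rw [phf, show δ^2 + (y + δ/2 - y)^2 = (δ * Real.sqrt 5 / 2)^2 by
        linear_combination (-(δ^2)/4) * h5]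
      exact Real.sqrt_sq (by positivity)
    have hval : |(-3) * δ^3 * ((y + δ/2)-y) / (c * (phf y δ (y + δ/2))^5)|
        = 48 * Real.sqrt 5 / (125 * c * δ) := by
      have hneg : (-3) * δ^3 * (δ/2) / (c * (δ * Real.sqrt 5 / 2)^5) ≤ 0 := by
        apply div_nonpos_of_nonpos_of_nonneg
        · nlinarith [pow_pos hδ 4]
        · positivity
      rw [hfval, show (y + δ/2) - y = δ/2 by ring, abs_of_nonpos hneg,
        show -((-3) * δ^3 * (δ/2) / (c * (δ * Real.sqrt 5 / 2)^5))
          = 3*δ^3*(δ/2)/(c*(δ*Real.sqrt 5/2)^5) by ring]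
      field_simp
      linear_combination (-48*(Real.sqrt 5^4 + 5*Real.sqrt 5^2 + 25)) * h5
    calc 48 * Real.sqrt 5 / (125 * c * δ) = _ := hval.symm
      _ ≤ _ := le_ciSup hbdd (y + δ/2)
end

section
/- Fix y ∈ {0,1} and c > 0, and define the MultiLabel Soft Margin loss ℓ(x) = −(1/c)·( y·log(1/(1+e^{−x})) + (1−y)·log(e^{−x}/(1+e^{−x})) ) for x ∈ ℝ. Then ℓ is infinitely differentiable and: (i) sup_{x∈ℝ} |ℓ'(x)| = 1/c; (ii) sup_{x∈ℝ} |ℓ''(x)| = 1/(4c); (iii) sup_{x∈ℝ} |ℓ'''(x)| = 1/(6√3·c). -/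
open Real Filter

noncomputable def sg (x : ℝ) : ℝ := (1 + Real.exp (-x))⁻¹

lemma sg_pos (x : ℝ) : 0 < sg x := by
  have := Real.exp_pos (-x); unfold sg; positivity

lemma one_add_pos (x : ℝ) : 0 < 1 + Real.exp (-x) := by positivity

lemma sg_lt_one (x : ℝ) : sg x < 1 := by
  have h := Real.exp_pos (-x)
  rw [sg, inv_lt_one_iff₀]
  right; linarith

lemma hasDerivAt_sg (x : ℝ) : HasDerivAt sg (sg x * (1 - sg x)) x := by
  have hE : HasDerivAt (fun x : ℝ => Real.exp (-x)) (Real.exp (-x) * (-1)) x :=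
    (hasDerivAt_neg' x).exp
  have h1 : HasDerivAt (fun x : ℝ => 1 + Real.exp (-x)) (Real.exp (-x) * (-1)) x :=
    hE.const_add 1
  have := h1.inv (ne_of_gt (one_add_pos x))
  refine this.congr_deriv ?_
  have hp := one_add_pos x
  unfold sg
  field_simp
  ring

lemma sg_zero : sg 0 = 1/2 := by simp [sg]; norm_num

lemma sg_tendsto_atTop : Tendsto sg atTop (nhds 1) := by
  have h : Tendsto (fun x : ℝ => 1 + Real.exp (-x)) atTop (nhds 1) := by
    simpa using tendsto_const_nhds.add Real.tendsto_exp_neg_atTop_nhds_zero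
  exact (by simpa using h.inv₀ one_ne_zero : Tendsto (fun x : ℝ => (1 + Real.exp (-x))⁻¹) atTop (nhds 1))

lemma sg_tendsto_atBot : Tendsto sg atBot (nhds 0) := by
  have h : Tendsto (fun x : ℝ => 1 + Real.exp (-x)) atBot atTop :=
    tendsto_atTop_add_const_left _ 1 (Real.tendsto_exp_atTop.comp tendsto_neg_atBot_atTop)
  exact tendsto_inv_atTop_zero.comp h

/-- Derivative bounds for the MultiLabel Soft Margin loss
`ℓ(x) = −(1/c)(y log(1/(1+e^{−x})) + (1−y) log(e^{−x}/(1+e^{−x})))` with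
`y ∈ {0,1}`: it is infinitely differentiable, and `sup |ℓ'| = 1/c`,
`sup |ℓ''| = 1/(4c)`, `sup |ℓ'''| = 1/(6√3 c)`. -/
theorem multiLabelSoftMargin_deriv_bounds (y c : ℝ) (hy : y = 0 ∨ y = 1)
    (hc : 0 < c) :
    let ℓ : ℝ → ℝ := fun x => -(1 / c) *
      (y * Real.log (1 / (1 + Real.exp (-x)))
        + (1 - y) * Real.log (Real.exp (-x) / (1 + Real.exp (-x))))
    ContDiff ℝ (⊤ : ℕ∞) ℓ ∧
    (⨆ x : ℝ, |iteratedDeriv 1 ℓ x|) = 1 / c ∧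
    (⨆ x : ℝ, |iteratedDeriv 2 ℓ x|) = 1 / (4 * c) ∧
    (⨆ x : ℝ, |iteratedDeriv 3 ℓ x|) = 1 / (6 * Real.sqrt 3 * c) := by
  intro ℓ
  have hcc : (0:ℝ) < 1 / c := one_div_pos.mpr hc
  have hℓ : ℓ = fun x => (1 / c) * (Real.log (1 + Real.exp (-x)) + (1 - y) * x) := by
    funext x
    have hp := one_add_pos x
    have hE := Real.exp_pos (-x)
    show -(1 / c) * _ = _
    rw [Real.log_div (ne_of_gt hE) (ne_of_gt hp), one_div (1 + Real.exp (-x)),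
      Real.log_inv, Real.log_exp]
    ring
  set f1 : ℝ → ℝ := fun x => (1 / c) * (sg x - y) with hf1
  set f2 : ℝ → ℝ := fun x => (1 / c) * (sg x * (1 - sg x)) with hf2
  set f3 : ℝ → ℝ := fun x => (1 / c) * (sg x * (1 - sg x) * (1 - 2 * sg x)) with hf3
  have hd1 : deriv ℓ = f1 := by
    funext x
    have hp := one_add_pos x
    have hE : HasDerivAt (fun x : ℝ => Real.exp (-x)) (Real.exp (-x) * (-1)) x :=
      (hasDerivAt_neg' x).exp
    have h1 : HasDerivAt (fun x : ℝ => 1 + Real.exp (-x)) (Real.exp (-x) * (-1)) x :=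
      hE.const_add 1
    have hL := h1.log (ne_of_gt hp)
    have hlin : HasDerivAt (fun x : ℝ => (1 - y) * x) (1 - y) x := by
      simpa using (hasDerivAt_id x).const_mul (1 - y)
    have := ((hL.add hlin).const_mul (1 / c))
    rw [hℓ, HasDerivAt.deriv (f := fun x => 1 / c * (Real.log (1 + Real.exp (-x)) + (1 - y) * x)) this]
    show _ = (1 / c) * (sg x - y)
    unfold sg
    field_simp
    ring
  have hd2 : deriv f1 = f2 := by
    funext x
    have h := ((hasDerivAt_sg x).sub_const y).const_mul (1 / c)
    rw [hf1, h.deriv]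
  have hd3 : deriv f2 = f3 := by
    funext x
    have h := ((hasDerivAt_sg x).mul ((hasDerivAt_sg x).const_sub 1)).const_mul (1 / c)
    rw [hf2, HasDerivAt.deriv (f := fun x => 1 / c * (sg x * (1 - sg x))) h]
    show _ = (1 / c) * (sg x * (1 - sg x) * (1 - 2 * sg x))
    ring
  have hsqrt3 : Real.sqrt 3 ^ 2 = 3 := Real.sq_sqrt (by norm_num)
  have hsqrt3pos : 0 < Real.sqrt 3 := Real.sqrt_pos.mpr (by norm_num)
  refine ⟨?_, ?_, ?_, ?_⟩
  · -- smoothness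
    rw [hℓ]
    apply ContDiff.mul contDiff_const
    apply ContDiff.add
    · exact (contDiff_const.add (Real.contDiff_exp.comp contDiff_neg)).log
        fun x => ne_of_gt (one_add_pos x)
    · exact contDiff_const.mul contDiff_id
  · -- first derivative sup
    rw [iteratedDeriv_one, hd1]
    apply ciSup_eq_of_forall_le_of_forall_lt_exists_gt
    · intro x
      have h1 := sg_pos x
      have h2 := sg_lt_one x
      have hp1 := mul_pos hcc h1
      have hp2 := mul_pos hcc (show (0:ℝ) < 1 - sg x by linarith)
      refine abs_le.mpr ⟨?_, ?_⟩
      · show -(1/c) ≤ 1/c * (sg x - y)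
        rcases hy with h | h <;> subst h <;> nlinarith
      · show 1/c * (sg x - y) ≤ 1/c
        rcases hy with h | h <;> subst h <;> nlinarith
    · intro w hw
      rcases hy with h | h
      · subst h
        have ht : Tendsto (fun x => (1 / c) * sg x) atTop (nhds (1 / c)) := by
          simpa using sg_tendsto_atTop.const_mul (1/c)
        obtain ⟨x, hx⟩ := (ht.eventually (eventually_gt_nhds hw)).exists
        refine ⟨x, ?_⟩
        have he : f1 x = 1/c * sg x := by show 1/c * (sg x - 0) = _; ring
        calc w < 1/c * sg x := hx
          _ = f1 x := he.symm
          _ ≤ |f1 x| := le_abs_self _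
      · subst h
        have ht : Tendsto (fun x => (1 / c) * (1 - sg x)) atBot (nhds (1 / c)) := by
          simpa using ((tendsto_const_nhds : Tendsto (fun _ : ℝ => (1:ℝ)) atBot (nhds 1)).sub
            sg_tendsto_atBot).const_mul (1/c)
        obtain ⟨x, hx⟩ := (ht.eventually (eventually_gt_nhds hw)).exists
        refine ⟨x, ?_⟩
        have h2 := sg_lt_one x
        have he : |f1 x| = 1/c * (1 - sg x) := by
          show |1/c * (sg x - 1)| = _
          rw [abs_of_nonpos (by nlinarith [mul_pos hcc (show (0:ℝ) < 1 - sg x by linarith)])]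
          ring
        rw [he]; exact hx
  · -- second derivative sup
    rw [iteratedDeriv_succ, iteratedDeriv_one, hd1, hd2]
    apply ciSup_eq_of_forall_le_of_forall_lt_exists_gt
    · intro x
      have h1 := sg_pos x
      have h2 := sg_lt_one x
      show |1/c * (sg x * (1 - sg x))| ≤ 1/(4*c)
      rw [abs_of_nonneg (le_of_lt (mul_pos hcc (mul_pos h1 (by linarith))))]
      have hu : sg x * (1 - sg x) ≤ 1/4 := by nlinarith [sq_nonneg (sg x - 1/2)]
      calc 1/c * (sg x * (1 - sg x)) ≤ 1/c * (1/4) :=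
            mul_le_mul_of_nonneg_left hu (le_of_lt hcc)
        _ = 1/(4*c) := by ring
    · intro w hw
      refine ⟨0, ?_⟩
      have hval : f2 0 = 1 / (4 * c) := by
        show 1/c * (sg 0 * (1 - sg 0)) = _
        rw [sg_zero]; ring
      rw [hval]
      exact lt_of_lt_of_le hw (le_abs_self _)
  · -- third derivative sup
    rw [iteratedDeriv_succ, iteratedDeriv_succ, iteratedDeriv_one, hd1, hd2, hd3]
    apply ciSup_eq_of_forall_le_of_forall_lt_exists_gt
    · intro x
      have h1 := sg_pos x
      have h2 := sg_lt_one x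
      show |1/c * (sg x * (1 - sg x) * (1 - 2 * sg x))| ≤ 1/(6 * Real.sqrt 3 * c)
      rw [abs_mul, abs_of_pos hcc]
      have hg : |sg x * (1 - sg x) * (1 - 2 * sg x)| ≤ 1 / (6 * Real.sqrt 3) := by
        have hsq : (sg x * (1 - sg x) * (1 - 2 * sg x))^2 ≤ 1/108 := by
          nlinarith [sq_nonneg (sg x * (1 - sg x) - 1/6),
            mul_pos h1 (show (0:ℝ) < 1 - sg x by linarith)]
        calc |sg x * (1 - sg x) * (1 - 2 * sg x)|
            = Real.sqrt ((sg x * (1 - sg x) * (1 - 2 * sg x))^2) :=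
              (Real.sqrt_sq_eq_abs _).symm
          _ ≤ Real.sqrt (1/108) := Real.sqrt_le_sqrt hsq
          _ = 1/(6 * Real.sqrt 3) := by
              rw [show (1:ℝ)/108 = (1/(6 * Real.sqrt 3))^2 by
                rw [div_pow, one_pow, mul_pow, hsqrt3]; norm_num]
              exact Real.sqrt_sq (by positivity)
      calc 1/c * |sg x * (1 - sg x) * (1 - 2 * sg x)| ≤ 1/c * (1/(6 * Real.sqrt 3)) :=
            mul_le_mul_of_nonneg_left hg (le_of_lt hcc)
        _ = 1/(6 * Real.sqrt 3 * c) := by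
            rw [div_mul_div_comm, one_mul, mul_comm c _]
    · intro w hw
      have hden : (0:ℝ) < 3 - Real.sqrt 3 := by nlinarith
      set x₀ : ℝ := -Real.log ((3 + Real.sqrt 3) / (3 - Real.sqrt 3)) with hx₀
      have hexp : Real.exp (-x₀) = (3 + Real.sqrt 3) / (3 - Real.sqrt 3) := by
        rw [hx₀, neg_neg, Real.exp_log (by positivity)]
      have hsg : sg x₀ = (3 - Real.sqrt 3) / 6 := by
        rw [sg, hexp, show 1 + (3 + Real.sqrt 3) / (3 - Real.sqrt 3) = 6 / (3 - Real.sqrt 3) by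
          field_simp; ring, inv_div]
      refine ⟨x₀, ?_⟩
      have e1 : sg x₀ * (1 - sg x₀) = 1/6 := by
        rw [hsg]; field_simp; linear_combination -hsqrt3
      have e2 : 1 - 2 * sg x₀ = Real.sqrt 3 / 3 := by
        rw [hsg]; field_simp; ring
      have hval : f3 x₀ = 1 / (6 * Real.sqrt 3 * c) := by
        show 1/c * (sg x₀ * (1 - sg x₀) * (1 - 2 * sg x₀)) = _
        rw [e1, e2]
        rw [eq_div_iff (by positivity)]
        field_simp
        linear_combination hsqrt3
      rw [hval]
      exact lt_of_lt_of_le hw (le_abs_self _)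
end
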